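/- arXiv:2304.00786 — 10 statements merged into one kernel-verified Lean document; each statement's English description precedes it below -/
import Mathlib

section
/- Let (G, ω, μ) be a connected, locally finite weighted graph, let d be a pseudo metric on G such that every ball B_r(x) is a finite set, and let V : G → ℝ with V ≥ 0 on G. Assume there exists a nontrivial bounded function u : G → ℝ with Δu(x) − V(x)u(x) = 0 for all x ∈ G. Then there exists a function v : G → ℝ with Δv(x) − V(x)v(x) = 0 for all x ∈ G and 0 < v(x) ≤ 1 for all x ∈ G. -/
/-- **Proposition 3.1.** If the equation `Δu − Vu = 0` admits a nontrivial bounded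
solution on the graph, then it admits a solution `v` with `0 < v ≤ 1` on `G`. -/
theorem stmt1 {G : Type*} [Countable G] [Infinite G]
    (μ : G → ℝ) (ω : G → G → ℝ) (d : G → G → ℝ)
    (hμ : ∀ x, 0 < μ x)
    (hω_symm : ∀ x y, ω x y = ω y x)
    (hω_diag : ∀ x, ω x x = 0)
    (hω_nonneg : ∀ x y, 0 ≤ ω x y)
    (hω_sum : ∀ x, Summable fun y => ω x y)
    (hloc : ∀ x : G, {y : G | 0 < ω x y}.Finite)
    (hconn : ∀ x y : G, x ≠ y → ∃ (n : ℕ) (p : ℕ → G),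
      p 0 = x ∧ p n = y ∧ ∀ i < n, 0 < ω (p i) (p (i + 1)))
    (hd_symm : ∀ x y, d x y = d y x)
    (hd_diag : ∀ x, d x x = 0)
    (hd_nonneg : ∀ x y, 0 ≤ d x y)
    (hd_tri : ∀ x y z, d x y ≤ d x z + d z y)
    (hballs : ∀ (x : G) (r : ℝ), {y : G | d y x < r}.Finite)
    (V : G → ℝ) (hV₀ : ∀ x, 0 ≤ V x)
    (u : G → ℝ) (hu_nontriv : ∃ x, u x ≠ 0) (hu_bdd : ∃ C : ℝ, ∀ x, |u x| ≤ C)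
    (hu_eq : ∀ x : G, (μ x)⁻¹ * (∑' y, ω x y * (u y - u x)) - V x * u x = 0) :
    ∃ v : G → ℝ,
      (∀ x : G, (μ x)⁻¹ * (∑' y, ω x y * (v y - v x)) - V x * v x = 0) ∧
      (∀ x : G, 0 < v x ∧ v x ≤ 1) := by
  classical
  obtain ⟨x₀, hx₀⟩ := hu_nontriv
  obtain ⟨C, hC⟩ := hu_bdd
  have hC0 : (0:ℝ) < C := lt_of_lt_of_le (abs_pos.2 hx₀) (hC x₀)
  set N : G → Finset G := fun x => (hloc x).toFinset with hNdef
  have hmemN : ∀ x y, y ∈ N x ↔ 0 < ω x y := fun x y => (hloc x).mem_toFinset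
  have hxN : ∀ x, x ∉ N x := by
    intro x h
    have := (hmemN x x).1 h
    rw [hω_diag x] at this
    exact lt_irrefl 0 this
  have hμ' : ∀ x, μ x ≠ 0 := fun x => (hμ x).ne'
  have htsum : ∀ (x : G) (f : G → ℝ),
      (∑' y, ω x y * (f y - f x)) = ∑ y ∈ N x, ω x y * (f y - f x) := by
    intro x f
    refine tsum_eq_sum ?_
    intro y hy
    have h0 : ω x y = 0 := by
      rcases (hω_nonneg x y).eq_or_lt with h | h
      · exact h.symm
      · exact absurd ((hmemN x y).2 h) hy
    simp [h0]
  set deg : G → ℝ := fun x => ∑ y ∈ N x, ω x y with hdegdef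
  have hdeg_pos : ∀ x, 0 < deg x := by
    intro x
    obtain ⟨y, hy⟩ := exists_ne x
    obtain ⟨n, p, hp0, hpn, hp⟩ := hconn x y (Ne.symm hy)
    have hn : 0 < n := by
      rcases Nat.eq_zero_or_pos n with h | h
      · exfalso; rw [h, hp0] at hpn; exact hy hpn.symm
      · exact h
    have h1 : 0 < ω x (p 1) := by
      have := hp 0 hn
      rwa [hp0] at this
    exact Finset.sum_pos' (fun z _ => hω_nonneg x z) ⟨p 1, (hmemN x _).2 h1, h1⟩
  -- finite-sum form of the equation for u
  have hu' : ∀ x, ∑ y ∈ N x, ω x y * (u y - u x) = μ x * (V x * u x) := by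
    intro x
    have h := hu_eq x
    rw [htsum x u] at h
    have h2 : (μ x)⁻¹ * (∑ y ∈ N x, ω x y * (u y - u x)) = V x * u x := by linarith
    have h3 : μ x * ((μ x)⁻¹ * (∑ y ∈ N x, ω x y * (u y - u x))) = μ x * (V x * u x) := by
      rw [h2]
    rwa [← mul_assoc, mul_inv_cancel₀ (hμ' x), one_mul] at h3
  -- the normalized subsolution g = |u|/C
  set g : G → ℝ := fun x => |u x| / C with hgdef
  have hg0 : ∀ x, 0 ≤ g x := fun x => div_nonneg (abs_nonneg _) hC0.le
  have hg1 : ∀ x, g x ≤ 1 := fun x => (div_le_one hC0).2 (hC x)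
  have hgx₀ : 0 < g x₀ := div_pos (abs_pos.2 hx₀) hC0
  have hg_sub : ∀ x, μ x * (V x * g x) ≤ ∑ y ∈ N x, ω x y * (g y - g x) := by
    intro x
    have habs : μ x * (V x * |u x|) ≤ ∑ y ∈ N x, ω x y * (|u y| - |u x|) := by
      rcases le_or_gt 0 (u x) with h | h
      · calc μ x * (V x * |u x|) = μ x * (V x * u x) := by rw [abs_of_nonneg h]
          _ = ∑ y ∈ N x, ω x y * (u y - u x) := (hu' x).symm
          _ ≤ ∑ y ∈ N x, ω x y * (|u y| - |u x|) := by
              refine Finset.sum_le_sum fun y _ => ?_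
              have h1 := le_abs_self (u y)
              have h2 : |u x| = u x := abs_of_nonneg h
              nlinarith [hω_nonneg x y]
      · have hs : ∑ y ∈ N x, ω x y * (u x - u y) ≤ ∑ y ∈ N x, ω x y * (|u y| - |u x|) := by
          refine Finset.sum_le_sum fun y _ => ?_
          have h1 := neg_abs_le (u y)
          have h2 : |u x| = -u x := abs_of_neg h
          nlinarith [hω_nonneg x y]
        have hs2 : ∑ y ∈ N x, ω x y * (u x - u y) = - ∑ y ∈ N x, ω x y * (u y - u x) := by
          rw [← Finset.sum_neg_distrib]
          exact Finset.sum_congr rfl fun y _ => by ring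
        have h3 : |u x| = -u x := abs_of_neg h
        rw [hs2, hu' x] at hs
        have h4 : μ x * (V x * |u x|) = -(μ x * (V x * u x)) := by rw [h3]; ring
        linarith [hs]
    have hsum : ∑ y ∈ N x, ω x y * (g y - g x)
        = (∑ y ∈ N x, ω x y * (|u y| - |u x|)) / C := by
      rw [Finset.sum_div]
      refine Finset.sum_congr rfl fun y _ => ?_
      simp only [hgdef]
      field_simp
    rw [hsum, le_div_iff₀ hC0]
    have hgx : g x = |u x| / C := rfl
    calc μ x * (V x * g x) * C = μ x * (V x * (|u x| / C * C)) := by ring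
      _ = μ x * (V x * |u x|) := by rw [div_mul_cancel₀ _ hC0.ne']
      _ ≤ ∑ y ∈ N x, ω x y * (|u y| - |u x|) := habs
  -- the Perron family
  set F : Set (G → ℝ) := {w | (∀ y, g y ≤ w y ∧ w y ≤ 1) ∧
      ∀ x, ∑ y ∈ N x, ω x y * (w y - w x) ≤ μ x * (V x * w x)} with hFdef
  have h1F : (fun _ => (1:ℝ)) ∈ F := by
    refine ⟨fun y => ⟨hg1 y, le_refl 1⟩, ?_⟩
    intro x
    have : ∑ y ∈ N x, ω x y * ((1:ℝ) - 1) = 0 := by simp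
    rw [this]
    have := mul_nonneg (hμ x).le (mul_nonneg (hV₀ x) (zero_le_one))
    simpa using this
  set v : G → ℝ := fun x => sInf ((fun w => w x) '' F) with hvdef
  have hFne : ∀ x, ((fun w : G → ℝ => w x) '' F).Nonempty :=
    fun x => ⟨1, Set.mem_image_of_mem _ h1F⟩
  have hFbdd : ∀ x, ∀ a ∈ (fun w : G → ℝ => w x) '' F, g x ≤ a := by
    rintro x a ⟨w, hw, rfl⟩
    exact (hw.1 x).1
  have hvle : ∀ w ∈ F, ∀ x, v x ≤ w x := fun w hw x =>
    csInf_le ⟨g x, hFbdd x⟩ ⟨w, hw, rfl⟩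
  have hgv : ∀ x, g x ≤ v x := fun x => le_csInf (hFne x) (hFbdd x)
  have hv1 : ∀ x, v x ≤ 1 := fun x => hvle _ h1F x
  have happrox : ∀ x : G, ∀ ε > (0:ℝ), ∃ w ∈ F, w x < v x + ε := by
    intro x ε hε
    obtain ⟨a, ⟨w, hw, rfl⟩, ha⟩ :=
      exists_lt_of_csInf_lt (hFne x) (lt_add_of_pos_right (v x) hε)
    exact ⟨w, hw, ha⟩
  -- min-stability of F
  have hmin : ∀ w₁ ∈ F, ∀ w₂ ∈ F, (fun y => min (w₁ y) (w₂ y)) ∈ F := by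
    intro w₁ hw₁ w₂ hw₂
    refine ⟨fun y => ⟨le_min (hw₁.1 y).1 (hw₂.1 y).1,
      min_le_of_left_le (hw₁.1 y).2⟩, ?_⟩
    intro x
    have main : ∀ w : G → ℝ,
        (∀ x', ∑ y ∈ N x', ω x' y * (w y - w x') ≤ μ x' * (V x' * w x')) →
        min (w₁ x) (w₂ x) = w x → (∀ y, min (w₁ y) (w₂ y) ≤ w y) →
        ∑ y ∈ N x, ω x y * (min (w₁ y) (w₂ y) - min (w₁ x) (w₂ x))
          ≤ μ x * (V x * min (w₁ x) (w₂ x)) := by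
      intro w hs hx hle
      rw [hx]
      calc ∑ y ∈ N x, ω x y * (min (w₁ y) (w₂ y) - w x)
          ≤ ∑ y ∈ N x, ω x y * (w y - w x) :=
            Finset.sum_le_sum fun y _ =>
              mul_le_mul_of_nonneg_left (by linarith [hle y]) (hω_nonneg x y)
        _ ≤ μ x * (V x * w x) := hs x
    rcases le_total (w₁ x) (w₂ x) with h | h
    · exact main w₁ hw₁.2 (min_eq_left h) (fun y => min_le_left _ _)
    · exact main w₂ hw₂.2 (min_eq_right h) (fun y => min_le_right _ _)
  -- finite simultaneous approximation
  have happroxF : ∀ ε > (0:ℝ), ∀ s : Finset G, ∃ w ∈ F, ∀ y ∈ s, w y < v y + ε := by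
    intro ε hε s
    induction s using Finset.induction_on with
    | empty => exact ⟨_, h1F, by simp⟩
    | @insert a s ha ih =>
      obtain ⟨w, hw, hws⟩ := ih
      obtain ⟨w', hw', hwa⟩ := happrox a ε hε
      refine ⟨_, hmin w' hw' w hw, ?_⟩
      intro y hy
      rcases Finset.mem_insert.mp hy with rfl | hy
      · exact lt_of_le_of_lt (min_le_left _ _) hwa
      · exact lt_of_le_of_lt (min_le_right _ _) (hws y hy)
  -- v is a supersolution
  have hv_super : ∀ x, ∑ y ∈ N x, ω x y * (v y - v x) ≤ μ x * (V x * v x) := by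
    intro x
    refine le_of_forall_pos_le_add ?_
    intro ε hε
    have hμV : (0:ℝ) ≤ μ x * V x := mul_nonneg (hμ x).le (hV₀ x)
    set K : ℝ := deg x + μ x * V x + 1 with hKdef
    have hK0 : 0 < K := by nlinarith [hdeg_pos x]
    have hεK : 0 < ε / K := div_pos hε hK0
    obtain ⟨w, hwF, hws⟩ := happroxF (ε / K) hεK (insert x (N x))
    have hwx : w x < v x + ε / K := hws x (Finset.mem_insert_self _ _)
    have hwge : ∀ y, v y ≤ w y := fun y => hvle w hwF y
    have hstep1 : ∑ y ∈ N x, ω x y * (v y - v x) ≤ ∑ y ∈ N x, ω x y * (w y - v x) :=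
      Finset.sum_le_sum fun y _ =>
        mul_le_mul_of_nonneg_left (by linarith [hwge y]) (hω_nonneg x y)
    have hstep2 : ∑ y ∈ N x, ω x y * (w y - v x)
        = ∑ y ∈ N x, ω x y * (w y - w x) + deg x * (w x - v x) := by
      simp only [hdegdef, Finset.sum_mul, ← Finset.sum_add_distrib]
      exact Finset.sum_congr rfl fun y _ => by ring
    have hstep3 := hwF.2 x
    have h4 : deg x * (w x - v x) ≤ deg x * (ε / K) :=
      mul_le_mul_of_nonneg_left (by linarith) (hdeg_pos x).le
    have h5 : μ x * V x * w x ≤ μ x * V x * (v x + ε / K) :=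
      mul_le_mul_of_nonneg_left hwx.le hμV
    have h6 : (μ x * V x + deg x) * (ε / K) ≤ K * (ε / K) :=
      mul_le_mul_of_nonneg_right (by linarith) hεK.le
    have h7 : K * (ε / K) = ε := by field_simp
    nlinarith [hstep1, hstep2, hstep3]
  -- v is a solution
  have hv_eq : ∀ x, ∑ y ∈ N x, ω x y * (v y - v x) = μ x * (V x * v x) := by
    intro x
    by_contra hne
    have hlt : ∑ y ∈ N x, ω x y * (v y - v x) < μ x * (V x * v x) :=
      lt_of_le_of_ne (hv_super x) hne
    have hμV : (0:ℝ) ≤ μ x * V x := mul_nonneg (hμ x).le (hV₀ x)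
    set D : ℝ := deg x + μ x * V x with hDdef
    have hD0 : 0 < D := by nlinarith [hdeg_pos x]
    set t : ℝ := (∑ y ∈ N x, ω x y * v y) / D with htdef
    have hsplitv : ∑ y ∈ N x, ω x y * (v y - v x)
        = (∑ y ∈ N x, ω x y * v y) - deg x * v x := by
      simp only [hdegdef, Finset.sum_mul, ← Finset.sum_sub_distrib]
      exact Finset.sum_congr rfl fun y _ => by ring
    have htD : t * D = ∑ y ∈ N x, ω x y * v y := by
      rw [htdef, div_mul_cancel₀ _ hD0.ne']
    have htlt : t < v x := by
      rw [htdef, div_lt_iff₀ hD0]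
      have hDv : v x * D = v x * deg x + v x * (μ x * V x) := by rw [hDdef]; ring
      linarith [hlt, hsplitv]
    have htge : g x ≤ t := by
      rw [htdef, le_div_iff₀ hD0]
      have h1 := hg_sub x
      have h2 : ∑ y ∈ N x, ω x y * (g y - g x)
          = (∑ y ∈ N x, ω x y * g y) - deg x * g x := by
        simp only [hdegdef, Finset.sum_mul, ← Finset.sum_sub_distrib]
        exact Finset.sum_congr rfl fun y _ => by ring
      have h3 : ∑ y ∈ N x, ω x y * g y ≤ ∑ y ∈ N x, ω x y * v y :=
        Finset.sum_le_sum fun y _ => mul_le_mul_of_nonneg_left (hgv y) (hω_nonneg x y)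
      have hDg : g x * D = g x * deg x + g x * (μ x * V x) := by rw [hDdef]; ring
      linarith [h1, h2, h3]
    set w : G → ℝ := Function.update v x t with hwdef
    have hwy : ∀ y, y ≠ x → w y = v y := fun y hy => Function.update_of_ne hy _ _
    have hwx : w x = t := Function.update_self _ _ _
    have hwle : ∀ y, w y ≤ v y := by
      intro y
      by_cases hy : y = x
      · subst hy; rw [hwx]; exact htlt.le
      · rw [hwy y hy]
    have hwF : w ∈ F := by
      constructor
      · intro y
        by_cases hy : y = x
        · subst hy; rw [hwx]; exact ⟨htge, htlt.le.trans (hv1 y)⟩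
        · rw [hwy y hy]; exact ⟨hgv y, hv1 y⟩
      · intro x'
        by_cases hx' : x' = x
        · subst hx'
          rw [hwx]
          have hrw : ∑ y ∈ N x', ω x' y * (w y - t) = ∑ y ∈ N x', ω x' y * (v y - t) :=
            Finset.sum_congr rfl fun y hy => by
              rw [hwy y (fun h => hxN x' (h ▸ hy))]
          rw [hrw]
          have hsplit : ∑ y ∈ N x', ω x' y * (v y - t)
              = (∑ y ∈ N x', ω x' y * v y) - deg x' * t := by
            simp only [hdegdef, Finset.sum_mul, ← Finset.sum_sub_distrib]
            exact Finset.sum_congr rfl fun y _ => by ring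
          have hDt : t * D = t * deg x' + t * (μ x' * V x') := by rw [hDdef]; ring
          linarith [htD, hsplit]
        · have hwx' : w x' = v x' := hwy x' hx'
          rw [hwx']
          calc ∑ y ∈ N x', ω x' y * (w y - v x')
              ≤ ∑ y ∈ N x', ω x' y * (v y - v x') :=
                Finset.sum_le_sum fun y _ =>
                  mul_le_mul_of_nonneg_left (by linarith [hwle y]) (hω_nonneg x' y)
            _ ≤ μ x' * (V x' * v x') := hv_super x'
    have hcon := hvle w hwF x
    rw [hwx] at hcon
    linarith
  -- positivity of v
  have hv0 : ∀ x, 0 ≤ v x := fun x => (hg0 x).trans (hgv x)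
  have hZ : ∀ x, v x = 0 → ∀ y, 0 < ω x y → v y = 0 := by
    intro x hx y hy
    have hsum0 : ∑ y' ∈ N x, ω x y' * v y' = 0 := by
      have h := hv_eq x
      rw [hx] at h
      simpa using h
    have hterm : ∀ y' ∈ N x, 0 ≤ ω x y' * v y' :=
      fun y' _ => mul_nonneg (hω_nonneg x y') (hv0 y')
    have h0 := (Finset.sum_eq_zero_iff_of_nonneg hterm).mp hsum0 y ((hmemN x y).2 hy)
    rcases mul_eq_zero.mp h0 with h | h
    · exact absurd h hy.ne'
    · exact h
  have hvpos : ∀ x, 0 < v x := by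
    intro x
    rcases (hv0 x).lt_or_eq with h | h
    · exact h
    exfalso
    have hx : v x = 0 := h.symm
    have hxx₀ : x ≠ x₀ := by
      rintro rfl
      have := hgv x
      linarith [hgx₀]
    obtain ⟨n, p, hp0, hpn, hp⟩ := hconn x x₀ hxx₀
    have hall : ∀ i, i ≤ n → v (p i) = 0 := by
      intro i
      induction i with
      | zero => intro _; rw [hp0]; exact hx
      | succ k ih =>
        intro hk
        exact hZ (p k) (ih (Nat.le_of_succ_le hk)) (p (k+1)) (hp k (Nat.lt_of_succ_le hk))
    have h1 := hall n le_rfl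
    rw [hpn] at h1
    have h2 := hgv x₀
    linarith [hgx₀]
  refine ⟨v, ?_, fun x => ⟨hvpos x, hv1 x⟩⟩
  intro x
  rw [htsum x v, hv_eq x, ← mul_assoc, inv_mul_cancel₀ (hμ' x), one_mul, sub_self]
end

section
/- Let (G, ω, μ) be a connected, locally finite weighted graph, let V : G → ℝ, and let T > 0. Let v : G × [0,T] → ℝ be such that for every x ∈ G the map t ↦ v(x,t) is C¹ on [0,T], and suppose that V(x) ∂_t v(x,t) − Δv(x,t) = 0 for all x ∈ G and t ∈ [0,T], where Δ acts in the x-variable. Then for every fixed x ∈ G, for almost every t ∈ [0,T] the map t ↦ v₊(x,t) is differentiable at t and V(x) ∂_t v₊(x,t) − Δv₊(x,t) ≤ 0, where v₊ = max{v, 0}. -/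
/-!
Fix `x`. Where `v(x,t) > 0`, `v₊(x,·) = v(x,·)` near `t`, so `V ∂ₜv₊ = Δv(x) ≤ Δv₊(x)` because
`v ≤ v₊` with equality at `x`. Where `v(x,t) < 0`, `v₊(x,·) = 0` near `t` and `Δv₊(x) ≥ 0`.
At a zero of `v(x,·)` with `∂ₜv ≠ 0` the zero is isolated, so such times are countable, hence
null; at the remaining zeros `∂ₜv = 0`, and then `v₊(x,·)` also has derivative `0`.
-/

open MeasureTheory Topology Filter

section Calculus

variable {𝕜 F : Type*} [NontriviallyNormedField 𝕜] [SecondCountableTopology 𝕜]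
  [NormedAddCommGroup F] [NormedSpace 𝕜 F]

theorem countable_setOf_eq_and_hasDerivWithinAt_ne_zero {f f' : 𝕜 → F} {s : Set 𝕜} (c : F)
    (hf : ∀ t ∈ s, HasDerivWithinAt f (f' t) s t) :
    {t | t ∈ s ∧ f t = c ∧ f' t ≠ 0}.Countable := by
  set S := {t | t ∈ s ∧ f t = c ∧ f' t ≠ 0}
  refine (HereditarilyLindelofSpace.isLindelof S).countable (discreteTopology_subtype_iff.2 ?_)
  rintro t ⟨hts, hft, hf't⟩
  have hne : ∀ᶠ τ in 𝓝[s \ {t}] t, f τ ≠ c := by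
    filter_upwards [(hasDerivWithinAt_iff_tendsto_slope.1 (hf t hts)).eventually_ne hf't]
      with τ hτ hfτ
    exact hτ (by simp [slope_def_module, hfτ, hft])
  have hle : 𝓝[≠] t ⊓ 𝓟 S ≤ 𝓝[s \ {t}] t := by
    rw [nhdsWithin, nhdsWithin, inf_assoc, inf_principal]
    exact inf_le_inf_left _ (principal_mono.2 fun τ hτ => ⟨hτ.2.1, hτ.1⟩)
  exact empty_mem_iff_bot.1 <| mem_of_superset (inter_mem (hle hne) (mem_inf_of_right
    (mem_principal_self S))) fun τ ⟨hτ, hτS⟩ => hτ hτS.2.1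

end Calculus

section PositivePart

variable {f : ℝ → ℝ} {f' t : ℝ} {s : Set ℝ}

theorem HasDerivWithinAt.max_zero_of_pos (hf : HasDerivWithinAt f f' s t) (ht : 0 < f t) :
    HasDerivWithinAt (fun τ => max (f τ) 0) f' s t :=
  hf.congr_of_eventuallyEq
    ((hf.continuousWithinAt.eventually (eventually_gt_nhds ht)).mono fun _ h => max_eq_left h.le)
    (max_eq_left ht.le)

theorem ContinuousWithinAt.hasDerivWithinAt_max_zero_of_neg (hf : ContinuousWithinAt f s t)
    (ht : f t < 0) : HasDerivWithinAt (fun τ => max (f τ) 0) 0 s t :=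
  (hasDerivWithinAt_const t s 0).congr_of_eventuallyEq
    ((hf.eventually (eventually_lt_nhds ht)).mono fun _ h => max_eq_right h.le)
    (max_eq_right ht.le)

theorem HasDerivWithinAt.max_zero_of_eq_zero (hf : HasDerivWithinAt f 0 s t) (ht : f t = 0) :
    HasDerivWithinAt (fun τ => max (f τ) 0) 0 s t := by
  rw [hasDerivWithinAt_iff_isLittleO] at hf ⊢
  simp only [smul_zero, sub_zero, ht, max_self] at hf ⊢
  refine Asymptotics.IsBigO.trans_isLittleO (Asymptotics.isBigO_of_le _ fun τ => ?_) hf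
  simpa [Real.norm_eq_abs] using abs_max_sub_max_le_abs (f τ) 0 0

theorem HasDerivWithinAt.max_zero (hf : HasDerivWithinAt f f' s t) (h : f t = 0 → f' = 0) :
    HasDerivWithinAt (fun τ => max (f τ) 0) (if 0 < f t then f' else 0) s t := by
  rcases lt_trichotomy (f t) 0 with hneg | hzero | hpos
  · simpa [hneg.not_gt] using hf.continuousWithinAt.hasDerivWithinAt_max_zero_of_neg hneg
  · simpa [hzero, h hzero] using (h hzero ▸ hf).max_zero_of_eq_zero hzero
  · simpa [hpos] using hf.max_zero_of_pos hpos

end PositivePart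

section GraphLaplacian

variable {G : Type*} (μ : G → ℝ) (ω : G → G → ℝ)

noncomputable def graphLaplacian (f : G → ℝ) (x : G) : ℝ :=
  (μ x)⁻¹ * ∑' y, ω x y * (f y - f x)

variable {μ ω} {x : G}

theorem graphLaplacian_max_zero_nonneg (hμ : 0 ≤ μ x) (hω : ∀ y, 0 ≤ ω x y) {f : G → ℝ}
    (hf : f x ≤ 0) : 0 ≤ graphLaplacian μ ω (fun y => max (f y) 0) x := by
  refine mul_nonneg (inv_nonneg.2 hμ) (tsum_nonneg fun y => mul_nonneg (hω y) ?_)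
  simp [max_eq_right hf]

theorem graphLaplacian_le_graphLaplacian_max_zero (hμ : 0 ≤ μ x) (hω : ∀ y, 0 ≤ ω x y)
    (hloc : (Function.support (ω x)).Finite) {f : G → ℝ} (hf : 0 ≤ f x) :
    graphLaplacian μ ω f x ≤ graphLaplacian μ ω (fun y => max (f y) 0) x := by
  have hsum : ∀ g : G → ℝ, Summable fun y => ω x y * g y := fun g =>
    summable_of_hasFiniteSupport (hloc.subset (Function.support_mul_subset_left _ _))
  refine mul_le_mul_of_nonneg_left (Summable.tsum_le_tsum
    (fun y => mul_le_mul_of_nonneg_left ?_ (hω y)) (hsum _) (hsum _)) (inv_nonneg.2 hμ)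
  dsimp only
  rw [max_eq_left hf]
  exact sub_le_sub_right (le_max_left _ _) _

end GraphLaplacian

theorem stmt5_general {G : Type*}
    (μ : G → ℝ) (ω : G → G → ℝ)
    (hμ : ∀ x, 0 < μ x)
    (hω_nonneg : ∀ x y, 0 ≤ ω x y)
    (hloc : ∀ x : G, {y : G | 0 < ω x y}.Finite)
    (V : G → ℝ)
    (T : ℝ) (hT : 0 < T)
    (v : G → ℝ → ℝ)
    (hC1 : ∀ x : G, ContDiffOn ℝ 1 (v x) (Set.Icc 0 T))
    (heq : ∀ x : G, ∀ t ∈ Set.Icc (0 : ℝ) T,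
      V x * derivWithin (v x) (Set.Icc 0 T) t
        - (μ x)⁻¹ * (∑' y, ω x y * (v y t - v x t)) = 0) :
    ∀ x : G, ∀ᵐ t ∂(volume.restrict (Set.Icc (0 : ℝ) T)),
      DifferentiableWithinAt ℝ (fun τ => max (v x τ) 0) (Set.Icc (0 : ℝ) T) t ∧
      V x * derivWithin (fun τ => max (v x τ) 0) (Set.Icc (0 : ℝ) T) t
        - (μ x)⁻¹ * (∑' y, ω x y * (max (v y t) 0 - max (v x t) 0)) ≤ 0 := by
  intro x
  set I := Set.Icc (0 : ℝ) T
  have hv : ∀ t ∈ I, HasDerivWithinAt (v x) (derivWithin (v x) I t) I t := fun t ht =>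
    ((hC1 x).differentiableOn one_ne_zero t ht).hasDerivWithinAt
  filter_upwards [ae_restrict_mem measurableSet_Icc, ae_restrict_of_ae
    ((countable_setOf_eq_and_hasDerivWithinAt_ne_zero 0 hv).ae_notMem volume)] with t ht hreg
  have hpos := (hv t ht).max_zero fun h0 => not_not.1 fun hne => hreg ⟨ht, h0, hne⟩
  refine ⟨hpos.differentiableWithinAt, ?_⟩
  rw [hpos.derivWithin (uniqueDiffOn_Icc hT t ht)]
  change _ - graphLaplacian μ ω (fun y => max (v y t) 0) x ≤ 0
  split_ifs with hvt
  · have hsupp : (Function.support (ω x)).Finite :=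
      (hloc x).subset fun y hy => (hω_nonneg x y).lt_of_ne' hy
    have hsol : V x * derivWithin (v x) I t - graphLaplacian μ ω (v · t) x = 0 := heq x t ht
    linarith [graphLaplacian_le_graphLaplacian_max_zero (hμ x).le (hω_nonneg x) hsupp
      (f := (v · t)) hvt.le]
  · linarith [graphLaplacian_max_zero_nonneg (hμ x).le (hω_nonneg x) (f := (v · t)) (not_lt.1 hvt)]

/-- **Lemma 4.2.** If `v` solves `V ∂ₜ v − Δv = 0` on `G × [0,T]` with `v(x,·)` of
class `C¹` for every `x`, then for every `x` and a.e. `t ∈ [0,T]` the positive part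
`v₊(x,·)` is differentiable at `t` and `V ∂ₜ v₊ − Δv₊ ≤ 0`. -/
theorem stmt5 {G : Type*} [Countable G] [Infinite G]
    (μ : G → ℝ) (ω : G → G → ℝ)
    (hμ : ∀ x, 0 < μ x)
    (hω_symm : ∀ x y, ω x y = ω y x)
    (hω_diag : ∀ x, ω x x = 0)
    (hω_nonneg : ∀ x y, 0 ≤ ω x y)
    (hω_sum : ∀ x, Summable fun y => ω x y)
    (hloc : ∀ x : G, {y : G | 0 < ω x y}.Finite)
    (hconn : ∀ x y : G, x ≠ y → ∃ (n : ℕ) (p : ℕ → G),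
      p 0 = x ∧ p n = y ∧ ∀ i < n, 0 < ω (p i) (p (i + 1)))
    (V : G → ℝ)
    (T : ℝ) (hT : 0 < T)
    (v : G → ℝ → ℝ)
    (hC1 : ∀ x : G, ContDiffOn ℝ 1 (v x) (Set.Icc 0 T))
    (heq : ∀ x : G, ∀ t ∈ Set.Icc (0 : ℝ) T,
      V x * derivWithin (v x) (Set.Icc 0 T) t
        - (μ x)⁻¹ * (∑' y, ω x y * (v y t - v x t)) = 0) :
    ∀ x : G, ∀ᵐ t ∂(volume.restrict (Set.Icc (0 : ℝ) T)),
      DifferentiableWithinAt ℝ (fun τ => max (v x τ) 0) (Set.Icc (0 : ℝ) T) t ∧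
      V x * derivWithin (fun τ => max (v x τ) 0) (Set.Icc (0 : ℝ) T) t
        - (μ x)⁻¹ * (∑' y, ω x y * (max (v y t) 0 - max (v x t) 0)) ≤ 0 :=
  stmt5_general μ ω hμ hω_nonneg hloc V T hT v hC1 heq
end

section
/- Let (G, ω, μ) be a connected, locally finite weighted graph, let d be an intrinsic pseudo metric on G with finite jump size s whose balls are finite sets, and let V : G → ℝ satisfy V ≥ 0 on G and V(x) ≥ c₀ d(x,x₀)^{-α} for all x ∈ G \ B_{R₀}(x₀), for some x₀ ∈ G, R₀ > 0, c₀ > 0 and α ∈ [0,1]. Fix λ > 1 and r ≥ 2s + R₀, set ρ(x) := max{d(x,x₀)^α, r^α}, and for M, T > 0 define ξ(x,t) := −M ρ(x)/(λT − t) for x ∈ G, t ∈ [0,T). Then there exists T₀ > 0 such that, whenever M = T ∈ (0, T₀], one has V(x) ξ_t(x,t) μ(x) + (1/2) ∑_{y∈G} ω(x,y)(1 − e^{ξ(y,t) − ξ(x,t)})² ≤ 0 for all x ∈ G and t ∈ (0,T). -/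
/-!
Write `D = λT - t` and `β = T / D ≤ 1 / (λ - 1)`, so that `ξ(y,t) - ξ(x,t) = β (ρ(x) - ρ(y))`
and `ξ_t(x,t) = -T ρ(x) / D²`. Since `ρ = max(d(·,x₀), r)^α` is `r^(α-1)`-Lipschitz for `d`,
the exponent along an edge is at most `β r^(α-1) s ≤ C := r^(α-1) s / (λ - 1)`, so
`(1 - e^Δ)² ≤ (r^(α-1) e^C)² β² d(x,y)²`, and intrinsicness bounds the edge sum by
`K β² μ(x)` with `K = (r^(α-1) e^C)²`. Inside `B_{R₀}(x₀)` every neighbour lies in `B_r(x₀)`,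
where `ρ ≡ r^α`, so the edge sum vanishes. Outside, `V ρ ≥ c₀`, so the first term is at most
`-c₀ T μ(x) / D²`, which beats `K T² μ(x) / (2 D²)` as soon as `T ≤ 2 c₀ / K`.
-/

open Real

namespace Real

lemma rpow_sub_rpow_le_of_le {r a b α : ℝ} (hr : 0 < r) (hrb : r ≤ b) (hba : b ≤ a)
    (hα₀ : 0 ≤ α) (hα₁ : α ≤ 1) : a ^ α - b ^ α ≤ r ^ (α - 1) * (a - b) := by
  have hb : 0 < b := hr.trans_le hrb
  have bernoulli : (a / b) ^ α ≤ 1 + α * (a / b - 1) := by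
    simpa using rpow_one_add_le_one_add_mul_self (s := a / b - 1)
      (by linarith [div_nonneg (hb.le.trans hba) hb.le]) hα₀ hα₁
  have hab : 0 ≤ a - b := sub_nonneg.2 hba
  calc a ^ α - b ^ α = b ^ α * ((a / b) ^ α - 1) := by
        rw [div_rpow (hb.le.trans hba) hb.le]; field_simp
    _ ≤ b ^ α * (α * (a / b - 1)) :=
        mul_le_mul_of_nonneg_left (by linarith) (rpow_nonneg hb.le _)
    _ = α * (b ^ (α - 1) * (a - b)) := by rw [rpow_sub_one hb.ne']; field_simp
    _ ≤ 1 * (r ^ (α - 1) * (a - b)) :=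
        mul_le_mul hα₁
          (mul_le_mul_of_nonneg_right (rpow_le_rpow_of_nonpos hr hrb (by linarith)) hab)
          (mul_nonneg (rpow_nonneg hb.le _) hab) zero_le_one
    _ = r ^ (α - 1) * (a - b) := one_mul _

lemma abs_rpow_sub_rpow_le {r a b α : ℝ} (hr : 0 < r) (hra : r ≤ a) (hrb : r ≤ b)
    (hα₀ : 0 ≤ α) (hα₁ : α ≤ 1) : |a ^ α - b ^ α| ≤ r ^ (α - 1) * |a - b| := by
  wlog hba : b ≤ a generalizing a b
  · rw [abs_sub_comm, abs_sub_comm a]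
    exact this hrb hra (le_of_not_ge hba)
  rw [abs_of_nonneg (sub_nonneg.2 (rpow_le_rpow (hr.le.trans hrb) hba hα₀)),
    abs_of_nonneg (sub_nonneg.2 hba)]
  exact rpow_sub_rpow_le_of_le hr hrb hba hα₀ hα₁

lemma abs_max_rpow_sub_max_rpow_le {r a b α : ℝ} (hr : 0 < r) (ha : 0 ≤ a) (hb : 0 ≤ b)
    (hα₀ : 0 ≤ α) (hα₁ : α ≤ 1) :
    |max (a ^ α) (r ^ α) - max (b ^ α) (r ^ α)| ≤ r ^ (α - 1) * |a - b| := by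
  rw [← rpow_max ha hr.le hα₀, ← rpow_max hb hr.le hα₀]
  exact (abs_rpow_sub_rpow_le hr (le_max_right _ _) (le_max_right _ _) hα₀ hα₁).trans
    (mul_le_mul_of_nonneg_left (abs_max_sub_max_le_abs _ _ _) (rpow_nonneg hr.le _))

lemma abs_one_sub_exp_le (x : ℝ) : |1 - exp x| ≤ |x| * exp |x| := by
  rcases le_total x 0 with hx | hx
  · rw [abs_of_nonneg (by simpa using exp_le_exp.2 hx), abs_of_nonpos hx]
    nlinarith [add_one_le_exp x, one_le_exp (neg_nonneg.2 hx)]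
  · rw [abs_of_nonpos (by simpa using exp_le_exp.2 hx), abs_of_nonneg hx]
    have h : exp (-x) * exp x = 1 := by rw [← exp_add, neg_add_cancel, exp_zero]
    nlinarith [add_one_le_exp (-x), one_le_exp hx, exp_pos x]

lemma sq_one_sub_exp_le {x a : ℝ} (h : |x| ≤ a) : (1 - exp x) ^ 2 ≤ (a * exp a) ^ 2 := by
  have ha : 0 ≤ a := (abs_nonneg x).trans h
  rw [← sq_abs]
  gcongr
  exact (abs_one_sub_exp_le x).trans (by gcongr)

end Real

lemma deriv_const_div_const_sub {a c t : ℝ} (h : t ≠ c) :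
    deriv (fun τ => a / (c - τ)) t = a / (c - t) ^ 2 := by
  have hc : c - t ≠ 0 := sub_ne_zero.2 h.symm
  have h' : HasDerivAt (fun τ => a / (c - τ)) ((0 * (c - t) - a * -1) / (c - t) ^ 2) t :=
    (hasDerivAt_const t a).div ((hasDerivAt_id t).const_sub c) hc
  rw [h'.deriv]
  ring

lemma le_mul_of_mul_rpow_neg_le {c v a b α : ℝ} (ha : 0 < a) (hv : 0 ≤ v)
    (h : c * a ^ (-α) ≤ v) (hb : a ^ α ≤ b) : c ≤ v * b := calc
  c = c * a ^ (-α) * a ^ α := by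
    rw [mul_assoc, ← rpow_add ha, neg_add_cancel, rpow_zero, mul_one]
  _ ≤ v * a ^ α := mul_le_mul_of_nonneg_right h (rpow_nonneg ha.le _)
  _ ≤ v * b := mul_le_mul_of_nonneg_left hb hv

lemma abs_max_dist_rpow_sub_le {G : Type*} {d : G → G → ℝ} {x₀ : G} {r α : ℝ}
    (hd_symm : ∀ x y, d x y = d y x) (hd_nonneg : ∀ x y, 0 ≤ d x y)
    (hd_tri : ∀ x y z, d x y ≤ d x z + d z y) (hr : 0 < r) (hα₀ : 0 ≤ α) (hα₁ : α ≤ 1)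
    (x y : G) :
    |max (d x x₀ ^ α) (r ^ α) - max (d y x₀ ^ α) (r ^ α)| ≤ r ^ (α - 1) * d x y := by
  refine (abs_max_rpow_sub_max_rpow_le hr (hd_nonneg _ _) (hd_nonneg _ _) hα₀ hα₁).trans
    (mul_le_mul_of_nonneg_left (abs_sub_le_iff.2 ⟨?_, ?_⟩) (rpow_nonneg hr.le _))
  · linarith [hd_tri x x₀ y]
  · linarith [hd_tri y x₀ x, hd_symm x y]

lemma jump_size_nonneg {G : Type*} [Nontrivial G] {ω d : G → G → ℝ} {s : ℝ}
    (hconn : ∀ x y : G, x ≠ y → ∃ (n : ℕ) (p : ℕ → G),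
      p 0 = x ∧ p n = y ∧ ∀ i < n, 0 < ω (p i) (p (i + 1)))
    (hd_nonneg : ∀ x y, 0 ≤ d x y) (hs : ∀ x y, 0 < ω x y → d x y ≤ s) : 0 ≤ s := by
  obtain ⟨x, y, hxy⟩ := exists_pair_ne G
  obtain ⟨n, p, hp0, hpn, hp⟩ := hconn x y hxy
  have hn : 0 < n := Nat.pos_of_ne_zero fun hn => hxy (by rw [← hp0, ← hpn, hn])
  exact (hd_nonneg _ _).trans (hs _ _ (hp 0 hn))

section Vertex

variable {G : Type*} {ω : G → G → ℝ} {ρ : G → ℝ} {x : G} {β : ℝ}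

lemma tsum_mul_one_sub_exp_sq_eq_zero (hω_nonneg : ∀ y, 0 ≤ ω x y)
    (hρ : ∀ y, 0 < ω x y → ρ y = ρ x) :
    ∑' y, ω x y * (1 - exp (β * (ρ x - ρ y))) ^ 2 = 0 := by
  refine (tsum_congr fun y => ?_).trans tsum_zero
  rcases (hω_nonneg y).eq_or_lt with hy | hy
  · rw [← hy, zero_mul]
  · simp [hρ y hy]

lemma tsum_mul_one_sub_exp_sq_le {d : G → G → ℝ} {μ : G → ℝ} {s L B : ℝ}
    (hμ : 0 < μ x) (hω_nonneg : ∀ y, 0 ≤ ω x y)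
    (hloc : {y | 0 < ω x y}.Finite) (hs : ∀ y, 0 < ω x y → d x y ≤ s)
    (hintr : (μ x)⁻¹ * ∑' y, ω x y * d x y ^ 2 ≤ 1)
    (hρ : ∀ y, 0 < ω x y → |ρ x - ρ y| ≤ L * d x y) (hL : 0 ≤ L)
    (hβ : 0 ≤ β) (hβB : β ≤ B) :
    ∑' y, ω x y * (1 - exp (β * (ρ x - ρ y))) ^ 2
      ≤ (L * exp (B * L * s)) ^ 2 * β ^ 2 * μ x := by
  have hsummable : ∀ f : G → ℝ, Summable fun y => ω x y * f y := fun f =>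
    summable_of_hasFiniteSupport <| hloc.subset fun y hy =>
      (hω_nonneg y).lt_of_ne (left_ne_zero_of_mul hy).symm
  have hterm : ∀ y, ω x y * (1 - exp (β * (ρ x - ρ y))) ^ 2
      ≤ (L * exp (B * L * s)) ^ 2 * β ^ 2 * (ω x y * d x y ^ 2) := by
    intro y
    rcases (hω_nonneg y).eq_or_lt with hy | hy
    · simp [← hy]
    have hLd : 0 ≤ L * d x y := (abs_nonneg _).trans (hρ y hy)
    have hΔ : |β * (ρ x - ρ y)| ≤ β * (L * d x y) := by
      rw [abs_mul, abs_of_nonneg hβ]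
      exact mul_le_mul_of_nonneg_left (hρ y hy) hβ
    have hexp : β * (L * d x y) ≤ B * L * s := calc
      β * (L * d x y) ≤ B * (L * d x y) := mul_le_mul_of_nonneg_right hβB hLd
      _ ≤ B * (L * s) := by gcongr; exacts [hβ.trans hβB, hs y hy]
      _ = B * L * s := (mul_assoc _ _ _).symm
    have hsq :
        (1 - exp (β * (ρ x - ρ y))) ^ 2 ≤ (β * (L * d x y) * exp (B * L * s)) ^ 2 := by
      refine (sq_one_sub_exp_le hΔ).trans (pow_le_pow_left₀ ?_ ?_ 2)
      · exact mul_nonneg (mul_nonneg hβ hLd) (exp_nonneg _)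
      · exact mul_le_mul_of_nonneg_left (exp_le_exp.2 hexp) (mul_nonneg hβ hLd)
    calc ω x y * (1 - exp (β * (ρ x - ρ y))) ^ 2
        ≤ ω x y * (β * (L * d x y) * exp (B * L * s)) ^ 2 :=
          mul_le_mul_of_nonneg_left hsq (hω_nonneg y)
      _ = (L * exp (B * L * s)) ^ 2 * β ^ 2 * (ω x y * d x y ^ 2) := by ring
  have hmass : ∑' y, ω x y * d x y ^ 2 ≤ μ x := by
    rwa [inv_mul_le_iff₀ hμ, mul_one] at hintr
  calc ∑' y, ω x y * (1 - exp (β * (ρ x - ρ y))) ^ 2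
      ≤ ∑' y, (L * exp (B * L * s)) ^ 2 * β ^ 2 * (ω x y * d x y ^ 2) :=
        Summable.tsum_le_tsum hterm (hsummable _) ((hsummable _).mul_left _)
    _ = (L * exp (B * L * s)) ^ 2 * β ^ 2 * ∑' y, ω x y * d x y ^ 2 := tsum_mul_left
    _ ≤ (L * exp (B * L * s)) ^ 2 * β ^ 2 * μ x := by gcongr

end Vertex

theorem stmt7_general {G : Type*} [Infinite G]
    (μ : G → ℝ) (ω : G → G → ℝ) (d : G → G → ℝ)
    (hμ : ∀ x, 0 < μ x)
    (hω_nonneg : ∀ x y, 0 ≤ ω x y)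
    (hloc : ∀ x : G, {y : G | 0 < ω x y}.Finite)
    (hconn : ∀ x y : G, x ≠ y → ∃ (n : ℕ) (p : ℕ → G),
      p 0 = x ∧ p n = y ∧ ∀ i < n, 0 < ω (p i) (p (i + 1)))
    (hd_symm : ∀ x y, d x y = d y x)
    (hd_nonneg : ∀ x y, 0 ≤ d x y)
    (hd_tri : ∀ x y z, d x y ≤ d x z + d z y)
    (s : ℝ) (hs : ∀ x y, 0 < ω x y → d x y ≤ s)
    (hintr : ∀ x : G, (μ x)⁻¹ * ∑' y, ω x y * d x y ^ 2 ≤ 1)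
    (V : G → ℝ) (hV₀ : ∀ x, 0 ≤ V x)
    (x₀ : G) (R₀ c₀ α : ℝ)
    (hR₀ : 0 < R₀) (hc₀ : 0 < c₀) (hα₀ : 0 ≤ α) (hα₁ : α ≤ 1)
    (hVlow : ∀ x : G, R₀ ≤ d x x₀ → c₀ * d x x₀ ^ (-α) ≤ V x)
    (lam r : ℝ) (hlam : 1 < lam) (hr : 2 * s + R₀ ≤ r)
    (ρ : G → ℝ) (hρ : ∀ x, ρ x = max (d x x₀ ^ α) (r ^ α)) :
    ∃ T₀ > (0 : ℝ), ∀ T : ℝ, 0 < T → T ≤ T₀ →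
      ∀ x : G, ∀ t ∈ Set.Ioo (0 : ℝ) T,
        V x * deriv (fun τ : ℝ => -(T * ρ x) / (lam * T - τ)) t * μ x
          + (1 / 2) * ∑' y : G, ω x y *
              (1 - Real.exp (-(T * ρ y) / (lam * T - t)
                - (-(T * ρ x) / (lam * T - t)))) ^ 2 ≤ 0 := by
  have hs₀ : 0 ≤ s := jump_size_nonneg hconn hd_nonneg hs
  have hr₀ : 0 < r := by linarith
  have hL : 0 < r ^ (α - 1) := rpow_pos_of_pos hr₀ _
  set K := (r ^ (α - 1) * exp ((lam - 1)⁻¹ * r ^ (α - 1) * s)) ^ 2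
  refine ⟨2 * c₀ / K, by positivity, fun T hT hTT₀ x t ⟨ht₀, htT⟩ => ?_⟩
  rw [deriv_const_div_const_sub (by nlinarith)]
  set D := lam * T - t
  have hD : 0 < D := by nlinarith
  have hξ : ∀ y, -(T * ρ y) / D - -(T * ρ x) / D = T / D * (ρ x - ρ y) := fun y => by ring
  simp only [hξ]
  by_cases hnear : d x x₀ < R₀
  · have hρ_eq : ∀ z, d z x₀ ≤ r → ρ z = r ^ α := fun z hz =>
      (hρ z).trans (max_eq_right (rpow_le_rpow (hd_nonneg _ _) hz hα₀))
    rw [tsum_mul_one_sub_exp_sq_eq_zero (hω_nonneg x) fun y hy => by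
      rw [hρ_eq x (by linarith),
        hρ_eq y (by linarith [hd_tri y x₀ x, hd_symm x y, hs x y hy])]]
    have hρx : 0 ≤ ρ x := (hρ x).symm ▸ (rpow_nonneg (hd_nonneg _ _) _).trans (le_max_left _ _)
    have := hV₀ x; have := hμ x
    simp only [mul_zero, add_zero, neg_div, mul_neg, neg_mul, neg_nonpos]
    positivity
  have hVρ : c₀ ≤ V x * ρ x := le_mul_of_mul_rpow_neg_le (hR₀.trans_le (not_lt.1 hnear))
    (hV₀ x) (hVlow x (not_lt.1 hnear)) ((hρ x).symm ▸ le_max_left _ _)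
  have hβ : T / D ≤ (lam - 1)⁻¹ := by
    rw [div_le_iff₀ hD, inv_mul_eq_div, le_div_iff₀ (by linarith)]; nlinarith
  have hsum := tsum_mul_one_sub_exp_sq_le (hμ x) (hω_nonneg x) (hloc x) (hs x) (hintr x)
    (fun y _ => hρ x ▸ hρ y ▸
      abs_max_dist_rpow_sub_le hd_symm hd_nonneg hd_tri hr₀ hα₀ hα₁ x y)
    hL.le (div_pos hT hD).le hβ
  have hKT : K * T ≤ 2 * c₀ := by rwa [le_div_iff₀ (by positivity), mul_comm] at hTT₀
  calc V x * (-(T * ρ x) / D ^ 2) * μ x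
        + 1 / 2 * ∑' y, ω x y * (1 - exp (T / D * (ρ x - ρ y))) ^ 2
      ≤ V x * (-(T * ρ x) / D ^ 2) * μ x + 1 / 2 * (K * (T / D) ^ 2 * μ x) := by gcongr
    _ = μ x * T / D ^ 2 * (K * T / 2 - V x * ρ x) := by field_simp; ring
    _ ≤ 0 := mul_nonpos_of_nonneg_of_nonpos (by have := hμ x; positivity) (by linarith)

/-- **Lemma 5.1.** With `ρ(x) = max{d(x,x₀)^α, r^α}` and
`ξ(x,t) = −M ρ(x)/(λT − t)`, there is `T₀ > 0` such that, whenever `M = T ∈ (0,T₀]`,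
`V(x) ξₜ(x,t) μ(x) + (1/2) ∑_y ω(x,y)(1 − e^{ξ(y,t) − ξ(x,t)})² ≤ 0`
for all `x ∈ G` and `t ∈ (0,T)`. -/
theorem stmt7 {G : Type*} [Countable G] [Infinite G]
    (μ : G → ℝ) (ω : G → G → ℝ) (d : G → G → ℝ)
    (hμ : ∀ x, 0 < μ x)
    (hω_symm : ∀ x y, ω x y = ω y x)
    (hω_diag : ∀ x, ω x x = 0)
    (hω_nonneg : ∀ x y, 0 ≤ ω x y)
    (hω_sum : ∀ x, Summable fun y => ω x y)
    (hloc : ∀ x : G, {y : G | 0 < ω x y}.Finite)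
    (hconn : ∀ x y : G, x ≠ y → ∃ (n : ℕ) (p : ℕ → G),
      p 0 = x ∧ p n = y ∧ ∀ i < n, 0 < ω (p i) (p (i + 1)))
    (hd_symm : ∀ x y, d x y = d y x)
    (hd_diag : ∀ x, d x x = 0)
    (hd_nonneg : ∀ x y, 0 ≤ d x y)
    (hd_tri : ∀ x y z, d x y ≤ d x z + d z y)
    (s : ℝ) (hs : ∀ x y, 0 < ω x y → d x y ≤ s)
    (hballs : ∀ (x : G) (r : ℝ), {y : G | d y x < r}.Finite)
    (hintr : ∀ x : G, (μ x)⁻¹ * ∑' y, ω x y * d x y ^ 2 ≤ 1)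
    (V : G → ℝ) (hV₀ : ∀ x, 0 ≤ V x)
    (x₀ : G) (R₀ c₀ α : ℝ)
    (hR₀ : 0 < R₀) (hc₀ : 0 < c₀) (hα₀ : 0 ≤ α) (hα₁ : α ≤ 1)
    (hVlow : ∀ x : G, R₀ ≤ d x x₀ → c₀ * d x x₀ ^ (-α) ≤ V x)
    (lam r : ℝ) (hlam : 1 < lam) (hr : 2 * s + R₀ ≤ r)
    (ρ : G → ℝ) (hρ : ∀ x, ρ x = max (d x x₀ ^ α) (r ^ α)) :
    ∃ T₀ > (0 : ℝ), ∀ T : ℝ, 0 < T → T ≤ T₀ →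
      ∀ x : G, ∀ t ∈ Set.Ioo (0 : ℝ) T,
        V x * deriv (fun τ : ℝ => -(T * ρ x) / (lam * T - τ)) t * μ x
          + (1 / 2) * ∑' y : G, ω x y *
              (1 - Real.exp (-(T * ρ y) / (lam * T - t)
                - (-(T * ρ x) / (lam * T - t)))) ^ 2 ≤ 0 :=
  stmt7_general μ ω d hμ hω_nonneg hloc hconn hd_symm hd_nonneg hd_tri s hs hintr V hV₀ x₀ R₀ c₀ α
    hR₀ hc₀ hα₀ hα₁ hVlow lam r hlam hr ρ hρ
end

section
/- Let (G, ω, μ) be a weighted graph with a pseudo metric d of finite jump size s, let x₀ ∈ G, let β ∈ (0,1], R₀ > 0 and r ≥ 2s + R₀, and set ρ(x) := max{d(x,x₀)^β, r^β}. Then |ρ(x) − ρ(y)| ≤ β R₀^{β−1} d(x,y) for all x, y ∈ G with x ∼ y. -/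
/-!
On `[R₀, ∞)` the function `t ↦ t ^ β` is concave with derivative at most `β R₀ ^ (β - 1)`,
so it is Lipschitz there with that constant. Since `s ≥ 0` once an edge exists, `r ≥ R₀`, and
`ρ x = (max (d x x₀) r) ^ β` only evaluates the power on `[r, ∞)`. Finally `t ↦ max t r` is
1-Lipschitz and `|d x x₀ - d y x₀| ≤ d x y` by the triangle inequality.
-/

open Real

-- Bernoulli: `(a / c) ^ β = (1 + (a - c) / c) ^ β ≤ 1 + β (a - c) / c`.
lemma rpow_sub_rpow_le_mul_sub {β R c a : ℝ} (hβ₀ : 0 ≤ β) (hβ₁ : β ≤ 1) (hR : 0 < R)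
    (hRc : R ≤ c) (hca : c ≤ a) :
    a ^ β - c ^ β ≤ β * R ^ (β - 1) * (a - c) := by
  have hc : 0 < c := hR.trans_le hRc
  have hbernoulli : (a / c) ^ β ≤ 1 + β * ((a - c) / c) := by
    have h := rpow_one_add_le_one_add_mul_self
      (by rw [le_div_iff₀ hc]; linarith : (-1 : ℝ) ≤ (a - c) / c) hβ₀ hβ₁
    rwa [show 1 + (a - c) / c = a / c by field_simp; ring] at h
  have htangent : a ^ β ≤ c ^ β + β * c ^ (β - 1) * (a - c) := by
    rw [div_rpow (hc.le.trans hca) hc.le, div_le_iff₀ (rpow_pos_of_pos hc β)] at hbernoulli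
    rw [rpow_sub_one hc.ne']
    linarith [show (1 + β * ((a - c) / c)) * c ^ β = c ^ β + β * (c ^ β / c) * (a - c) by ring]
  have hslope : c ^ (β - 1) ≤ R ^ (β - 1) := rpow_le_rpow_of_nonpos hR hRc (by linarith)
  have : β * c ^ (β - 1) * (a - c) ≤ β * R ^ (β - 1) * (a - c) := by
    gcongr
  linarith

lemma abs_rpow_sub_rpow_le {β R a b : ℝ} (hβ₀ : 0 ≤ β) (hβ₁ : β ≤ 1) (hR : 0 < R)
    (ha : R ≤ a) (hb : R ≤ b) :
    |a ^ β - b ^ β| ≤ β * R ^ (β - 1) * |a - b| := by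
  wlog hba : b ≤ a generalizing a b
  · rw [abs_sub_comm, abs_sub_comm a]
    exact this hb ha (le_of_not_ge hba)
  have hmono : b ^ β ≤ a ^ β := rpow_le_rpow (hR.le.trans hb) hba hβ₀
  rw [abs_of_nonneg (sub_nonneg.2 hmono), abs_of_nonneg (sub_nonneg.2 hba)]
  exact rpow_sub_rpow_le_mul_sub hβ₀ hβ₁ hR hb hba

lemma abs_sub_le_of_triangle {G : Type*} {d : G → G → ℝ} (hd_symm : ∀ x y, d x y = d y x)
    (hd_tri : ∀ x y z, d x y ≤ d x z + d z y) (x y z : G) :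
    |d x z - d y z| ≤ d x y := by
  have := hd_tri x z y
  have := hd_tri y z x
  rw [abs_sub_le_iff, hd_symm y x] at *
  constructor <;> linarith

theorem stmt8_general {G : Type*}
    (ω : G → G → ℝ) (d : G → G → ℝ)
    (hd_symm : ∀ x y, d x y = d y x)
    (hd_nonneg : ∀ x y, 0 ≤ d x y)
    (hd_tri : ∀ x y z, d x y ≤ d x z + d z y)
    (s : ℝ) (hs : ∀ x y, 0 < ω x y → d x y ≤ s)
    (x₀ : G) (β R₀ r : ℝ)
    (hβ₀ : 0 < β) (hβ₁ : β ≤ 1) (hR₀ : 0 < R₀) (hr : 2 * s + R₀ ≤ r)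
    (ρ : G → ℝ) (hρ : ∀ x, ρ x = max (d x x₀ ^ β) (r ^ β)) :
    ∀ x y : G, 0 < ω x y → |ρ x - ρ y| ≤ β * R₀ ^ (β - 1) * d x y := by
  intro x y hxy
  have hR₀r : R₀ ≤ r := by linarith [hd_nonneg x y, hs x y hxy]
  have hρ_eq (z : G) : ρ z = max (d z x₀) r ^ β := by
    rw [hρ, rpow_max (hd_nonneg z x₀) (hR₀.le.trans hR₀r) hβ₀.le]
  have hmax : |max (d x x₀) r - max (d y x₀) r| ≤ d x y :=
    (abs_max_sub_max_le_abs _ _ r).trans (abs_sub_le_of_triangle hd_symm hd_tri x y x₀)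
  rw [hρ_eq, hρ_eq]
  calc |max (d x x₀) r ^ β - max (d y x₀) r ^ β|
      ≤ β * R₀ ^ (β - 1) * |max (d x x₀) r - max (d y x₀) r| :=
        abs_rpow_sub_rpow_le hβ₀.le hβ₁ hR₀ (hR₀r.trans (le_max_right _ _))
          (hR₀r.trans (le_max_right _ _))
    _ ≤ β * R₀ ^ (β - 1) * d x y := by gcongr

/-- **Step I of Lemma 5.1.** With `ρ(x) = max{d(x,x₀)^β, r^β}`, `β ∈ (0,1]`,
`R₀ > 0` and `r ≥ 2s + R₀`, one has `|ρ(x) − ρ(y)| ≤ β R₀^{β−1} d(x,y)`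
whenever `x ∼ y`. -/
theorem stmt8 {G : Type*} [Countable G] [Infinite G]
    (μ : G → ℝ) (ω : G → G → ℝ) (d : G → G → ℝ)
    (hμ : ∀ x, 0 < μ x)
    (hω_symm : ∀ x y, ω x y = ω y x)
    (hω_diag : ∀ x, ω x x = 0)
    (hω_nonneg : ∀ x y, 0 ≤ ω x y)
    (hω_sum : ∀ x, Summable fun y => ω x y)
    (hd_symm : ∀ x y, d x y = d y x)
    (hd_diag : ∀ x, d x x = 0)
    (hd_nonneg : ∀ x y, 0 ≤ d x y)
    (hd_tri : ∀ x y z, d x y ≤ d x z + d z y)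
    (s : ℝ) (hs : ∀ x y, 0 < ω x y → d x y ≤ s)
    (x₀ : G) (β R₀ r : ℝ)
    (hβ₀ : 0 < β) (hβ₁ : β ≤ 1) (hR₀ : 0 < R₀) (hr : 2 * s + R₀ ≤ r)
    (ρ : G → ℝ) (hρ : ∀ x, ρ x = max (d x x₀ ^ β) (r ^ β)) :
    ∀ x y : G, 0 < ω x y → |ρ x - ρ y| ≤ β * R₀ ^ (β - 1) * d x y :=
  stmt8_general ω d hd_symm hd_nonneg hd_tri s hs x₀ β R₀ r hβ₀ hβ₁ hR₀ hr ρ hρ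
end

section
/- Let (G, ω, μ) be a connected, locally finite weighted graph with a pseudo metric d of finite jump size whose balls are finite sets, and let V : G → ℝ with V(x) > 0 for all x ∈ G. Fix x₀ ∈ G and R̂ > 0, and suppose there exists h : G → ℝ with h(x) > 0 for all x ∈ G \ B_{R̂}(x₀), Δh(x) ≤ −V(x) for all x ∈ G \ B_{R̂}(x₀), and h(x) → 0 as d(x,x₀) → ∞. Then for every γ > 0 there exists a bounded function u : G → ℝ with Δu(x) − V(x)u(x) = 0 for all x ∈ G and u(x) → γ as d(x,x₀) → ∞ (i.e., for every ε > 0 there is R > 0 such that |u(x) − γ| ≤ ε whenever d(x,x₀) > R). In particular, there exist infinitely many bounded solutions of Δu − Vu = 0 on G. -/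
/-!
With `L = μ (V - Δ)` and `V > 0`, a minimum at a negative value is impossible where `L ≥ 0`,
which gives a comparison principle on finite sets. Hence the Dirichlet problem `L u = 0` on a
finite set `F`, `u = γ` off `F`, is uniquely solvable (an injective endomorphism of `ℝ^F` is
onto), its solution lies in `[0, γ]`, and it decreases as `F` grows. Along the balls
`B_n(x₀)` the solutions decrease to a solution `u` with `0 ≤ u ≤ γ`. Outside `B_{R̂+s}(x₀)`
the supersolution gives the barrier `γ - C h ≤ u`, so `u → γ` at infinity since `h → 0`.
Different `γ` give different limits, hence different solutions.
-/

open Finset Filter Topology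

namespace WeightedGraph

variable {G : Type*} {ω : G → G → ℝ} (hloc : ∀ x, {y | 0 < ω x y}.Finite)

noncomputable def neighbors (x : G) : Finset G := (hloc x).toFinset

/-- The operator `q - μΔ`, where `μΔ f x = ∑ ω x y (f y - f x)`; for `q = μ * V` its kernel is
the solution set of `Δu - Vu = 0`. -/
noncomputable def schrodingerOp (q : G → ℝ) : (G → ℝ) →ₗ[ℝ] G → ℝ where
  toFun f x := q x * f x + ∑ y ∈ neighbors hloc x, ω x y * (f x - f y)
  map_add' f g := by
    ext x
    simp only [Pi.add_apply, mul_add, add_sub_add_comm, sum_add_distrib]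
    ring
  map_smul' c f := by
    ext x
    simp only [Pi.smul_apply, smul_eq_mul, RingHom.id_apply, ← mul_sub, mul_left_comm _ c,
      ← mul_sum]
    ring

variable {hloc} {q : G → ℝ}

lemma mem_neighbors {x y : G} : y ∈ neighbors hloc x ↔ 0 < ω x y := Set.Finite.mem_toFinset _

lemma schrodingerOp_apply (f : G → ℝ) (x : G) :
    schrodingerOp hloc q f x = q x * f x + ∑ y ∈ neighbors hloc x, ω x y * (f x - f y) := rfl

lemma schrodingerOp_const (c : ℝ) (x : G) : schrodingerOp hloc q (fun _ => c) x = q x * c := by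
  simp [schrodingerOp_apply]

lemma schrodingerOp_eq_sub_tsum (hω : ∀ x y, 0 ≤ ω x y) (f : G → ℝ) (x : G) :
    schrodingerOp hloc q f x = q x * f x - ∑' y, ω x y * (f y - f x) := by
  rw [tsum_eq_sum (s := neighbors hloc x), schrodingerOp_apply, sub_eq_add_neg, ← sum_neg_distrib]
  · simp only [neg_mul_eq_mul_neg, neg_sub]
  · intro y hy
    rw [mem_neighbors, not_lt] at hy
    rw [le_antisymm hy (hω x y), zero_mul]

lemma schrodingerOp_mul_apply {μ V : G → ℝ} {x : G} (hμ : μ x ≠ 0) (hω : ∀ x y, 0 ≤ ω x y)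
    (f : G → ℝ) : schrodingerOp hloc (μ * V) f x =
      μ x * (V x * f x - (μ x)⁻¹ * ∑' y, ω x y * (f y - f x)) := by
  rw [schrodingerOp_eq_sub_tsum hω, Pi.mul_apply, mul_sub, mul_inv_cancel_left₀ hμ, mul_assoc]

lemma continuous_schrodingerOp_apply (x : G) :
    Continuous fun f : G → ℝ => schrodingerOp hloc q f x := by
  simp only [schrodingerOp_apply]
  fun_prop

lemma schrodingerOp_le_mul_of_forall_le {u : G → ℝ} {x : G}
    (hx : ∀ y ∈ neighbors hloc x, u x ≤ u y) : schrodingerOp hloc q u x ≤ q x * u x := by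
  rw [schrodingerOp_apply, add_le_iff_nonpos_right]
  exact sum_nonpos fun y hy =>
    mul_nonpos_of_nonneg_of_nonpos (mem_neighbors.1 hy).le (sub_nonpos.2 (hx y hy))

lemma mul_le_schrodingerOp_of_forall_le {u : G → ℝ} {x : G}
    (hx : ∀ y ∈ neighbors hloc x, u y ≤ u x) : q x * u x ≤ schrodingerOp hloc q u x := by
  rw [schrodingerOp_apply, le_add_iff_nonneg_right]
  exact sum_nonneg fun y hy => mul_nonneg (mem_neighbors.1 hy).le (sub_nonneg.2 (hx y hy))

theorem le_on_of_schrodingerOp_le (hq : ∀ x, 0 < q x) {F : Finset G} {u v : G → ℝ}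
    (hL : ∀ x ∈ F, schrodingerOp hloc q v x ≤ schrodingerOp hloc q u x)
    (hbd : ∀ x ∈ F, ∀ y ∈ neighbors hloc x, y ∉ F → v y ≤ u y) :
    ∀ x ∈ F, v x ≤ u x := by
  by_contra! ⟨x, hxF, hx⟩
  set w := u - v
  obtain ⟨z, hzF, hz⟩ := F.exists_min_image w ⟨x, hxF⟩
  have hwz : w z < 0 := (hz x hxF).trans_lt (sub_neg.2 hx)
  have hmin : ∀ y ∈ neighbors hloc z, w z ≤ w y := fun y hy => by
    by_cases hyF : y ∈ F
    · exact hz y hyF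
    · exact hwz.le.trans (sub_nonneg.2 (hbd z hzF y hy hyF))
  have hLw : 0 ≤ schrodingerOp hloc q w z := by
    simpa only [w, map_sub, Pi.sub_apply, sub_nonneg] using hL z hzF
  linarith [schrodingerOp_le_mul_of_forall_le (q := q) hmin, mul_neg_of_pos_of_neg (hq z) hwz]

theorem le_of_schrodingerOp_le (hq : ∀ x, 0 < q x) {F : Finset G} {u v : G → ℝ}
    (hL : ∀ x ∈ F, schrodingerOp hloc q v x ≤ schrodingerOp hloc q u x)
    (hout : ∀ x ∉ F, v x ≤ u x) (x : G) : v x ≤ u x := by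
  by_cases hx : x ∈ F
  · exact le_on_of_schrodingerOp_le hq hL (fun _ _ y _ hy => hout y hy) x hx
  · exact hout x hx

variable (hloc q) in
def IsDirichletSolution (F : Finset G) (g u : G → ℝ) : Prop :=
  (∀ x ∈ F, schrodingerOp hloc q u x = 0) ∧ ∀ x ∉ F, u x = g x

namespace IsDirichletSolution

variable {F : Finset G} {g u v : G → ℝ}

theorem eq (hq : ∀ x, 0 < q x) (hu : IsDirichletSolution hloc q F g u)
    (hv : IsDirichletSolution hloc q F g v) : u = v := by
  have hle : ∀ {u v : G → ℝ}, IsDirichletSolution hloc q F g u →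
      IsDirichletSolution hloc q F g v → ∀ x, u x ≤ v x := fun hu hv =>
    le_of_schrodingerOp_le hq (fun y hy => by rw [hu.1 y hy, hv.1 y hy])
      (fun y hy => by rw [hu.2 y hy, hv.2 y hy])
  exact funext fun x => (hle hu hv x).antisymm (hle hv hu x)

theorem nonneg (hq : ∀ x, 0 < q x) (hu : IsDirichletSolution hloc q F g u) (hg : 0 ≤ g) (x : G) :
    0 ≤ u x :=
  le_of_schrodingerOp_le (hloc := hloc) (F := F) (v := 0) hq (fun y hy => by simp [hu.1 y hy])
    (fun y hy => by simpa [hu.2 y hy] using hg y) x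

theorem le_const (hq : ∀ x, 0 < q x) (hu : IsDirichletSolution hloc q F g u) {γ : ℝ}
    (hγ : 0 ≤ γ) (hg : ∀ x, g x ≤ γ) (x : G) : u x ≤ γ :=
  le_of_schrodingerOp_le (u := fun _ => γ) hq
    (fun y hy => by rw [hu.1 y hy, schrodingerOp_const]; exact mul_nonneg (hq y).le hγ)
    (fun y hy => by simpa [hu.2 y hy] using hg y) x

theorem schrodingerOp_nonneg (hq : ∀ x, 0 < q x) {γ : ℝ} (hγ : 0 ≤ γ)
    (hu : IsDirichletSolution hloc q F (fun _ => γ) u) (x : G) :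
    0 ≤ schrodingerOp hloc q u x := by
  by_cases hx : x ∈ F
  · exact (hu.1 x hx).ge
  · have hmax : ∀ y ∈ neighbors hloc x, u y ≤ u x := fun y _ => by
      rw [hu.2 x hx]; exact hu.le_const hq hγ (fun _ => le_rfl) y
    refine (mul_nonneg (hq x).le ?_).trans (mul_le_schrodingerOp_of_forall_le hmax)
    rw [hu.2 x hx]; exact hγ

theorem antitone (hq : ∀ x, 0 < q x) {γ : ℝ} (hγ : 0 ≤ γ) {F₁ F₂ : Finset G} (hF : F₁ ⊆ F₂)
    {u₁ u₂ : G → ℝ} (hu₁ : IsDirichletSolution hloc q F₁ (fun _ => γ) u₁)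
    (hu₂ : IsDirichletSolution hloc q F₂ (fun _ => γ) u₂) (x : G) : u₂ x ≤ u₁ x :=
  le_of_schrodingerOp_le hq (fun y hy => by rw [hu₂.1 y hy]; exact hu₁.schrodingerOp_nonneg hq hγ y)
    (fun y hy => by rw [hu₂.2 y hy, hu₁.2 y (fun h => hy (hF h))]) x

theorem le_of_subsolution (hq : ∀ x, 0 < q x) (hu : IsDirichletSolution hloc q F g u)
    {Ω : Set G} {b : G → ℝ} (hb : ∀ x ∈ Ω, schrodingerOp hloc q b x ≤ 0)
    (hbd : ∀ x ∈ Ω, ∀ y ∈ neighbors hloc x, y ∉ Ω → b y ≤ u y)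
    (hg : ∀ x ∈ Ω, x ∉ F → b x ≤ g x) : ∀ x ∈ Ω, b x ≤ u x := by
  classical
  have hA := le_on_of_schrodingerOp_le hq (F := F.filter (· ∈ Ω)) (u := u) (v := b)
    (fun x hx => by
      obtain ⟨hxF, hxΩ⟩ := mem_filter.1 hx
      rw [hu.1 x hxF]; exact hb x hxΩ)
    (fun x hx y hy hyA => by
      by_cases hyΩ : y ∈ Ω
      · have hyF : y ∉ F := fun hyF => hyA (mem_filter.2 ⟨hyF, hyΩ⟩)
        rw [hu.2 y hyF]; exact hg y hyΩ hyF
      · exact hbd x (mem_filter.1 hx).2 y hy hyΩ)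
  intro x hx
  by_cases hxF : x ∈ F
  · exact hA x (mem_filter.2 ⟨hxF, hx⟩)
  · rw [hu.2 x hxF]; exact hg x hx hxF

theorem schrodingerOp_iInf_eq_zero (hq : ∀ x, 0 < q x) {γ : ℝ} (hγ : 0 ≤ γ)
    {F : ℕ → Finset G} (hF : Monotone F) (hcover : ∀ x, ∃ n, x ∈ F n) {U : ℕ → G → ℝ}
    (hU : ∀ n, IsDirichletSolution hloc q (F n) (fun _ => γ) (U n)) (x : G) :
    schrodingerOp hloc q (fun y => ⨅ n, U n y) x = 0 := by
  have hlim : Tendsto U atTop (𝓝 fun y => ⨅ n, U n y) :=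
    tendsto_pi_nhds.2 fun y => tendsto_atTop_ciInf
      (fun m n hmn => (hU m).antitone hq hγ (hF hmn) (hU n) y)
      ⟨0, by rintro _ ⟨n, rfl⟩; exact (hU n).nonneg hq (fun _ => hγ) y⟩
  obtain ⟨n₀, hn₀⟩ := hcover x
  refine tendsto_nhds_unique (((continuous_schrodingerOp_apply x).tendsto _).comp hlim)
    (tendsto_const_nhds.congr' ?_)
  filter_upwards [eventually_ge_atTop n₀] with n hn using ((hU n).1 x (hF hn hn₀)).symm

end IsDirichletSolution

theorem exists_isDirichletSolution (hq : ∀ x, 0 < q x) (F : Finset G) (g : G → ℝ) :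
    ∃ u, IsDirichletSolution hloc q F g u := by
  let E := Function.ExtendByZero.linearMap ℝ ((↑) : F → G)
  let T := LinearMap.funLeft ℝ ℝ ((↑) : F → G) ∘ₗ schrodingerOp hloc q ∘ₗ E
  have hE : ∀ v, ∀ x ∉ F, E v x = 0 := fun v x hx =>
    Function.extend_apply' _ _ _ (by simpa using hx)
  have hT : Function.Injective T := by
    refine (injective_iff_map_eq_zero T).2 fun v hv => ?_
    have hEv : E v = 0 := IsDirichletSolution.eq (F := F) (g := 0) hq
      ⟨fun x hx => by simpa [T] using congrFun hv ⟨x, hx⟩, hE v⟩ ⟨by simp, by simp⟩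
    exact Function.extend_injective Subtype.val_injective (0 : G → ℝ)
      (show E v = E 0 by rw [hEv, map_zero])
  obtain ⟨v, hv⟩ := LinearMap.injective_iff_surjective.1 hT
    (-LinearMap.funLeft ℝ ℝ ((↑) : F → G) (schrodingerOp hloc q g))
  refine ⟨g + E v, fun x hx => ?_, fun x hx => by simp [hE v x hx]⟩
  have hvx := congrFun hv ⟨x, hx⟩
  simp only [T, LinearMap.comp_apply, LinearMap.funLeft_apply, Pi.neg_apply] at hvx
  rw [map_add, Pi.add_apply, hvx, add_neg_cancel]

lemma tendsto_comap_atTop_nhds_iff {f u : G → ℝ} {a : ℝ} :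
    Tendsto u (comap f atTop) (𝓝 a) ↔ ∀ ε > 0, ∃ R > 0, ∀ x, R < f x → |u x - a| ≤ ε := by
  rw [((atTop_basis_Ioi' 0).comap f).tendsto_iff Metric.nhds_basis_closedBall]
  simp [Real.dist_eq]

lemma comap_atTop_neBot [Infinite G] {f : G → ℝ} (hf : ∀ r, {x | f x < r}.Finite) :
    (comap f atTop).NeBot :=
  comap_neBot fun t ht => by
    obtain ⟨r, hr⟩ := mem_atTop_sets.1 ht
    obtain ⟨x, hx⟩ := (hf r).infinite_compl.nonempty
    exact ⟨x, hr _ (not_lt.1 hx)⟩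

/-- Since `s` bounds the jumps of `f` along edges, the outer boundary of `{R + s ≤ f}` lies in
the finite annulus `{R ≤ f < R + s}`; `C` is chosen so that the barrier `γ - C h` is `≤ 0` there. -/
theorem exists_sub_mul_le_of_supersolution (hq : ∀ x, 0 < q x) {f h : G → ℝ} {R s γ : ℝ}
    (hs : 0 ≤ s) (hjump : ∀ x y, 0 < ω x y → f x ≤ f y + s) (hball : {x | f x < R + s}.Finite)
    (hpos : ∀ x, R ≤ f x → 0 < h x) (hsuper : ∀ x, R ≤ f x → q x ≤ schrodingerOp hloc q h x)
    (hγ : 0 ≤ γ) :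
    ∃ C, ∀ (F : Finset G) (u : G → ℝ), IsDirichletSolution hloc q F (fun _ => γ) u →
      ∀ x, R + s ≤ f x → γ - C * h x ≤ u x := by
  obtain ⟨C₀, hC₀⟩ := ((hball.subset fun x (hx : x ∈ {x | f x < R + s ∧ R ≤ f x}) => hx.1).image
    fun x => γ / h x).bddAbove
  set C := max C₀ γ
  have hannulus : ∀ x, R ≤ f x → f x < R + s → γ - C * h x ≤ 0 := fun x hR hRs => by
    have := (div_le_iff₀ (hpos x hR)).1 (hC₀ ⟨x, ⟨hRs, hR⟩, rfl⟩)
    nlinarith [le_max_left C₀ γ, hpos x hR]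
  refine ⟨C, fun F u hu => hu.le_of_subsolution hq (Ω := {x | R + s ≤ f x}) ?_ ?_ ?_⟩
  · intro x hx
    have hb : (fun y => γ - C * h y) = (fun _ => γ) - C • h := rfl
    rw [hb, map_sub, map_smul, Pi.sub_apply, Pi.smul_apply, schrodingerOp_const, smul_eq_mul]
    nlinarith [hsuper x (by linarith [hx.out]), le_max_right C₀ γ, hq x]
  · intro x hx y hy hyΩ
    have hR : R ≤ f y := by linarith [hjump x y (mem_neighbors.1 hy), hx.out]
    exact (hannulus y hR (not_le.1 hyΩ)).trans (hu.nonneg hq (fun _ => hγ) y)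
  · intro x hx _
    have : 0 < h x := hpos x (by linarith [hx.out])
    nlinarith [le_max_right C₀ γ]

theorem exists_solution_tendsto_of_supersolution (hq : ∀ x, 0 < q x) {f h : G → ℝ} {R s γ : ℝ}
    (hs : 0 ≤ s) (hjump : ∀ x y, 0 < ω x y → f x ≤ f y + s) (hballs : ∀ r, {x | f x < r}.Finite)
    (hpos : ∀ x, R ≤ f x → 0 < h x) (hsuper : ∀ x, R ≤ f x → q x ≤ schrodingerOp hloc q h x)
    (hh : Tendsto h (comap f atTop) (𝓝 0)) (hγ : 0 ≤ γ) :
    ∃ u : G → ℝ, (∀ x, 0 ≤ u x ∧ u x ≤ γ) ∧ (∀ x, schrodingerOp hloc q u x = 0) ∧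
      Tendsto u (comap f atTop) (𝓝 γ) := by
  let F (n : ℕ) : Finset G := (hballs n).toFinset
  have hF : Monotone F := fun m n hmn x => by
    simpa [F] using fun hx : f x < m => hx.trans_le (Nat.cast_le.2 hmn)
  have hcover : ∀ x, ∃ n, x ∈ F n := fun x => by simpa [F] using exists_nat_gt (f x)
  choose U hU using fun n => exists_isDirichletSolution (hloc := hloc) hq (F n) fun _ => γ
  obtain ⟨C, hC⟩ := exists_sub_mul_le_of_supersolution hq hs hjump (hballs _) hpos hsuper hγ
  have hbdd : ∀ x, BddBelow (Set.range fun n => U n x) := fun x =>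
    ⟨0, by rintro _ ⟨n, rfl⟩; exact (hU n).nonneg hq (fun _ => hγ) x⟩
  have hle : ∀ x, (⨅ n, U n x) ≤ γ := fun x =>
    (ciInf_le (hbdd x) 0).trans ((hU 0).le_const hq hγ (fun _ => le_rfl) x)
  refine ⟨fun x => ⨅ n, U n x,
    fun x => ⟨le_ciInf fun n => (hU n).nonneg hq (fun _ => hγ) x, hle x⟩,
    IsDirichletSolution.schrodingerOp_iInf_eq_zero hq hγ hF hcover hU, ?_⟩
  refine tendsto_of_tendsto_of_tendsto_of_le_of_le' (g := fun x => γ - C * h x)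
    (by simpa using (hh.const_mul C).const_sub γ) tendsto_const_nhds ?_ (.of_forall hle)
  filter_upwards [tendsto_comap.eventually (eventually_ge_atTop (R + s))] with x hx
  exact le_ciInf fun n => hC _ _ (hU n) x hx

end WeightedGraph

open WeightedGraph

theorem stmt11_general {G : Type*} [Infinite G]
    (μ : G → ℝ) (ω : G → G → ℝ) (d : G → G → ℝ)
    (hμ : ∀ x, 0 < μ x)
    (hω_nonneg : ∀ x y, 0 ≤ ω x y)
    (hloc : ∀ x : G, {y : G | 0 < ω x y}.Finite)
    (hd_tri : ∀ x y z, d x y ≤ d x z + d z y)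
    (s : ℝ) (hs : ∀ x y, 0 < ω x y → d x y ≤ s)
    (hballs : ∀ (x : G) (r : ℝ), {y : G | d y x < r}.Finite)
    (V : G → ℝ) (hV : ∀ x, 0 < V x)
    (x₀ : G) (Rhat : ℝ)
    (h : G → ℝ)
    (hpos : ∀ x : G, Rhat ≤ d x x₀ → 0 < h x)
    (hsuper : ∀ x : G, Rhat ≤ d x x₀ →
      (μ x)⁻¹ * (∑' y, ω x y * (h y - h x)) ≤ -V x)
    (hlim : ∀ ε > (0 : ℝ), ∃ R : ℝ, ∀ x : G, R < d x x₀ → |h x| ≤ ε) :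
    (∀ γ : ℝ, 0 < γ → ∃ u : G → ℝ,
      (∃ C : ℝ, ∀ x, |u x| ≤ C) ∧
      (∀ x : G, (μ x)⁻¹ * (∑' y, ω x y * (u y - u x)) - V x * u x = 0) ∧
      (∀ ε > (0 : ℝ), ∃ R > (0 : ℝ), ∀ x : G, R < d x x₀ → |u x - γ| ≤ ε)) ∧
    {u : G → ℝ | (∃ C : ℝ, ∀ x, |u x| ≤ C) ∧
      ∀ x : G, (μ x)⁻¹ * (∑' y, ω x y * (u y - u x)) - V x * u x = 0}.Infinite := by
  have hq : ∀ x, 0 < (μ * V) x := fun x => mul_pos (hμ x) (hV x)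
  have hsuperL : ∀ x, Rhat ≤ d x x₀ → (μ * V) x ≤ schrodingerOp hloc (μ * V) h x :=
    fun x hx => by
      rw [schrodingerOp_mul_apply (hμ x).ne' hω_nonneg, Pi.mul_apply]
      exact mul_le_mul_of_nonneg_left (by nlinarith [hsuper x hx, hV x, hpos x hx]) (hμ x).le
  have hh : Tendsto h (comap (fun x => d x x₀) atTop) (𝓝 0) :=
    ((atTop_basis_Ioi.comap _).tendsto_iff Metric.nhds_basis_closedBall).2 fun ε hε => by
      simpa [Real.dist_eq] using hlim ε hε
  have key : ∀ γ : ℝ, 0 < γ → ∃ u : G → ℝ, ((∃ C : ℝ, ∀ x, |u x| ≤ C) ∧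
      ∀ x, (μ x)⁻¹ * (∑' y, ω x y * (u y - u x)) - V x * u x = 0) ∧
      Tendsto u (comap (fun x => d x x₀) atTop) (𝓝 γ) := fun γ hγ => by
    obtain ⟨u, hb, hu, ht⟩ := exists_solution_tendsto_of_supersolution hq (le_max_right s 0)
      (fun x y hxy => by linarith [hd_tri x x₀ y, hs x y hxy, le_max_left s 0]) (hballs x₀)
      hpos hsuperL hh hγ.le
    refine ⟨u, ⟨⟨γ, fun x => abs_le.2 ⟨by linarith [(hb x).1], (hb x).2⟩⟩, fun x => ?_⟩, ht⟩
    have hux := hu x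
    rw [schrodingerOp_mul_apply (hμ x).ne' hω_nonneg] at hux
    linarith [(mul_eq_zero.1 hux).resolve_left (hμ x).ne']
  refine ⟨fun γ hγ => ?_, ?_⟩
  · obtain ⟨u, hu, ht⟩ := key γ hγ
    exact ⟨u, hu.1, hu.2, tendsto_comap_atTop_nhds_iff.1 ht⟩
  · have := comap_atTop_neBot (hballs x₀)
    choose u hu ht using fun n : ℕ => key (n + 1) n.cast_add_one_pos
    refine Set.infinite_of_injective_forall_mem (fun m n hmn => ?_) hu
    exact_mod_cast add_right_cancel (tendsto_nhds_unique (ht m) (hmn ▸ ht n))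

/-- **Proposition 7.1** (general non-uniqueness criterium). If there is a positive
supersolution `h` of `Δh ≤ −V` outside a ball, with `h → 0` at infinity, then for
every `γ > 0` there is a bounded solution `u` of `Δu − Vu = 0` with `u → γ` at
infinity; in particular there are infinitely many bounded solutions. -/
theorem stmt11 {G : Type*} [Countable G] [Infinite G]
    (μ : G → ℝ) (ω : G → G → ℝ) (d : G → G → ℝ)
    (hμ : ∀ x, 0 < μ x)
    (hω_symm : ∀ x y, ω x y = ω y x)
    (hω_diag : ∀ x, ω x x = 0)
    (hω_nonneg : ∀ x y, 0 ≤ ω x y)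
    (hω_sum : ∀ x, Summable fun y => ω x y)
    (hloc : ∀ x : G, {y : G | 0 < ω x y}.Finite)
    (hconn : ∀ x y : G, x ≠ y → ∃ (n : ℕ) (p : ℕ → G),
      p 0 = x ∧ p n = y ∧ ∀ i < n, 0 < ω (p i) (p (i + 1)))
    (hd_symm : ∀ x y, d x y = d y x)
    (hd_diag : ∀ x, d x x = 0)
    (hd_nonneg : ∀ x y, 0 ≤ d x y)
    (hd_tri : ∀ x y z, d x y ≤ d x z + d z y)
    (s : ℝ) (hs : ∀ x y, 0 < ω x y → d x y ≤ s)
    (hballs : ∀ (x : G) (r : ℝ), {y : G | d y x < r}.Finite)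
    (V : G → ℝ) (hV : ∀ x, 0 < V x)
    (x₀ : G) (Rhat : ℝ) (hRhat : 0 < Rhat)
    (h : G → ℝ)
    (hpos : ∀ x : G, Rhat ≤ d x x₀ → 0 < h x)
    (hsuper : ∀ x : G, Rhat ≤ d x x₀ →
      (μ x)⁻¹ * (∑' y, ω x y * (h y - h x)) ≤ -V x)
    (hlim : ∀ ε > (0 : ℝ), ∃ R : ℝ, ∀ x : G, R < d x x₀ → |h x| ≤ ε) :
    (∀ γ : ℝ, 0 < γ → ∃ u : G → ℝ,
      (∃ C : ℝ, ∀ x, |u x| ≤ C) ∧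
      (∀ x : G, (μ x)⁻¹ * (∑' y, ω x y * (u y - u x)) - V x * u x = 0) ∧
      (∀ ε > (0 : ℝ), ∃ R > (0 : ℝ), ∀ x : G, R < d x x₀ → |u x - γ| ≤ ε)) ∧
    {u : G → ℝ | (∃ C : ℝ, ∀ x, |u x| ≤ C) ∧
      ∀ x : G, (μ x)⁻¹ * (∑' y, ω x y * (u y - u x)) - V x * u x = 0}.Infinite :=
  stmt11_general μ ω d hμ hω_nonneg hloc hd_tri s hs hballs V hV x₀ Rhat h hpos hsuper hlim
end

section
/- Let (G, ω, μ) be a connected, locally finite weighted graph with a pseudo metric d whose balls are finite sets, let x₀ ∈ G, let V : G → ℝ with V > 0 on G, and let γ > 0. For each j ∈ ℕ let u_j : G → ℝ be the unique function with Δu_j(x) − V(x)u_j(x) = 0 for all x ∈ B_j(x₀) and u_j(x) = γ for all x ∈ G \ B_j(x₀). Then for every j ∈ ℕ one has 0 ≤ u_j(x) ≤ γ and u_{j+1}(x) ≤ u_j(x) for all x ∈ G. -/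
/-!
Everything follows from the weak maximum principle for `Δ − V` with `V > 0` on a finite set `S`:
at a positive global maximum `z ∈ S` of `f` one has `Δf(z) ≤ 0 < V(z) f(z)`, so `f` cannot be a
subsolution there. Applied to `u_j − γ` and `−u_j` this gives `0 ≤ u_j ≤ γ`; applied to
`u_{j+1} − u_j` on `B_j(x₀)`, where both functions solve the equation and outside of which
`u_{j+1} ≤ γ = u_j`, it gives monotonicity.
-/

open Set

noncomputable section

variable {G : Type*} {ω : G → G → ℝ} {μ V : G → ℝ}

def laplacian (ω : G → G → ℝ) (μ : G → ℝ) (f : G → ℝ) (x : G) : ℝ :=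
  (μ x)⁻¹ * ∑' y, ω x y * (f y - f x)

structure IsDirichletSolution (ω : G → G → ℝ) (μ V : G → ℝ) (S : Set G) (γ : ℝ)
    (f : G → ℝ) : Prop where
  eq_on : ∀ x ∈ S, laplacian ω μ f x - V x * f x = 0
  eq_off : ∀ x ∉ S, f x = γ

theorem laplacian_nonpos_of_forall_le (hω : ∀ x y, 0 ≤ ω x y) {z : G} (hμ : 0 ≤ μ z)
    {f : G → ℝ} (hz : ∀ y, f y ≤ f z) : laplacian ω μ f z ≤ 0 :=
  mul_nonpos_of_nonneg_of_nonpos (inv_nonneg.mpr hμ) <|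
    tsum_nonpos fun y => mul_nonpos_of_nonneg_of_nonpos (hω z y) (sub_nonpos.mpr (hz y))

theorem laplacian_sub_const (f : G → ℝ) (c : ℝ) :
    laplacian ω μ (fun x => f x - c) = laplacian ω μ f := by
  ext x
  simp only [laplacian, sub_sub_sub_cancel_right]

theorem laplacian_neg (f : G → ℝ) : laplacian ω μ (-f) = -laplacian ω μ f := by
  ext x
  simp only [laplacian, Pi.neg_apply, neg_sub_neg, ← neg_sub (f _) (f x), mul_neg, tsum_neg]

theorem laplacian_sub {f g : G → ℝ} {x : G}
    (hf : Summable fun y => ω x y * (f y - f x)) (hg : Summable fun y => ω x y * (g y - g x)) :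
    laplacian ω μ (f - g) x = laplacian ω μ f x - laplacian ω μ g x := by
  simp only [laplacian, Pi.sub_apply, ← mul_sub, ← hf.tsum_sub hg]
  congr 1
  exact tsum_congr fun y => by ring

theorem summable_mul_sub_of_finite_range (hω : ∀ x y, 0 ≤ ω x y) {x : G}
    (hω_sum : Summable (ω x)) {f : G → ℝ} (hf : (range f).Finite) :
    Summable fun y => ω x y * (f y - f x) := by
  obtain ⟨C, hC⟩ := (hf.image fun t => |t - f x|).bddAbove
  refine Summable.of_norm_bounded (hω_sum.mul_right C) fun y => ?_
  rw [Real.norm_eq_abs, abs_mul, abs_of_nonneg (hω x y)]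
  exact mul_le_mul_of_nonneg_left (hC ⟨f y, mem_range_self y, rfl⟩) (hω x y)

theorem finite_range_of_eq_off_finite {S : Set G} (hS : S.Finite) {f : G → ℝ} {γ : ℝ}
    (hf : ∀ x ∉ S, f x = γ) : (range f).Finite := by
  refine ((hS.image f).insert γ).subset ?_
  rintro _ ⟨x, rfl⟩
  by_cases hx : x ∈ S
  · exact mem_insert_of_mem _ (mem_image_of_mem f hx)
  · exact hf x hx ▸ mem_insert _ _

theorem nonpos_of_laplacian_sub_mul_nonneg (hω : ∀ x y, 0 ≤ ω x y) (hμ : ∀ x, 0 ≤ μ x)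
    (hV : ∀ x, 0 < V x) {S : Set G} (hS : S.Finite) {f : G → ℝ} (hout : ∀ x ∉ S, f x ≤ 0)
    (hsub : ∀ x ∈ S, 0 ≤ laplacian ω μ f x - V x * f x) (x : G) : f x ≤ 0 := by
  by_contra! hx
  have hxS : x ∈ S := by_contra fun h => (hout x h).not_gt hx
  obtain ⟨z, hzS, hz⟩ := exists_max_image S f hS ⟨x, hxS⟩
  have hfz : 0 < f z := hx.trans_le (hz x hxS)
  have hmax (y : G) : f y ≤ f z := by
    by_cases hy : y ∈ S
    exacts [hz y hy, (hout y hy).trans hfz.le]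
  have hΔ := laplacian_nonpos_of_forall_le hω (hμ z) hmax
  linarith [hsub z hzS, mul_pos (hV z) hfz]

namespace IsDirichletSolution

variable {S : Set G} {γ : ℝ} {f : G → ℝ}

theorem summable (h : IsDirichletSolution ω μ V S γ f) (hω : ∀ x y, 0 ≤ ω x y)
    (hω_sum : ∀ x, Summable (ω x)) (hS : S.Finite) (x : G) :
    Summable fun y => ω x y * (f y - f x) :=
  summable_mul_sub_of_finite_range hω (hω_sum x) (finite_range_of_eq_off_finite hS h.eq_off)

theorem le (h : IsDirichletSolution ω μ V S γ f) (hω : ∀ x y, 0 ≤ ω x y) (hμ : ∀ x, 0 ≤ μ x)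
    (hV : ∀ x, 0 < V x) (hS : S.Finite) (hγ : 0 ≤ γ) (x : G) : f x ≤ γ := by
  refine sub_nonpos.mp <| nonpos_of_laplacian_sub_mul_nonneg (f := fun x => f x - γ) hω hμ hV hS
    (fun x hx => by simp [h.eq_off x hx]) (fun x hx => ?_) x
  rw [laplacian_sub_const]
  linarith [h.eq_on x hx, mul_nonneg (hV x).le hγ]

theorem nonneg (h : IsDirichletSolution ω μ V S γ f) (hω : ∀ x y, 0 ≤ ω x y)
    (hμ : ∀ x, 0 ≤ μ x) (hV : ∀ x, 0 < V x) (hS : S.Finite) (hγ : 0 ≤ γ) (x : G) : 0 ≤ f x := by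
  refine neg_nonpos.mp <| nonpos_of_laplacian_sub_mul_nonneg (f := -f) hω hμ hV hS
    (fun x hx => by simp [h.eq_off x hx, hγ]) (fun x hx => ?_) x
  rw [laplacian_neg, Pi.neg_apply, Pi.neg_apply]
  linarith [h.eq_on x hx]

theorem antitone_domain {T : Set G} {g : G → ℝ} (hf : IsDirichletSolution ω μ V S γ f)
    (hg : IsDirichletSolution ω μ V T γ g) (hST : S ⊆ T) (hω : ∀ x y, 0 ≤ ω x y)
    (hω_sum : ∀ x, Summable (ω x)) (hμ : ∀ x, 0 ≤ μ x) (hV : ∀ x, 0 < V x) (hS : S.Finite)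
    (hT : T.Finite) (hγ : 0 ≤ γ) (x : G) : g x ≤ f x := by
  refine sub_nonpos.mp <| nonpos_of_laplacian_sub_mul_nonneg (f := g - f) hω hμ hV hS
    (fun x hx => ?_) (fun x hx => ?_) x
  · simpa [hf.eq_off x hx] using hg.le hω hμ hV hT hγ x
  · rw [laplacian_sub (hg.summable hω hω_sum hT x) (hf.summable hω hω_sum hS x), Pi.sub_apply]
    linarith [hf.eq_on x hx, hg.eq_on x (hST hx)]

end IsDirichletSolution

end

theorem stmt13_general {G : Type*}
    (μ : G → ℝ) (ω : G → G → ℝ) (d : G → G → ℝ)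
    (hμ : ∀ x, 0 < μ x)
    (hω_nonneg : ∀ x y, 0 ≤ ω x y)
    (hω_sum : ∀ x, Summable fun y => ω x y)
    (hballs : ∀ (x : G) (r : ℝ), {y : G | d y x < r}.Finite)
    (V : G → ℝ) (hV : ∀ x, 0 < V x)
    (x₀ : G) (γ : ℝ) (hγ : 0 < γ)
    (u : ℕ → G → ℝ)
    (hu_eq : ∀ (j : ℕ) (x : G), d x x₀ < (j : ℝ) →
      (μ x)⁻¹ * (∑' y, ω x y * (u j y - u j x)) - V x * u j x = 0)
    (hu_bd : ∀ (j : ℕ) (x : G), ¬ d x x₀ < (j : ℝ) → u j x = γ) :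
    ∀ (j : ℕ) (x : G), 0 ≤ u j x ∧ u j x ≤ γ ∧ u (j + 1) x ≤ u j x := by
  have hsol (j : ℕ) : IsDirichletSolution ω μ V {x | d x x₀ < j} γ (u j) :=
    ⟨hu_eq j, hu_bd j⟩
  have hμ' x := (hμ x).le
  intro j x
  refine ⟨(hsol j).nonneg hω_nonneg hμ' hV (hballs x₀ j) hγ.le x,
    (hsol j).le hω_nonneg hμ' hV (hballs x₀ j) hγ.le x,
    (hsol j).antitone_domain (hsol (j + 1)) (fun y hy => ?_) hω_nonneg hω_sum hμ' hV
      (hballs x₀ j) (hballs x₀ _) hγ.le x⟩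
  simp only [mem_ofPred_eq, Nat.cast_succ] at hy ⊢
  linarith

/-- The Dirichlet approximations `u_j` (solving `Δu_j − V u_j = 0` in `B_j(x₀)` and
`u_j = γ` outside) satisfy `0 ≤ u_j ≤ γ` and are pointwise non-increasing in `j`. -/
theorem stmt13 {G : Type*} [Countable G] [Infinite G]
    (μ : G → ℝ) (ω : G → G → ℝ) (d : G → G → ℝ)
    (hμ : ∀ x, 0 < μ x)
    (hω_symm : ∀ x y, ω x y = ω y x)
    (hω_diag : ∀ x, ω x x = 0)
    (hω_nonneg : ∀ x y, 0 ≤ ω x y)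
    (hω_sum : ∀ x, Summable fun y => ω x y)
    (hloc : ∀ x : G, {y : G | 0 < ω x y}.Finite)
    (hconn : ∀ x y : G, x ≠ y → ∃ (n : ℕ) (p : ℕ → G),
      p 0 = x ∧ p n = y ∧ ∀ i < n, 0 < ω (p i) (p (i + 1)))
    (hd_symm : ∀ x y, d x y = d y x)
    (hd_diag : ∀ x, d x x = 0)
    (hd_nonneg : ∀ x y, 0 ≤ d x y)
    (hd_tri : ∀ x y z, d x y ≤ d x z + d z y)
    (hballs : ∀ (x : G) (r : ℝ), {y : G | d y x < r}.Finite)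
    (V : G → ℝ) (hV : ∀ x, 0 < V x)
    (x₀ : G) (γ : ℝ) (hγ : 0 < γ)
    (u : ℕ → G → ℝ)
    (hu_eq : ∀ (j : ℕ) (x : G), d x x₀ < (j : ℝ) →
      (μ x)⁻¹ * (∑' y, ω x y * (u j y - u j x)) - V x * u j x = 0)
    (hu_bd : ∀ (j : ℕ) (x : G), ¬ d x x₀ < (j : ℝ) → u j x = γ) :
    ∀ (j : ℕ) (x : G), 0 ≤ u j x ∧ u j x ≤ γ ∧ u (j + 1) x ≤ u j x :=
  stmt13_general μ ω d hμ hω_nonneg hω_sum hballs V hV x₀ γ hγ u hu_eq hu_bd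
end

section
/- Let (G, ω, μ) be a connected, locally finite weighted graph with a pseudo metric d whose balls are finite sets, and let V : G → ℝ with V ≥ 0 on G. Let u : G → ℝ be a sign-changing solution of Δu − Vu = 0 on G with sup_G |u| = 1, fix 0 < M < sup_G u₊ and p ∈ G, and for each n ∈ ℕ let v_n : G → ℝ be the unique function with Δv_n(x) − V(x)v_n(x) = 0 for all x ∈ B_n(p) and v_n(x) = (u(x) − M)₊ for all x ∈ G \ B_n(p). Then for every n ∈ ℕ one has 0 ≤ v_n(x) ≤ 1 and v_n(x) ≤ v_{n+1}(x) for all x ∈ G. -/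
lemma summable_mul_bd {G : Type*} (ω : G → G → ℝ) (x : G)
    (hω_nonneg : ∀ y, 0 ≤ ω x y) (hω_sum : Summable fun y => ω x y)
    (f : G → ℝ) (C : ℝ) (hC : ∀ y, |f y| ≤ C) :
    Summable fun y => ω x y * f y := by
  apply Summable.of_abs
  apply Summable.of_nonneg_of_le (fun y => abs_nonneg _) (fun y => ?_) (hω_sum.mul_right C)
  rw [abs_mul, abs_of_nonneg (hω_nonneg y)]
  exact mul_le_mul_of_nonneg_left (hC y) (hω_nonneg y)

lemma minP {G : Type*} [Infinite G] (μ : G → ℝ) (ω : G → G → ℝ) (V : G → ℝ)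
    (hμ : ∀ x, 0 < μ x) (hω_nonneg : ∀ x y, 0 ≤ ω x y)
    (hω_sum : ∀ x, Summable fun y => ω x y)
    (hconn : ∀ x y : G, x ≠ y → ∃ (n : ℕ) (q : ℕ → G),
      q 0 = x ∧ q n = y ∧ ∀ i < n, 0 < ω (q i) (q (i + 1)))
    (hV₀ : ∀ x, 0 ≤ V x)
    (B : Set G) (hB : B.Finite)
    (w : G → ℝ) (C : ℝ) (hC : ∀ x, |w x| ≤ C)
    (hsup : ∀ x ∈ B, (μ x)⁻¹ * (∑' y, ω x y * (w y - w x)) ≤ V x * w x)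
    (hout : ∀ x ∉ B, 0 ≤ w x) :
    ∀ x, 0 ≤ w x := by
  by_contra h
  push_neg at h
  obtain ⟨x₀, hx₀⟩ := h
  have hx₀B : x₀ ∈ B := by
    by_contra hc; exact absurd (hout x₀ hc) (not_le.mpr hx₀)
  have hFne : hB.toFinset.Nonempty := ⟨x₀, hB.mem_toFinset.mpr hx₀B⟩
  obtain ⟨z₀, hz₀F, hz₀min⟩ := hB.toFinset.exists_min_image w hFne
  set m := w z₀ with hm
  have hm0 : m < 0 := lt_of_le_of_lt (hz₀min x₀ (hB.mem_toFinset.mpr hx₀B)) hx₀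
  have hlb : ∀ x, m ≤ w x := by
    intro x
    by_cases hx : x ∈ B
    · exact hz₀min x (hB.mem_toFinset.mpr hx)
    · exact le_of_lt (lt_of_lt_of_le hm0 (hout x hx))
  have hstep : ∀ x, w x = m → ∀ y, 0 < ω x y → w y = m := by
    intro x hx y hxy
    have hxB : x ∈ B := by
      by_contra hc
      have := hout x hc
      rw [hx] at this; linarith
    have hT := hsup x hxB
    have hVw : V x * w x ≤ 0 :=
      mul_nonpos_of_nonneg_of_nonpos (hV₀ x) (by rw [hx]; exact le_of_lt hm0)
    have hμinv : (0:ℝ) < (μ x)⁻¹ := inv_pos.mpr (hμ x)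
    have hT0 : (∑' y, ω x y * (w y - w x)) ≤ 0 := by
      nlinarith [hT, hVw, hμinv]
    have hnn : ∀ b, 0 ≤ ω x b * (w b - w x) := by
      intro b
      apply mul_nonneg (hω_nonneg x b)
      rw [hx]; linarith [hlb b]
    have hsum : Summable fun b => ω x b * (w b - w x) := by
      apply summable_mul_bd ω x (hω_nonneg x) (hω_sum x) _ (C + C)
      intro b
      calc |w b - w x| ≤ |w b| + |w x| := abs_sub _ _
        _ ≤ C + C := add_le_add (hC b) (hC x)
    have hy := Summable.le_tsum hsum y (fun b _ => hnn b)
    have h0 : ω x y * (w y - w x) = 0 := le_antisymm (le_trans hy hT0) (hnn y)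
    have := (mul_eq_zero.mp h0).resolve_left (ne_of_gt hxy)
    rw [hx] at this; linarith
  obtain ⟨z, hz⟩ := (Set.Finite.infinite_compl hB).nonempty
  have hzB : z ∉ B := hz
  have hzne : z₀ ≠ z := by
    intro hEq; exact hzB (hEq ▸ hB.mem_toFinset.mp hz₀F)
  obtain ⟨n, q, hq0, hqn, hqs⟩ := hconn z₀ z hzne
  have hall : ∀ i, i ≤ n → w (q i) = m := by
    intro i
    induction i with
    | zero => intro _; rw [hq0]
    | succ k ih =>
      intro hk
      exact hstep (q k) (ih (by omega)) (q (k+1)) (hqs k (by omega))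
  have h1 := hall n le_rfl
  rw [hqn] at h1
  have := hout z hzB
  linarith

/-- Claims (i)-(ii) in the proof of Proposition 3.1: for a sign-changing bounded
solution `u` of `Δu − Vu = 0` with `sup |u| = 1` and `0 < M < sup u₊`, the Dirichlet
approximations `v_n` (solving `Δv_n − V v_n = 0` in `B_n(p)`, `v_n = (u − M)₊`
outside) satisfy `0 ≤ v_n ≤ 1` and are pointwise non-decreasing in `n`. -/
theorem stmt14 {G : Type*} [Countable G] [Infinite G]
    (μ : G → ℝ) (ω : G → G → ℝ) (d : G → G → ℝ)
    (hμ : ∀ x, 0 < μ x)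
    (hω_symm : ∀ x y, ω x y = ω y x)
    (hω_diag : ∀ x, ω x x = 0)
    (hω_nonneg : ∀ x y, 0 ≤ ω x y)
    (hω_sum : ∀ x, Summable fun y => ω x y)
    (hloc : ∀ x : G, {y : G | 0 < ω x y}.Finite)
    (hconn : ∀ x y : G, x ≠ y → ∃ (n : ℕ) (p : ℕ → G),
      p 0 = x ∧ p n = y ∧ ∀ i < n, 0 < ω (p i) (p (i + 1)))
    (hd_symm : ∀ x y, d x y = d y x)
    (hd_diag : ∀ x, d x x = 0)
    (hd_nonneg : ∀ x y, 0 ≤ d x y)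
    (hd_tri : ∀ x y z, d x y ≤ d x z + d z y)
    (hballs : ∀ (x : G) (r : ℝ), {y : G | d y x < r}.Finite)
    (V : G → ℝ) (hV₀ : ∀ x, 0 ≤ V x)
    (u : G → ℝ)
    (hu_eq : ∀ x : G, (μ x)⁻¹ * (∑' y, ω x y * (u y - u x)) - V x * u x = 0)
    (hu_sign : (∃ x, 0 < u x) ∧ (∃ x, u x < 0))
    (hu_le : ∀ x, |u x| ≤ 1)
    (hu_sup : ∀ ε > (0 : ℝ), ∃ x, 1 - ε < |u x|)
    (M : ℝ) (hM₀ : 0 < M) (hM₁ : ∃ x, M < u x)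
    (p : G)
    (v : ℕ → G → ℝ)
    (hv_eq : ∀ (n : ℕ) (x : G), d x p < (n : ℝ) →
      (μ x)⁻¹ * (∑' y, ω x y * (v n y - v n x)) - V x * v n x = 0)
    (hv_bd : ∀ (n : ℕ) (x : G), ¬ d x p < (n : ℝ) → v n x = max (u x - M) 0) :
    ∀ (n : ℕ) (x : G), 0 ≤ v n x ∧ v n x ≤ 1 ∧ v n x ≤ v (n + 1) x := by
  have hM1 : M < 1 := by
    obtain ⟨x, hx⟩ := hM₁
    have h1 := hu_le x
    have h2 := le_abs_self (u x)
    linarith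
  -- facts about φ x = max (u x - M) 0
  have hφ0 : ∀ x : G, (0:ℝ) ≤ max (u x - M) 0 := fun x => le_max_right _ _
  have hφle : ∀ x : G, max (u x - M) 0 ≤ 1 - M := by
    intro x
    apply max_le _ (by linarith)
    have h1 := le_abs_self (u x); have h2 := hu_le x; linarith
  have hφabs : ∀ x : G, |max (u x - M) 0| ≤ 1 := by
    intro x; rw [abs_of_nonneg (hφ0 x)]; linarith [hφle x]
  -- summability
  have hsu : ∀ x, Summable fun y => ω x y * (u y - u x) := by
    intro x
    apply summable_mul_bd ω x (hω_nonneg x) (hω_sum x) _ 2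
    intro y
    calc |u y - u x| ≤ |u y| + |u x| := abs_sub _ _
      _ ≤ 2 := by linarith [hu_le x, hu_le y]
  have hsφ : ∀ x, Summable fun y => ω x y * (max (u y - M) 0 - max (u x - M) 0) := by
    intro x
    apply summable_mul_bd ω x (hω_nonneg x) (hω_sum x) _ 2
    intro y
    calc |max (u y - M) 0 - max (u x - M) 0| ≤ |max (u y - M) 0| + |max (u x - M) 0| :=
        abs_sub _ _
      _ ≤ 2 := by linarith [hφabs x, hφabs y]
  have hu_tsum : ∀ x, (∑' y, ω x y * (u y - u x)) = μ x * (V x * u x) := by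
    intro x
    have h := hu_eq x
    have hμx : (μ x) ≠ 0 := (hμ x).ne'
    have h2 : (μ x)⁻¹ * (∑' y, ω x y * (u y - u x)) = V x * u x := by linarith
    calc (∑' y, ω x y * (u y - u x))
        = μ x * ((μ x)⁻¹ * (∑' y, ω x y * (u y - u x))) := by field_simp
      _ = μ x * (V x * u x) := by rw [h2]
  -- φ is a subsolution
  have hφ_sub : ∀ x, μ x * (V x * max (u x - M) 0) ≤
      ∑' y, ω x y * (max (u y - M) 0 - max (u x - M) 0) := by
    intro x
    by_cases hx : u x ≤ M
    · have hφx : max (u x - M) 0 = 0 := max_eq_right (by linarith)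
      rw [hφx, mul_zero, mul_zero]
      apply tsum_nonneg
      intro y
      rw [sub_zero]
      exact mul_nonneg (hω_nonneg x y) (hφ0 y)
    · push_neg at hx
      have hφx : max (u x - M) 0 = u x - M := max_eq_left (by linarith)
      have hle : (∑' y, ω x y * (u y - u x)) ≤
          ∑' y, ω x y * (max (u y - M) 0 - max (u x - M) 0) := by
        apply Summable.tsum_le_tsum _ (hsu x) (hsφ x)
        intro y
        apply mul_le_mul_of_nonneg_left _ (hω_nonneg x y)
        have h1 : u y - M ≤ max (u y - M) 0 := le_max_left _ _
        rw [hφx]; linarith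
      rw [hu_tsum x] at hle
      have h3 : μ x * (V x * max (u x - M) 0) ≤ μ x * (V x * u x) := by
        rw [hφx]
        have h4 := hμ x; have h5 := hV₀ x
        nlinarith [mul_nonneg h4.le (mul_nonneg h5 hM₀.le)]
      linarith
  -- bounds on v n
  have hCv : ∀ n : ℕ, ∃ C : ℝ, ∀ x, |v n x| ≤ C := by
    intro n
    refine ⟨1 + ∑ y ∈ (hballs p n).toFinset, |v n y|, ?_⟩
    have h2 : (0:ℝ) ≤ ∑ y ∈ (hballs p n).toFinset, |v n y| :=
      Finset.sum_nonneg fun y _ => abs_nonneg _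
    intro x
    by_cases hx : d x p < (n : ℝ)
    · have hxF : x ∈ (hballs p n).toFinset := (hballs p n).mem_toFinset.mpr hx
      have h1 : |v n x| ≤ ∑ y ∈ (hballs p n).toFinset, |v n y| :=
        Finset.single_le_sum (f := fun y => |v n y|) (fun y _ => abs_nonneg _) hxF
      linarith
    · rw [hv_bd n x hx]
      linarith [hφabs x]
  -- v n's equation in tsum form
  have hv_tsum : ∀ (n : ℕ) (x : G), d x p < (n : ℝ) →
      (∑' y, ω x y * (v n y - v n x)) = μ x * (V x * v n x) := by
    intro n x hx
    have h := hv_eq n x hx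
    have hμx : (μ x) ≠ 0 := (hμ x).ne'
    have h2 : (μ x)⁻¹ * (∑' y, ω x y * (v n y - v n x)) = V x * v n x := by linarith
    calc (∑' y, ω x y * (v n y - v n x))
        = μ x * ((μ x)⁻¹ * (∑' y, ω x y * (v n y - v n x))) := by field_simp
      _ = μ x * (V x * v n x) := by rw [h2]
  have hsv : ∀ (n : ℕ) (x : G), Summable fun y => ω x y * (v n y - v n x) := by
    intro n x
    obtain ⟨C, hC⟩ := hCv n
    apply summable_mul_bd ω x (hω_nonneg x) (hω_sum x) _ (C + C)
    intro y
    calc |v n y - v n x| ≤ |v n y| + |v n x| := abs_sub _ _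
      _ ≤ C + C := add_le_add (hC y) (hC x)
  -- v n ≥ φ
  have hgeφ : ∀ (n : ℕ) (x : G), max (u x - M) 0 ≤ v n x := by
    intro n
    obtain ⟨C, hC⟩ := hCv n
    have key : ∀ x, 0 ≤ v n x - max (u x - M) 0 := by
      apply minP μ ω V hμ hω_nonneg hω_sum hconn hV₀
        {x | d x p < (n:ℝ)} (hballs p n) _ (C + 1)
      · intro x
        calc |v n x - max (u x - M) 0| ≤ |v n x| + |max (u x - M) 0| := abs_sub _ _
          _ ≤ C + 1 := add_le_add (hC x) (hφabs x)
      · intro x hx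
        have hx' : d x p < (n:ℝ) := hx
        have hre : (∑' y, ω x y * ((v n y - max (u y - M) 0) - (v n x - max (u x - M) 0)))
            = (∑' y, ω x y * (v n y - v n x))
              - ∑' y, ω x y * (max (u y - M) 0 - max (u x - M) 0) := by
          rw [← Summable.tsum_sub (hsv n x) (hsφ x)]
          congr 1; funext y; ring
        rw [hre, hv_tsum n x hx']
        have h1 := hφ_sub x
        have hμx := hμ x
        have hT : μ x * (V x * v n x) - (∑' y, ω x y * (max (u y - M) 0 - max (u x - M) 0))
            ≤ μ x * (V x * (v n x - max (u x - M) 0)) := by nlinarith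
        calc (μ x)⁻¹ * (μ x * (V x * v n x)
              - ∑' y, ω x y * (max (u y - M) 0 - max (u x - M) 0))
            ≤ (μ x)⁻¹ * (μ x * (V x * (v n x - max (u x - M) 0))) := by
              apply mul_le_mul_of_nonneg_left hT (le_of_lt (inv_pos.mpr hμx))
          _ = V x * (v n x - max (u x - M) 0) := by field_simp
      · intro x hx
        have hx' : ¬ d x p < (n:ℝ) := hx
        rw [hv_bd n x hx']
        simp
    intro x; linarith [key x]
  -- v n ≤ 1
  have hle1 : ∀ (n : ℕ) (x : G), v n x ≤ 1 := by
    intro n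
    obtain ⟨C, hC⟩ := hCv n
    have key : ∀ x, 0 ≤ 1 - v n x := by
      apply minP μ ω V hμ hω_nonneg hω_sum hconn hV₀
        {x | d x p < (n:ℝ)} (hballs p n) _ (C + 1)
      · intro x
        calc |1 - v n x| ≤ |(1:ℝ)| + |v n x| := abs_sub _ _
          _ ≤ C + 1 := by rw [abs_one]; linarith [hC x]
      · intro x hx
        have hx' : d x p < (n:ℝ) := hx
        have hre : (∑' y, ω x y * ((1 - v n y) - (1 - v n x)))
            = -(∑' y, ω x y * (v n y - v n x)) := by
          rw [← tsum_neg]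
          congr 1; funext y; ring
        rw [hre, hv_tsum n x hx']
        have hμx := hμ x
        have h1 : (μ x)⁻¹ * -(μ x * (V x * v n x)) = -(V x * v n x) := by field_simp
        rw [h1]
        have := hV₀ x
        nlinarith
      · intro x hx
        have hx' : ¬ d x p < (n:ℝ) := hx
        rw [hv_bd n x hx']
        linarith [hφle x]
    intro x; linarith [key x]
  -- monotonicity
  have hmono : ∀ (n : ℕ) (x : G), v n x ≤ v (n + 1) x := by
    intro n
    obtain ⟨C, hC⟩ := hCv n
    obtain ⟨C', hC'⟩ := hCv (n + 1)
    have key : ∀ x, 0 ≤ v (n + 1) x - v n x := by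
      apply minP μ ω V hμ hω_nonneg hω_sum hconn hV₀
        {x | d x p < (n:ℝ)} (hballs p n) _ (C' + C)
      · intro x
        calc |v (n+1) x - v n x| ≤ |v (n+1) x| + |v n x| := abs_sub _ _
          _ ≤ C' + C := add_le_add (hC' x) (hC x)
      · intro x hx
        have hx' : d x p < (n:ℝ) := hx
        have hx'' : d x p < ((n + 1 : ℕ) : ℝ) := by push_cast; push_cast at hx'; linarith
        have hre : (∑' y, ω x y * ((v (n+1) y - v n y) - (v (n+1) x - v n x)))
            = (∑' y, ω x y * (v (n+1) y - v (n+1) x))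
              - ∑' y, ω x y * (v n y - v n x) := by
          rw [← Summable.tsum_sub (hsv (n+1) x) (hsv n x)]
          congr 1; funext y; ring
        rw [hre, hv_tsum (n+1) x hx'', hv_tsum n x hx']
        have hμx := hμ x
        have h1 : (μ x)⁻¹ * (μ x * (V x * v (n+1) x) - μ x * (V x * v n x))
            = V x * (v (n+1) x - v n x) := by field_simp
        rw [h1]
      · intro x hx
        have hx' : ¬ d x p < (n:ℝ) := hx
        rw [hv_bd n x hx']
        linarith [hgeφ (n+1) x]
    intro x; linarith [key x]
  intro n x
  exact ⟨le_trans (hφ0 x) (hgeφ n x), hle1 n x, hmono n x⟩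
end

section
/- Let (T, ω, μ) be a homogeneous model tree with root x₀, branching b ≥ 2, standard edge weights and constant measure μ ≡ c > 0, and let d be the graph distance from the root. Let V : T → ℝ with V > 0 on T, and assume V(x) ≤ C₀ d(x,x₀)^{-α} for all x with d(x,x₀) ≥ R₀, for some α > 1, C₀ > 0 and R₀ ≥ 2. Then there exist Ĉ > 0, R̂ > 0 and β > 0 such that the function h(x) := Ĉ d(x,x₀)^{-β} satisfies Δh(x) ≤ −V(x) and h(x) > 0 for all x with d(x,x₀) ≥ R̂, and h(x) → 0 as d(x,x₀) → ∞. -/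
open Real Set

lemma mvt_rpow' {β a : ℝ} (hβ : 0 < β) (ha : 0 < a) :
    β * (a+1) ^ (-β-1) ≤ a ^ (-β) - (a+1) ^ (-β) ∧
    a ^ (-β) - (a+1) ^ (-β) ≤ β * a ^ (-β-1) := by
  have key : ∃ ξ ∈ Ioo a (a+1),
      (-β) * ξ ^ (-β-1) = ((a+1) ^ (-β) - a ^ (-β)) / ((a+1) - a) := by
    apply exists_hasDerivAt_eq_slope (fun x : ℝ => x ^ (-β))
      (fun x : ℝ => (-β) * x ^ (-β-1)) (by linarith)
    · intro x hx
      exact (Real.continuousAt_rpow_const x (-β) (Or.inl (by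
        have : 0 < x := lt_of_lt_of_le ha hx.1
        positivity))).continuousWithinAt
    · intro x hx
      have hx0 : x ≠ 0 := ne_of_gt (lt_trans ha hx.1)
      have := Real.hasDerivAt_rpow_const (x := x) (p := -β) (Or.inl hx0)
      simpa [sub_eq_add_neg, add_comm] using this
  obtain ⟨ξ, hξ, heq⟩ := key
  have hξ0 : 0 < ξ := lt_trans ha hξ.1
  have h1 : a ^ (-β) - (a+1) ^ (-β) = β * ξ ^ (-β-1) := by
    field_simp at heq
    linarith
  constructor
  · rw [h1]
    have : (a+1) ^ (-β-1) ≤ ξ ^ (-β-1) :=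
      Real.rpow_le_rpow_of_nonpos hξ0 (le_of_lt hξ.2) (by linarith)
    nlinarith
  · rw [h1]
    have : ξ ^ (-β-1) ≤ a ^ (-β-1) :=
      Real.rpow_le_rpow_of_nonpos ha (le_of_lt hξ.1) (by linarith)
    nlinarith

lemma ratio_rpow' {x y γ M : ℝ} (hx : 0 < x) (hxy : x ≤ y) (hγ0 : 0 ≤ γ)
    (hγ2 : γ ≤ 2) (hM : y^2 ≤ M * x^2) : x ^ (-γ) ≤ M * y ^ (-γ) := by
  have hy : 0 < y := lt_of_lt_of_le hx hxy
  have h1 : (y/x) ^ γ ≤ (y/x) ^ (2:ℝ) :=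
    Real.rpow_le_rpow_of_exponent_le (by rw [le_div_iff₀ hx]; linarith) hγ2
  have h2 : (y/x) ^ (2:ℝ) = y^2/x^2 := by
    rw [show (2:ℝ) = ((2:ℕ):ℝ) by norm_num, Real.rpow_natCast, div_pow]
  have h3 : (y/x) ^ γ ≤ M := by
    rw [h2] at h1
    calc (y/x) ^ γ ≤ y^2/x^2 := h1
    _ ≤ M := by rw [div_le_iff₀ (by positivity)]; linarith
  have h4 : x ^ (-γ) = (y/x) ^ γ * y ^ (-γ) := by
    rw [Real.rpow_neg hy.le, Real.rpow_neg hx.le, Real.div_rpow hy.le hx.le]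
    have hxγ : (0:ℝ) < x ^ γ := Real.rpow_pos_of_pos hx γ
    have hyγ : (0:ℝ) < y ^ γ := Real.rpow_pos_of_pos hy γ
    field_simp
  rw [h4]
  have : (0:ℝ) < y ^ (-γ) := Real.rpow_pos_of_pos hy _
  nlinarith

set_option maxHeartbeats 2000000 in
/-- **Lemma 7.3.** On a homogeneous model tree with branching `b ≥ 2`, standard edge
weights and constant measure `c > 0`, if `0 < V(x) ≤ C₀ d(x,x₀)^{-α}` for
`d(x,x₀) ≥ R₀` with `α > 1`, `R₀ ≥ 2`, then there exist `Ĉ, R̂, β > 0` such that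
`h(x) = Ĉ d(x,x₀)^{-β}` satisfies `Δh ≤ −V` and `h > 0` on `{d(x,x₀) ≥ R̂}`, and
`h(x) → 0` as `d(x,x₀) → ∞`. -/
theorem stmt15 {T : Type*} [Countable T] [Infinite T]
    (ω : T → T → ℝ) (c : ℝ) (hc : 0 < c)
    (hω_symm : ∀ x y, ω x y = ω y x)
    (hω_diag : ∀ x, ω x x = 0)
    (hω01 : ∀ x y, ω x y = 0 ∨ ω x y = 1)
    (x₀ : T) (b : ℕ) (hb : 2 ≤ b)
    (D : T → ℕ) (hD₀ : D x₀ = 0) (hDpos : ∀ x, x ≠ x₀ → 1 ≤ D x)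
    (hadj : ∀ x y, ω x y = 1 → D y = D x + 1 ∨ D x = D y + 1)
    (hroot : {y : T | ω x₀ y = 1}.ncard = b)
    (hup : ∀ x : T, {y : T | ω x y = 1 ∧ D y = D x + 1}.ncard = b)
    (hdown : ∀ x : T, x ≠ x₀ → {y : T | ω x y = 1 ∧ D y + 1 = D x}.ncard = 1)
    (V : T → ℝ) (hV : ∀ x, 0 < V x)
    (C₀ α R₀ : ℝ) (hα : 1 < α) (hC₀ : 0 < C₀) (hR₀ : 2 ≤ R₀)
    (hVup : ∀ x : T, R₀ ≤ (D x : ℝ) → V x ≤ C₀ * (D x : ℝ) ^ (-α)) :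
    ∃ Chat > (0 : ℝ), ∃ Rhat > (0 : ℝ), ∃ β > (0 : ℝ),
      (∀ x : T, Rhat ≤ (D x : ℝ) →
        c⁻¹ * (∑' y, ω x y * (Chat * (D y : ℝ) ^ (-β) - Chat * (D x : ℝ) ^ (-β)))
          ≤ -V x ∧
        0 < Chat * (D x : ℝ) ^ (-β)) ∧
      (∀ ε > (0 : ℝ), ∃ R : ℝ, ∀ x : T, R < (D x : ℝ) →
        |Chat * (D x : ℝ) ^ (-β)| ≤ ε) := by
  classical
  obtain ⟨β, hβdef⟩ : ∃ β : ℝ, β = min 1 (α - 1) := ⟨_, rfl⟩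
  have hβ : 0 < β := by rw [hβdef]; exact lt_min one_pos (by linarith)
  have hβ1 : β ≤ 1 := by rw [hβdef]; exact min_le_left _ _
  have hβα : β + 1 ≤ α := by
    have : β ≤ α - 1 := by rw [hβdef]; exact min_le_right _ _
    linarith
  obtain ⟨Chat, hChatdef⟩ : ∃ C : ℝ, C = 3 * c * C₀ / β := ⟨_, rfl⟩
  have hChat : 0 < Chat := by rw [hChatdef]; positivity
  obtain ⟨Rhat, hRhatdef⟩ : ∃ R : ℝ, R = max R₀ 21 := ⟨_, rfl⟩
  have hRhat : (0:ℝ) < Rhat := by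
    rw [hRhatdef]; exact lt_of_lt_of_le (by norm_num) (le_max_right _ _)
  refine ⟨Chat, hChat, Rhat, hRhat, β, hβ, ?_, ?_⟩
  · intro x hx
    have ht21 : (21:ℝ) ≤ (D x : ℝ) := le_trans (hRhatdef ▸ le_max_right _ _) hx
    have htR₀ : R₀ ≤ (D x : ℝ) := le_trans (hRhatdef ▸ le_max_left _ _) hx
    set t : ℝ := (D x : ℝ) with ht
    have ht0 : (0:ℝ) < t := by linarith
    have hxne : x ≠ x₀ := by
      intro h
      have h0 : t = 0 := by rw [ht, h, hD₀]; norm_num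
      linarith
    have hpos : 0 < Chat * t ^ (-β) := mul_pos hChat (Real.rpow_pos_of_pos ht0 _)
    refine ⟨?_, hpos⟩
    -- the neighbor sets
    set A : Set T := {y | ω x y = 1 ∧ D y = D x + 1} with hAdef
    set B : Set T := {y | ω x y = 1 ∧ D y + 1 = D x} with hBdef
    have hAn : A.ncard = b := hup x
    have hBn : B.ncard = 1 := hdown x hxne
    have hAfin : A.Finite := Set.finite_of_ncard_ne_zero (by omega)
    have hBfin : B.Finite := Set.finite_of_ncard_ne_zero (by omega)
    set f : T → ℝ := fun y => ω x y * (Chat * (D y : ℝ) ^ (-β) - Chat * t ^ (-β)) with hfdef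
    set s : Finset T := hAfin.toFinset ∪ hBfin.toFinset with hsdef
    have htsum : ∑' y, f y = ∑ y ∈ s, f y := by
      apply tsum_eq_sum
      intro y hy
      rcases hω01 x y with h0 | h1
      · simp [hfdef, h0]
      · exfalso
        rcases hadj x y h1 with hup' | hdn'
        · exact hy (Finset.mem_union_left _ (hAfin.mem_toFinset.2 ⟨h1, hup'⟩))
        · exact hy (Finset.mem_union_right _ (hBfin.mem_toFinset.2 ⟨h1, hdn'.symm⟩))
    have hdisj : Disjoint hAfin.toFinset hBfin.toFinset := by
      rw [Finset.disjoint_left]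
      intro y hyA hyB
      have h1 := (hAfin.mem_toFinset.1 hyA).2
      have h2 := (hBfin.mem_toFinset.1 hyB).2
      omega
    obtain ⟨cA, hcAdef⟩ : ∃ r : ℝ, r = Chat * (t+1) ^ (-β) - Chat * t ^ (-β) := ⟨_, rfl⟩
    obtain ⟨cB, hcBdef⟩ : ∃ r : ℝ, r = Chat * (t-1) ^ (-β) - Chat * t ^ (-β) := ⟨_, rfl⟩
    have hsumA : ∑ y ∈ hAfin.toFinset, f y = (b:ℝ) * cA := by
      rw [Finset.sum_congr rfl (fun y hy => ?_), Finset.sum_const,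
        ← Set.ncard_eq_toFinset_card A hAfin, hAn, nsmul_eq_mul]
      have hy' := hAfin.mem_toFinset.1 hy
      have hD : ((D y : ℝ)) = t + 1 := by
        rw [hy'.2]; push_cast; ring
      simp [hfdef, hy'.1, hD, hcAdef]
    have hsumB : ∑ y ∈ hBfin.toFinset, f y = cB := by
      rw [Finset.sum_congr rfl (fun y hy => ?_), Finset.sum_const,
        ← Set.ncard_eq_toFinset_card B hBfin, hBn, one_smul]
      have hy' := hBfin.mem_toFinset.1 hy
      have hD : ((D y : ℝ)) = t - 1 := by
        have h2 : ((D y : ℕ)) + 1 = D x := hy'.2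
        have h3 : ((D y : ℝ)) + 1 = t := by rw [ht]; exact_mod_cast h2
        linarith
      simp [hfdef, hy'.1, hD, hcBdef]
    have htotal : ∑' y, f y = (b:ℝ) * cA + cB := by
      rw [htsum, hsdef, Finset.sum_union hdisj, hsumA, hsumB]
    -- analytic estimates
    have hP1 : (0:ℝ) < (t+1) ^ (-β-1) := Real.rpow_pos_of_pos (by linarith) _
    have hP2 : (0:ℝ) < (t-1) ^ (-β-1) := Real.rpow_pos_of_pos (by linarith) _
    have hP3 : (0:ℝ) < t ^ (-β-1) := Real.rpow_pos_of_pos ht0 _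
    have hmvt1 := (mvt_rpow' hβ ht0).1
    have hmvt2 := (mvt_rpow' hβ (show (0:ℝ) < t - 1 by linarith)).2
    rw [show t - 1 + 1 = t by ring] at hmvt2
    have hcA : cA ≤ -(Chat * (β * (t+1) ^ (-β-1))) := by
      have h := mul_le_mul_of_nonneg_left hmvt1 hChat.le
      rw [hcAdef]; nlinarith [h]
    have hcB : cB ≤ Chat * (β * (t-1) ^ (-β-1)) := by
      have h := mul_le_mul_of_nonneg_left hmvt2 hChat.le
      rw [hcBdef]; nlinarith [h]
    have hcAneg : cA ≤ 0 := by
      have h0 : (0:ℝ) ≤ Chat * (β * (t+1) ^ (-β-1)) :=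
        mul_nonneg hChat.le (mul_nonneg hβ.le hP1.le)
      linarith
    have hbcA : (b:ℝ) * cA ≤ 2 * cA := by
      have hb2 : (2:ℝ) ≤ (b:ℝ) := by exact_mod_cast hb
      have h0 : ((b:ℝ) - 2) * cA ≤ 0 := mul_nonpos_of_nonneg_of_nonpos (by linarith) hcAneg
      nlinarith [h0]
    -- ratio estimates
    have hr1 : (t-1) ^ (-(β+1)) ≤ (3/2) * (t+1) ^ (-(β+1)) :=
      ratio_rpow' (by linarith) (by linarith) (by linarith) (by linarith) (by nlinarith)
    have hr2 : t ^ (-(β+1)) ≤ (6/5) * (t+1) ^ (-(β+1)) :=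
      ratio_rpow' ht0 (by linarith) (by linarith) (by linarith) (by nlinarith)
    rw [show -(β+1) = -β-1 by ring] at hr1 hr2
    have hCβ : (0:ℝ) ≤ Chat * β := mul_nonneg hChat.le hβ.le
    have hmain : (b:ℝ) * cA + cB ≤ -((5:ℝ)/12) * (Chat * β * t ^ (-β-1)) := by
      have h5 : (b:ℝ) * cA + cB ≤
          -(2 * (Chat * (β * (t+1) ^ (-β-1)))) + Chat * (β * (t-1) ^ (-β-1)) := by
        linarith
      have h6 : Chat * (β * (t-1) ^ (-β-1)) ≤ (3/2) * (Chat * (β * (t+1) ^ (-β-1))) := by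
        have h := mul_le_mul_of_nonneg_left hr1 hCβ
        nlinarith [h]
      have h7 : (5:ℝ)/6 * (Chat * β * t ^ (-β-1)) ≤ Chat * (β * (t+1) ^ (-β-1)) := by
        have h := mul_le_mul_of_nonneg_left hr2 hCβ
        nlinarith [h]
      linarith
    -- conclude
    have hVx : V x ≤ C₀ * t ^ (-α) := hVup x htR₀
    have hαβ : t ^ (-α) ≤ t ^ (-β-1) :=
      Real.rpow_le_rpow_of_exponent_le (by linarith) (by linarith)
    have hChatβ : Chat * β = 3 * c * C₀ := by
      rw [hChatdef]; field_simp
    have hfinal : c⁻¹ * ((b:ℝ) * cA + cB) ≤ -V x := by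
      have h8 : c⁻¹ * ((b:ℝ) * cA + cB) ≤ c⁻¹ * (-((5:ℝ)/12) * (Chat * β * t ^ (-β-1))) :=
        mul_le_mul_of_nonneg_left hmain (inv_nonneg.mpr hc.le)
      have h9 : c⁻¹ * (-((5:ℝ)/12) * (Chat * β * t ^ (-β-1)))
          = -((5:ℝ)/4) * (C₀ * t ^ (-β-1)) := by
        rw [hChatdef]
        field_simp
        ring
      rw [h9] at h8
      have h10 : C₀ * t ^ (-α) ≤ C₀ * t ^ (-β-1) :=
        mul_le_mul_of_nonneg_left hαβ hC₀.le
      have h11 : 0 ≤ C₀ * t ^ (-β-1) := mul_nonneg hC₀.le hP3.le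
      linarith
    convert hfinal using 2
  · -- decay
    intro ε hε
    refine ⟨max 1 ((Chat/ε) ^ (β⁻¹)), fun x hx => ?_⟩
    set t : ℝ := (D x : ℝ) with ht
    have ht1 : (1:ℝ) < t := lt_of_le_of_lt (le_max_left _ _) hx
    have ht0 : (0:ℝ) < t := by linarith
    have htC : (Chat/ε) ^ (β⁻¹) < t := lt_of_le_of_lt (le_max_right _ _) hx
    have hCε : (0:ℝ) ≤ Chat/ε := div_nonneg hChat.le hε.le
    have htβ : Chat/ε ≤ t ^ β := by
      calc Chat/ε = ((Chat/ε) ^ (β⁻¹)) ^ β := by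
            rw [← Real.rpow_mul hCε, inv_mul_cancel₀ hβ.ne', Real.rpow_one]
      _ ≤ t ^ β := Real.rpow_le_rpow (by positivity) htC.le hβ.le
    have htβpos : (0:ℝ) < t ^ β := Real.rpow_pos_of_pos ht0 β
    have h1 : Chat ≤ ε * t ^ β := by
      have h2 := mul_le_mul_of_nonneg_left htβ hε.le
      have h3 : ε * (Chat/ε) = Chat := by field_simp
      linarith
    have habs : Chat * t ^ (-β) ≤ ε := by
      rw [Real.rpow_neg ht0.le]
      calc Chat * (t ^ β)⁻¹ ≤ (ε * t ^ β) * (t ^ β)⁻¹ :=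
            mul_le_mul_of_nonneg_right h1 (inv_nonneg.mpr htβpos.le)
        _ = ε := by field_simp
    have hnn : 0 ≤ Chat * t ^ (-β) :=
      mul_nonneg hChat.le (Real.rpow_pos_of_pos ht0 _).le
    rw [abs_of_nonneg hnn]
    exact habs
end

section
/- Let (T, ω, μ) be a homogeneous model tree with root x₀, branching b ≥ 2, standard edge weights and constant measure μ ≡ c > 0, and let d be the graph distance from the root. Let V : T → ℝ with V > 0 on T, and assume V(x) ≤ C₀ d(x,x₀)^{-α} for all x with d(x,x₀) ≥ R₀, for some α > 1, C₀ > 0 and R₀ ≥ 2. Then for every γ > 0 there exists a bounded function u : T → ℝ with Δu(x) − V(x)u(x) = 0 for all x ∈ T and u(x) → γ as d(x,x₀) → ∞ (i.e., for every ε > 0 there is R > 0 such that |u(x) − γ| ≤ ε whenever d(x,x₀) > R). In particular, there exist infinitely many bounded solutions of Δu − Vu = 0 on T. -/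
open Filter Topology

open Classical in
noncomputable def stmt16upF {T : Type*} (ω : T → T → ℝ) (D : T → ℕ) (x : T) : Finset T :=
  if h : {y | ω x y = 1 ∧ D y = D x + 1}.Finite then h.toFinset else ∅

open Classical in
noncomputable def stmt16par {T : Type*} (ω : T → T → ℝ) (D : T → ℕ) (x₀ x : T) : T :=
  if h : ∃ y, ω x y = 1 ∧ D y + 1 = D x then h.choose else x₀

open Classical in
noncomputable def stmt16A {T : Type*} (ω : T → T → ℝ) (D : T → ℕ) (x₀ : T) (b : ℕ) (c : ℝ)
    (V : T → ℝ) (f : T → ℝ) (x : T) : ℝ :=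
  ((∑ y ∈ stmt16upF ω D x, f y) + (if x = x₀ then 0 else f (stmt16par ω D x₀ x)))
    / ((if x = x₀ then (b : ℝ) else (b : ℝ) + 1) + c * V x)

section aux
open scoped Classical
variable {T : Type*} {ω : T → T → ℝ} {D : T → ℕ} {x₀ : T} {b : ℕ}

lemma stmt16_upfin (hb : 2 ≤ b) (hup : ∀ x : T, {y : T | ω x y = 1 ∧ D y = D x + 1}.ncard = b)
    (x : T) : {y | ω x y = 1 ∧ D y = D x + 1}.Finite := by
  rcases Set.finite_or_infinite {y | ω x y = 1 ∧ D y = D x + 1} with hf | hf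
  · exact hf
  · exfalso; have := hf.ncard; rw [hup x] at this; omega

lemma stmt16_mem_upF (hb : 2 ≤ b) (hup : ∀ x : T, {y : T | ω x y = 1 ∧ D y = D x + 1}.ncard = b)
    (x y : T) : y ∈ stmt16upF ω D x ↔ ω x y = 1 ∧ D y = D x + 1 := by
  rw [stmt16upF, dif_pos (stmt16_upfin hb hup x), Set.Finite.mem_toFinset]
  exact Iff.rfl

lemma stmt16_card_upF (hb : 2 ≤ b) (hup : ∀ x : T, {y : T | ω x y = 1 ∧ D y = D x + 1}.ncard = b)
    (x : T) : (stmt16upF ω D x).card = b := by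
  rw [stmt16upF, dif_pos (stmt16_upfin hb hup x),
    ← Set.ncard_eq_toFinset_card _ (stmt16_upfin hb hup x), hup x]

lemma stmt16_par_spec
    (hdown : ∀ x : T, x ≠ x₀ → {y : T | ω x y = 1 ∧ D y + 1 = D x}.ncard = 1)
    {x : T} (hx : x ≠ x₀) :
    ω x (stmt16par ω D x₀ x) = 1 ∧ D (stmt16par ω D x₀ x) + 1 = D x := by
  obtain ⟨a, ha⟩ := Set.ncard_eq_one.mp (hdown x hx)
  have hex : ∃ y, ω x y = 1 ∧ D y + 1 = D x := ⟨a, by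
    have : a ∈ {y : T | ω x y = 1 ∧ D y + 1 = D x} := by rw [ha]; rfl
    exact this⟩
  rw [stmt16par, dif_pos hex]
  exact hex.choose_spec

lemma stmt16_par_unique
    (hdown : ∀ x : T, x ≠ x₀ → {y : T | ω x y = 1 ∧ D y + 1 = D x}.ncard = 1)
    {x : T} (hx : x ≠ x₀) {y : T} (hy : ω x y = 1 ∧ D y + 1 = D x) :
    y = stmt16par ω D x₀ x := by
  obtain ⟨a, ha⟩ := Set.ncard_eq_one.mp (hdown x hx)
  have h1 : y ∈ {y : T | ω x y = 1 ∧ D y + 1 = D x} := hy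
  have h2 : stmt16par ω D x₀ x ∈ {y : T | ω x y = 1 ∧ D y + 1 = D x} :=
    stmt16_par_spec hdown hx
  rw [ha] at h1 h2
  rw [Set.mem_singleton_iff] at h1 h2
  rw [h1, h2]


lemma stmt16_tsum (hb : 2 ≤ b)
    (hω01 : ∀ x y, ω x y = 0 ∨ ω x y = 1)
    (hD₀ : D x₀ = 0)
    (hadj : ∀ x y, ω x y = 1 → D y = D x + 1 ∨ D x = D y + 1)
    (hup : ∀ x : T, {y : T | ω x y = 1 ∧ D y = D x + 1}.ncard = b)
    (hdown : ∀ x : T, x ≠ x₀ → {y : T | ω x y = 1 ∧ D y + 1 = D x}.ncard = 1)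
    (f : T → ℝ) (x : T) :
    ∑' y, ω x y * (f y - f x)
      = ((∑ y ∈ stmt16upF ω D x, f y) + (if x = x₀ then 0 else f (stmt16par ω D x₀ x)))
        - (if x = x₀ then (b : ℝ) else (b : ℝ) + 1) * f x := by
  by_cases hx : x = x₀
  · subst hx
    rw [tsum_eq_sum (s := stmt16upF ω D x) ?_]
    · rw [if_pos rfl, if_pos rfl]
      have : ∀ y ∈ stmt16upF ω D x, ω x y * (f y - f x) = f y - f x := by
        intro y hy
        rw [(stmt16_mem_upF hb hup x y).mp hy |>.1, one_mul]
      rw [Finset.sum_congr rfl this, Finset.sum_sub_distrib, Finset.sum_const,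
        stmt16_card_upF hb hup, nsmul_eq_mul]
      ring
    · intro y hy
      rcases hω01 x y with h0 | h1
      · rw [h0, zero_mul]
      · exfalso
        rcases hadj x y h1 with hu | hd
        · exact hy ((stmt16_mem_upF hb hup x y).mpr ⟨h1, hu⟩)
        · rw [hD₀] at hd; omega
  · have hpar := stmt16_par_spec (x₀ := x₀) hdown hx
    have hnm : stmt16par ω D x₀ x ∉ stmt16upF ω D x := by
      intro hmem
      have := ((stmt16_mem_upF hb hup x _).mp hmem).2
      omega
    rw [tsum_eq_sum (s := insert (stmt16par ω D x₀ x) (stmt16upF ω D x)) ?_]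
    · rw [Finset.sum_insert hnm, hpar.1, one_mul, if_neg hx, if_neg hx]
      have : ∀ y ∈ stmt16upF ω D x, ω x y * (f y - f x) = f y - f x := by
        intro y hy
        rw [(stmt16_mem_upF hb hup x y).mp hy |>.1, one_mul]
      rw [Finset.sum_congr rfl this, Finset.sum_sub_distrib, Finset.sum_const,
        stmt16_card_upF hb hup, nsmul_eq_mul]
      ring
    · intro y hy
      rcases hω01 x y with h0 | h1
      · rw [h0, zero_mul]
      · exfalso
        rcases hadj x y h1 with hu | hd
        · exact hy (Finset.mem_insert_of_mem ((stmt16_mem_upF hb hup x y).mpr ⟨h1, hu⟩))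
        · have : y = stmt16par ω D x₀ x :=
            stmt16_par_unique hdown hx ⟨h1, by omega⟩
          exact hy (this ▸ Finset.mem_insert_self _ _)

lemma stmt16_den_pos {c : ℝ} {V : T → ℝ} (hb : 2 ≤ b) (hc : 0 < c) (hV : ∀ x, 0 < V x)
    (x : T) : 0 < (if x = x₀ then (b : ℝ) else (b : ℝ) + 1) + c * V x := by
  have h2 : (2 : ℝ) ≤ (b : ℝ) := by exact_mod_cast hb
  have := mul_pos hc (hV x)
  split <;> linarith

lemma stmt16_eq_of_fix {c : ℝ} {V : T → ℝ} (hb : 2 ≤ b) (hc : 0 < c) (hV : ∀ x, 0 < V x)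
    (hω01 : ∀ x y, ω x y = 0 ∨ ω x y = 1)
    (hD₀ : D x₀ = 0)
    (hadj : ∀ x y, ω x y = 1 → D y = D x + 1 ∨ D x = D y + 1)
    (hup : ∀ x : T, {y : T | ω x y = 1 ∧ D y = D x + 1}.ncard = b)
    (hdown : ∀ x : T, x ≠ x₀ → {y : T | ω x y = 1 ∧ D y + 1 = D x}.ncard = 1)
    (f : T → ℝ) (hfix : ∀ x, stmt16A ω D x₀ b c V f x = f x) (x : T) :
    c⁻¹ * (∑' y, ω x y * (f y - f x)) - V x * f x = 0 := by
  have hden := stmt16_den_pos (x₀ := x₀) (c := c) (V := V) hb hc hV x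
  have hnum : (∑ y ∈ stmt16upF ω D x, f y) + (if x = x₀ then 0 else f (stmt16par ω D x₀ x))
      = f x * ((if x = x₀ then (b : ℝ) else (b : ℝ) + 1) + c * V x) := by
    have := hfix x
    rw [stmt16A, div_eq_iff (ne_of_gt hden)] at this
    exact this
  rw [stmt16_tsum hb hω01 hD₀ hadj hup hdown f x, hnum,
    show f x * ((if x = x₀ then (b : ℝ) else (b : ℝ) + 1) + c * V x)
        - (if x = x₀ then (b : ℝ) else (b : ℝ) + 1) * f x = c * (V x * f x) from by ring,
    inv_mul_cancel_left₀ (ne_of_gt hc), sub_self]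

lemma stmt16_mono {c : ℝ} {V : T → ℝ} (hb : 2 ≤ b) (hc : 0 < c) (hV : ∀ x, 0 < V x)
    {f g : T → ℝ} (h : ∀ y, f y ≤ g y) (x : T) :
    stmt16A ω D x₀ b c V f x ≤ stmt16A ω D x₀ b c V g x := by
  apply div_le_div_of_nonneg_right _ (le_of_lt (stmt16_den_pos (x₀ := x₀) hb hc hV x))
  gcongr
  · exact h _
  · split
    · exact le_refl _
    · exact h _

lemma stmt16_range (hb : 2 ≤ b) {c γ : ℝ} {V : T → ℝ} (hc : 0 < c) (hV : ∀ x, 0 < V x)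
    (hγ : 0 ≤ γ)
    (hup : ∀ x : T, {y : T | ω x y = 1 ∧ D y = D x + 1}.ncard = b)
    {f : T → ℝ} (h0 : ∀ y, 0 ≤ f y) (h1 : ∀ y, f y ≤ γ) (x : T) :
    0 ≤ stmt16A ω D x₀ b c V f x ∧ stmt16A ω D x₀ b c V f x ≤ γ := by
  have hden := stmt16_den_pos (x₀ := x₀) (c := c) (V := V) hb hc hV x
  constructor
  · apply div_nonneg _ (le_of_lt hden)
    apply add_nonneg (Finset.sum_nonneg fun y _ => h0 y)
    split
    · exact le_refl _
    · exact h0 _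
  · rw [stmt16A, div_le_iff₀ hden]
    have hsum : (∑ y ∈ stmt16upF ω D x, f y) ≤ (b : ℝ) * γ := by
      calc (∑ y ∈ stmt16upF ω D x, f y) ≤ ∑ _y ∈ stmt16upF ω D x, γ :=
            Finset.sum_le_sum fun y _ => h1 y
        _ = (b : ℝ) * γ := by
            rw [Finset.sum_const, stmt16_card_upF hb hup, nsmul_eq_mul]
    have hcv : 0 ≤ c * V x := le_of_lt (mul_pos hc (hV x))
    have hγcv : 0 ≤ γ * (c * V x) := mul_nonneg hγ hcv
    by_cases hx : x = x₀
    · rw [if_pos hx, if_pos hx]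
      nlinarith
    · rw [if_neg hx, if_neg hx]
      have := h1 (stmt16par ω D x₀ x)
      nlinarith

end aux

noncomputable def stmt16tail (α : ℝ) (k : ℕ) : ℝ := ∑' m : ℕ, ((m + k : ℕ) : ℝ) ^ (-α)

lemma stmt16tail_summable {α : ℝ} (hα : 1 < α) (k : ℕ) :
    Summable (fun m : ℕ => ((m + k : ℕ) : ℝ) ^ (-α)) :=
  (summable_nat_add_iff (f := fun m : ℕ => (m : ℝ) ^ (-α)) k).mpr
    (Real.summable_nat_rpow.mpr (by linarith))

lemma stmt16tail_nonneg {α : ℝ} (k : ℕ) : 0 ≤ stmt16tail α k :=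
  tsum_nonneg fun m => Real.rpow_nonneg (Nat.cast_nonneg _) _

lemma stmt16tail_step {α : ℝ} (hα : 1 < α) (k : ℕ) :
    stmt16tail α k = ((k : ℕ) : ℝ) ^ (-α) + stmt16tail α (k + 1) := by
  rw [stmt16tail, Summable.tsum_eq_zero_add (stmt16tail_summable hα k)]
  congr 1
  · norm_num
  · rw [stmt16tail]
    apply tsum_congr
    intro m
    congr 2
    omega

lemma stmt16tail_tendsto {α : ℝ} (hα : 1 < α) :
    Filter.Tendsto (stmt16tail α) Filter.atTop (nhds 0) :=
  tendsto_sum_nat_add (fun m : ℕ => (m : ℝ) ^ (-α))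

set_option maxHeartbeats 2000000 in
open scoped Classical in
/-- **Corollary 7.4.** On a homogeneous model tree with branching `b ≥ 2`, standard
edge weights and constant measure `c > 0`, if `0 < V(x) ≤ C₀ d(x,x₀)^{-α}` for
`d(x,x₀) ≥ R₀` with `α > 1`, `R₀ ≥ 2`, then for every `γ > 0` there is a bounded
solution `u` of `Δu − Vu = 0` with `u → γ` at infinity; in particular there are
infinitely many bounded solutions. -/
theorem stmt16 {T : Type*} [Countable T] [Infinite T]
    (ω : T → T → ℝ) (c : ℝ) (hc : 0 < c)
    (hω_symm : ∀ x y, ω x y = ω y x)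
    (hω_diag : ∀ x, ω x x = 0)
    (hω01 : ∀ x y, ω x y = 0 ∨ ω x y = 1)
    (x₀ : T) (b : ℕ) (hb : 2 ≤ b)
    (D : T → ℕ) (hD₀ : D x₀ = 0) (hDpos : ∀ x, x ≠ x₀ → 1 ≤ D x)
    (hadj : ∀ x y, ω x y = 1 → D y = D x + 1 ∨ D x = D y + 1)
    (hroot : {y : T | ω x₀ y = 1}.ncard = b)
    (hup : ∀ x : T, {y : T | ω x y = 1 ∧ D y = D x + 1}.ncard = b)
    (hdown : ∀ x : T, x ≠ x₀ → {y : T | ω x y = 1 ∧ D y + 1 = D x}.ncard = 1)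
    (V : T → ℝ) (hV : ∀ x, 0 < V x)
    (C₀ α R₀ : ℝ) (hα : 1 < α) (hC₀ : 0 < C₀) (hR₀ : 2 ≤ R₀)
    (hVup : ∀ x : T, R₀ ≤ (D x : ℝ) → V x ≤ C₀ * (D x : ℝ) ^ (-α)) :
    (∀ γ : ℝ, 0 < γ → ∃ u : T → ℝ,
      (∃ C : ℝ, ∀ x, |u x| ≤ C) ∧
      (∀ x : T, c⁻¹ * (∑' y, ω x y * (u y - u x)) - V x * u x = 0) ∧
      (∀ ε > (0 : ℝ), ∃ R > (0 : ℝ), ∀ x : T, R < (D x : ℝ) → |u x - γ| ≤ ε)) ∧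
    {u : T → ℝ | (∃ C : ℝ, ∀ x, |u x| ≤ C) ∧
      ∀ x : T, c⁻¹ * (∑' y, ω x y * (u y - u x)) - V x * u x = 0}.Infinite := by
    -- basic numerics
  have hb2 : (2:ℝ) ≤ (b:ℝ) := by exact_mod_cast hb
  have hbpos : (0:ℝ) < (b:ℝ) := by linarith
  have hb0 : (b:ℝ) ≠ 0 := ne_of_gt hbpos
  set β : ℝ := ((b:ℝ))⁻¹ with hβdef
  have hβ0 : 0 ≤ β := by rw [hβdef]; positivity
  have hβ1 : β < 1 := by rw [hβdef]; exact inv_lt_one_of_one_lt₀ (by linarith)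
  have hbβ : (b:ℝ) * β = 1 := mul_inv_cancel₀ hb0
  have hα0 : α ≠ 0 := by intro h; rw [h] at hα; linarith
  set q : ℝ := (((b:ℝ)+1)/2) ^ (α⁻¹) with hqdef
  have hbase1 : (1:ℝ) < ((b:ℝ)+1)/2 := by linarith
  have hbase0 : (0:ℝ) < ((b:ℝ)+1)/2 := by linarith
  have hq1 : 1 < q := by
    rw [hqdef, Real.one_lt_rpow_iff_of_pos hbase0]
    exact Or.inl ⟨hbase1, by positivity⟩
  have hq0 : 0 < q := lt_trans one_pos hq1
  obtain ⟨n₁, hn₁⟩ := exists_nat_ge ((q-1)⁻¹)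
  obtain ⟨n₂, hn₂⟩ := exists_nat_ge R₀
  set N : ℕ := max (max n₁ n₂) 2 with hNdef
  have hN2 : 2 ≤ N := le_max_right _ _
  have hNR : R₀ ≤ (N:ℝ) := by
    refine le_trans hn₂ ?_
    exact_mod_cast le_trans (le_max_right n₁ n₂) (le_max_left _ 2)
  have hNq : 1 ≤ (q-1) * (N:ℝ) := by
    have h1 : (q-1)⁻¹ ≤ (N:ℝ) := by
      refine le_trans hn₁ ?_
      exact_mod_cast le_trans (le_max_left n₁ n₂) (le_max_left _ 2)
    have h2 : 0 < q - 1 := by linarith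
    calc (1:ℝ) = (q-1) * (q-1)⁻¹ := (mul_inv_cancel₀ (ne_of_gt h2)).symm
      _ ≤ (q-1) * (N:ℝ) := by nlinarith
  -- decay comparison
  have hρ : ∀ m : ℕ, N ≤ m → ((m:ℝ)) ^ (-α) ≤ (((b:ℝ)+1)/2) * (((m:ℝ)+1)) ^ (-α) := by
    intro m hm
    have hm2 : (2:ℝ) ≤ (m:ℝ) := by exact_mod_cast le_trans hN2 hm
    have hm0 : (0:ℝ) < (m:ℝ) := by linarith
    have hNm : (N:ℝ) ≤ (m:ℝ) := by exact_mod_cast hm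
    have h1 : (m:ℝ) + 1 ≤ q * m := by nlinarith
    have h2 : ((m:ℝ)+1) ^ α ≤ (q * (m:ℝ)) ^ α :=
      Real.rpow_le_rpow (by linarith) h1 (by linarith)
    have h3 : (q * (m:ℝ)) ^ α = q ^ α * (m:ℝ) ^ α :=
      Real.mul_rpow (le_of_lt hq0) (le_of_lt hm0)
    have h4 : q ^ α = ((b:ℝ)+1)/2 := by
      rw [hqdef, ← Real.rpow_mul (le_of_lt hbase0), inv_mul_cancel₀ hα0, Real.rpow_one]
    have h5 : ((m:ℝ)+1) ^ α ≤ ((b:ℝ)+1)/2 * (m:ℝ) ^ α := by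
      calc ((m:ℝ)+1) ^ α ≤ (q * (m:ℝ)) ^ α := h2
        _ = q ^ α * (m:ℝ) ^ α := h3
        _ = ((b:ℝ)+1)/2 * (m:ℝ) ^ α := by rw [h4]
    have hp1 : (0:ℝ) < (m:ℝ) ^ α := Real.rpow_pos_of_pos hm0 α
    have hp2 : (0:ℝ) < ((m:ℝ)+1) ^ α := Real.rpow_pos_of_pos (by linarith) α
    rw [Real.rpow_neg (le_of_lt hm0), Real.rpow_neg (by linarith : (0:ℝ) ≤ (m:ℝ)+1),
      inv_eq_one_div, inv_eq_one_div, mul_one_div, div_le_div_iff₀ hp1 hp2]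
    nlinarith
  set κ : ℝ := 2 * c * C₀ / ((b:ℝ) - 1) with hκdef
  have hbm1 : (0:ℝ) < (b:ℝ) - 1 := by linarith
  have hκ0 : 0 ≤ κ := by
    rw [hκdef]; exact le_of_lt (div_pos (by positivity) hbm1)
  have hκeq : κ * ((b:ℝ) - 1) = 2 * (c * C₀) := by
    rw [hκdef]; field_simp
  set K : ℝ := (b:ℝ) ^ N with hKdef
  have hK0 : 0 ≤ K := by rw [hKdef]; positivity
  set φ : ℕ → ℝ := fun n => κ * stmt16tail α (max n N) with hφdef
  have hφ0 : ∀ n, 0 ≤ φ n := fun n => mul_nonneg hκ0 (stmt16tail_nonneg _)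
  have hφeq : ∀ n, n ≤ N → φ n = φ N := by
    intro n hn
    simp only [hφdef, max_eq_right hn, max_self]
  have hφstep : ∀ n, N ≤ n → φ n - φ (n+1) = κ * ((n:ℕ):ℝ) ^ (-α) := by
    intro n hn
    simp only [hφdef, max_eq_left hn, max_eq_left (by omega : N ≤ n + 1)]
    rw [stmt16tail_step hα n]
    ring
  have hφlim : Filter.Tendsto φ Filter.atTop (nhds 0) := by
    have h1 : Filter.Tendsto (fun k => κ * stmt16tail α k) Filter.atTop (nhds (κ * 0)) :=
      (stmt16tail_tendsto hα).const_mul κ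
    rw [mul_zero] at h1
    refine Filter.Tendsto.congr' ?_ h1
    filter_upwards [Filter.eventually_ge_atTop N] with n hn
    simp only [hφdef, max_eq_left hn]
  have hKβstep : ∀ k : ℕ, (b:ℝ) * (K * β ^ (k+1)) = K * β ^ k := by
    intro k; rw [pow_succ]; linear_combination (K * β ^ k) * hbβ
  have hKβN : K * β ^ N = 1 := by
    rw [hKdef, hβdef, ← mul_pow, mul_inv_cancel₀ hb0, one_pow]
  have hKβ0 : ∀ n, 0 ≤ K * β ^ n := fun n => mul_nonneg hK0 (pow_nonneg hβ0 n)
  have hKβbig : ∀ n, n < N → 2 ≤ K * β ^ n := by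
    intro n hn
    have hKn : K * β ^ n = (b:ℝ) ^ (N - n) := by
      have hsplit : N = (N - n) + n := by omega
      calc K * β ^ n = (b:ℝ) ^ ((N-n)+n) * β ^ n := by rw [hKdef, ← hsplit]
        _ = (b:ℝ)^(N-n) * ((b:ℝ)^n * β^n) := by rw [pow_add]; ring
        _ = (b:ℝ)^(N-n) := by rw [← mul_pow, hbβ, one_pow, mul_one]
    rw [hKn]
    calc (2:ℝ) ≤ (b:ℝ) := hb2
      _ = (b:ℝ)^1 := (pow_one _).symm
      _ ≤ (b:ℝ)^(N-n) := pow_le_pow_right₀ (by linarith) (by omega)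
  -- main construction
  have key : ∀ γ : ℝ, 0 < γ → ∃ u : T → ℝ,
      (∃ C : ℝ, ∀ x, |u x| ≤ C) ∧
      (∀ x : T, c⁻¹ * (∑' y, ω x y * (u y - u x)) - V x * u x = 0) ∧
      (∀ ε > (0 : ℝ), ∃ R > (0 : ℝ), ∀ x : T, R < (D x : ℝ) → |u x - γ| ≤ ε) := by
    intro γ hγ
    set v : T → ℝ := fun x => γ * (1 - φ (D x) - K * β ^ (D x)) with hvdef
    have hvγ : ∀ x, v x ≤ γ := by
      intro x
      simp only [hvdef]
      nlinarith [hφ0 (D x), hKβ0 (D x)]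
    have hAv : ∀ x, v x ≤ stmt16A ω D x₀ b c V v x := by
      intro x
      rw [stmt16A, le_div_iff₀ (stmt16_den_pos (x₀ := x₀) hb hc hV x)]
      have hsum : (∑ y ∈ stmt16upF ω D x, v y)
          = (b:ℝ) * (γ * (1 - φ (D x + 1) - K * β ^ (D x + 1))) := by
        have h : ∀ y ∈ stmt16upF ω D x, v y = γ * (1 - φ (D x + 1) - K * β ^ (D x + 1)) := by
          intro y hy
          simp only [hvdef]
          rw [((stmt16_mem_upF hb hup x y).mp hy).2]
        rw [Finset.sum_congr rfl h, Finset.sum_const, stmt16_card_upF hb hup, nsmul_eq_mul]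
      rw [hsum]
      have hcV : 0 < c * V x := mul_pos hc (hV x)
      by_cases hx : x = x₀
      · subst hx
        rw [if_pos rfl, if_pos rfl]
        simp only [hvdef, hD₀]
        have e0 : φ 0 = φ N := hφeq 0 (by omega)
        have e1 : φ (0+1) = φ N := hφeq (0+1) (by omega)
        have hK2 : 2 ≤ K * β ^ 0 := hKβbig 0 (by omega)
        have eK : (b:ℝ) * (K * β^(0+1)) = K * β^0 := hKβstep 0
        have hw : 0 ≤ (c * V x) * (K * β ^ 0 + φ N - 1) :=
          mul_nonneg hcV.le (by nlinarith [hφ0 N])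
        rw [e0, e1]
        nlinarith [mul_nonneg hγ.le hw,
          mul_nonneg (mul_nonneg hγ.le (hKβ0 0)) (by linarith : (0:ℝ) ≤ (b:ℝ)-1),
          mul_le_mul_of_nonneg_left (le_of_eq eK) hγ.le, hγ.le,
          mul_le_mul_of_nonneg_left (le_of_eq eK.symm) hγ.le]
      · rw [if_neg hx, if_neg hx]
        obtain ⟨m, hm⟩ : ∃ m, D x = m + 1 := ⟨D x - 1, by have := hDpos x hx; omega⟩
        have hparD : D (stmt16par ω D x₀ x) = m := by
          have := (stmt16_par_spec (x₀ := x₀) hdown hx).2; omega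
        simp only [hvdef]
        rw [hm, hparD]
        have eK1 : (b:ℝ) * (K * β^(m+1+1)) = K * β^(m+1) := hKβstep (m+1)
        have eK0 : (b:ℝ) * (K * β^(m+1)) = K * β^m := hKβstep m
        have hred : c * V x * (1 - φ (m+1) - K * β^(m+1))
            ≤ (b:ℝ) * (φ (m+1) - φ (m+1+1)) - (φ m - φ (m+1)) := by
          rcases lt_trichotomy (m+1) N with hlt | heqN | hgt
          · have e0 : φ m = φ N := hφeq m (by omega)
            have e1 : φ (m+1) = φ N := hφeq (m+1) (by omega)
            have e2 : φ (m+1+1) = φ N := hφeq (m+1+1) (by omega)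
            have h2 : 2 ≤ K * β^(m+1) := hKβbig (m+1) hlt
            have hw : 1 - φ (m+1) - K * β^(m+1) ≤ 0 := by nlinarith [hφ0 (m+1)]
            have h3 := mul_nonpos_of_nonneg_of_nonpos hcV.le hw
            simp only [e0, e1, e2] at h3 ⊢
            linarith
          · have e0 : φ m = φ N := hφeq m (by omega)
            have e1 : φ (m+1) = φ N := by rw [heqN]
            have hstepN : φ (m+1) - φ (m+1+1) = κ * (((m+1:ℕ)):ℝ)^(-α) :=
              hφstep (m+1) (by omega)
            have hKN : K * β^(m+1) = 1 := by rw [heqN]; exact hKβN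
            have hw : 1 - φ (m+1) - K * β^(m+1) ≤ 0 := by
              rw [hKN]; nlinarith [hφ0 (m+1)]
            have h1 : 0 ≤ κ * (((m+1:ℕ)):ℝ)^(-α) :=
              mul_nonneg hκ0 (Real.rpow_nonneg (by positivity) _)
            have h2 : 0 ≤ (b:ℝ) * (κ * (((m+1:ℕ)):ℝ)^(-α)) := mul_nonneg hbpos.le h1
            have h3 := mul_nonpos_of_nonneg_of_nonpos hcV.le hw
            have h4 : (b:ℝ) * (φ (m+1) - φ (m+1+1)) = (b:ℝ) * (κ * (((m+1:ℕ)):ℝ)^(-α)) := by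
              rw [hstepN]
            linarith
          · have hNm : N ≤ m := by omega
            have hstep1 : φ (m+1) - φ (m+1+1) = κ * (((m+1:ℕ)):ℝ)^(-α) :=
              hφstep (m+1) (by omega)
            have hstep0 : φ m - φ (m+1) = κ * (((m:ℕ)):ℝ)^(-α) := hφstep m hNm
            have hrm := hρ m hNm
            have hcastNm : ((N:ℕ):ℝ) ≤ (m:ℝ) := Nat.cast_le.mpr hNm
            have hVx : V x ≤ C₀ * ((D x:ℝ))^(-α) := hVup x (by rw [hm]; push_cast; linarith)
            rw [hm] at hVx
            push_cast at hVx hstep1 hstep0 ⊢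
            have ht0 : (0:ℝ) ≤ ((m:ℝ)+1)^(-α) := Real.rpow_nonneg (by positivity) _
            have s1 : c * V x * (1 - φ (m+1) - K * β^(m+1)) ≤ c * V x := by
              nlinarith [hφ0 (m+1), hKβ0 (m+1), hcV]
            have s2 : c * V x ≤ c * (C₀ * ((m:ℝ)+1)^(-α)) :=
              mul_le_mul_of_nonneg_left hVx hc.le
            have s3 : κ * ((m:ℝ))^(-α) ≤ κ * (((b:ℝ)+1)/2 * ((m:ℝ)+1)^(-α)) :=
              mul_le_mul_of_nonneg_left hrm hκ0
            have s5 : κ * ((b:ℝ)-1) * (((m:ℝ)+1)^(-α)) = 2*(c*C₀) * (((m:ℝ)+1)^(-α)) := by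
              rw [hκeq]
            have s4 : c * (C₀ * ((m:ℝ)+1)^(-α))
                ≤ (b:ℝ) * (κ * ((m:ℝ)+1)^(-α)) - κ * ((m:ℝ))^(-α) := by
              nlinarith [s3, s5]
            calc c * V x * (1 - φ (m+1) - K * β^(m+1)) ≤ c * V x := s1
              _ ≤ c * (C₀ * ((m:ℝ)+1)^(-α)) := s2
              _ ≤ (b:ℝ) * (κ * ((m:ℝ)+1)^(-α)) - κ * ((m:ℝ))^(-α) := s4
              _ = (b:ℝ) * (φ (m+1) - φ (m+1+1)) - (φ m - φ (m+1)) := by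
                  rw [hstep1, hstep0]
        have g1 : γ * ((b:ℝ) * (K * β^(m+1+1))) = γ * (K * β^(m+1)) := by rw [eK1]
        have g2 : γ * ((b:ℝ) * (K * β^(m+1))) = γ * (K * β^m) := by rw [eK0]
        have g3 := mul_le_mul_of_nonneg_left hred hγ.le
        nlinarith [g1, g2, g3]
    -- iterates
    set u : ℕ → T → ℝ := fun k => (stmt16A ω D x₀ b c V)^[k] (fun _ => γ) with hudef
    have hu0 : ∀ x, u 0 x = γ := by intro x; simp only [hudef]; rfl
    have husucc : ∀ k, u (k+1) = stmt16A ω D x₀ b c V (u k) := by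
      intro k; simp only [hudef]; exact Function.iterate_succ_apply' _ _ _
    have hrange : ∀ k, (∀ x, 0 ≤ u k x) ∧ (∀ x, u k x ≤ γ) := by
      intro k; induction k with
      | zero => exact ⟨fun x => by rw [hu0 x]; exact hγ.le, fun x => by rw [hu0 x]⟩
      | succ k ih =>
        constructor <;> intro x <;> rw [husucc k]
        · exact (stmt16_range hb hc hV hγ.le hup ih.1 ih.2 x).1
        · exact (stmt16_range hb hc hV hγ.le hup ih.1 ih.2 x).2
    have hanti : ∀ k x, u (k+1) x ≤ u k x := by
      intro k; induction k with
      | zero =>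
        intro x; rw [husucc 0]
        exact le_trans (stmt16_range hb hc hV hγ.le hup (hrange 0).1 (hrange 0).2 x).2
          (le_of_eq (hu0 x).symm)
      | succ k ih =>
        intro x
        rw [husucc (k+1)]
        refine le_trans (stmt16_mono hb hc hV (fun y => ih y) x) ?_
        exact le_of_eq (congrFun (husucc k) x).symm
    have hvle : ∀ k x, v x ≤ u k x := by
      intro k; induction k with
      | zero => intro x; exact le_trans (hvγ x) (le_of_eq (hu0 x).symm)
      | succ k ih =>
        intro x; rw [husucc k]
        exact le_trans (hAv x) (stmt16_mono hb hc hV (fun y => ih y) x)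
    set U : T → ℝ := fun x => ⨅ k, u k x with hUdef
    have hUbdd : ∀ x, BddBelow (Set.range fun k => u k x) := by
      intro x; refine ⟨0, ?_⟩; rintro r ⟨k, rfl⟩; exact (hrange k).1 x
    have htend : ∀ x, Filter.Tendsto (fun k => u k x) Filter.atTop (nhds (U x)) := by
      intro x
      simp only [hUdef]
      exact tendsto_atTop_ciInf (antitone_nat_of_succ_le fun k => hanti k x) (hUbdd x)
    have hUγ : ∀ x, U x ≤ γ := by
      intro x
      simp only [hUdef]
      exact le_trans (ciInf_le (hUbdd x) 0) (le_of_eq (hu0 x))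
    have hU0 : ∀ x, 0 ≤ U x := by
      intro x; simp only [hUdef]; exact le_ciInf fun k => (hrange k).1 x
    have hUv : ∀ x, v x ≤ U x := by
      intro x; simp only [hUdef]; exact le_ciInf fun k => hvle k x
    have hfixU : ∀ x, stmt16A ω D x₀ b c V U x = U x := by
      intro x
      have h1 := (htend x).comp (tendsto_add_atTop_nat 1)
      have h1' : Filter.Tendsto (fun k => stmt16A ω D x₀ b c V (u k) x)
          Filter.atTop (nhds (U x)) := by
        refine h1.congr fun k => ?_
        simp only [Function.comp_apply]
        rw [husucc k]
      have h2 : Filter.Tendsto (fun k => stmt16A ω D x₀ b c V (u k) x)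
          Filter.atTop (nhds (stmt16A ω D x₀ b c V U x)) := by
        have hs : Filter.Tendsto (fun k => ∑ y ∈ stmt16upF ω D x, u k y)
            Filter.atTop (nhds (∑ y ∈ stmt16upF ω D x, U y)) :=
          tendsto_finset_sum _ fun y _ => htend y
        have hi : Filter.Tendsto
            (fun k => if x = x₀ then (0:ℝ) else u k (stmt16par ω D x₀ x))
            Filter.atTop (nhds (if x = x₀ then (0:ℝ) else U (stmt16par ω D x₀ x))) := by
          by_cases hx : x = x₀
          · simp only [if_pos hx]; exact tendsto_const_nhds
          · simp only [if_neg hx]; exact htend _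
        simpa only [stmt16A] using (hs.add hi).div_const _
      exact tendsto_nhds_unique h2 h1'
    refine ⟨U, ⟨γ, fun x => abs_le.mpr ⟨by linarith [hU0 x], hUγ x⟩⟩,
      fun x => stmt16_eq_of_fix hb hc hV hω01 hD₀ hadj hup hdown U hfixU x, ?_⟩
    intro ε hε
    have hKβtend : Filter.Tendsto (fun n : ℕ => K * β ^ n) Filter.atTop (nhds 0) := by
      have h := (tendsto_pow_atTop_nhds_zero_of_lt_one hβ0 hβ1).const_mul K
      rwa [mul_zero] at h
    have hgap : Filter.Tendsto (fun n : ℕ => γ * (φ n + K * β ^ n)) Filter.atTop (nhds 0) := by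
      have h := (hφlim.add hKβtend).const_mul γ
      rwa [add_zero, mul_zero] at h
    have hev : ∀ᶠ n : ℕ in Filter.atTop, γ * (φ n + K * β ^ n) < ε :=
      hgap.eventually_lt_const hε
    obtain ⟨n₀, hn₀⟩ := Filter.eventually_atTop.mp hev
    refine ⟨(n₀ : ℝ) + 1, by positivity, ?_⟩
    intro x hx
    have hDx : n₀ ≤ D x := by
      have h : (n₀ : ℝ) < (D x : ℝ) := by linarith
      exact_mod_cast h.le
    have h1 : γ - U x ≤ γ * (φ (D x) + K * β ^ (D x)) := by
      have h := hUv x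
      simp only [hvdef] at h
      nlinarith [h]
    rw [abs_of_nonpos (by linarith [hUγ x])]
    have h2 := hn₀ (D x) hDx
    linarith
  refine ⟨key, ?_⟩
  -- infinitely many bounded solutions
  have hlev : ∀ n : ℕ, ∃ x, D x = n := by
    intro n; induction n with
    | zero => exact ⟨x₀, hD₀⟩
    | succ n ih =>
      obtain ⟨x, hx⟩ := ih
      have hne : {y : T | ω x y = 1 ∧ D y = D x + 1}.ncard ≠ 0 := by rw [hup x]; omega
      obtain ⟨y, hy⟩ := Set.nonempty_of_ncard_ne_zero hne
      exact ⟨y, by rw [hy.2, hx]⟩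
  obtain ⟨u1, ⟨C, hC⟩, heq1, hlim1⟩ := key 1 one_pos
  obtain ⟨R, hRpos, hRlim⟩ := hlim1 (1/2) (by norm_num)
  obtain ⟨n₁, hn₁⟩ := exists_nat_gt R
  obtain ⟨x₁, hx₁⟩ := hlev n₁
  have hx₁R : R < (D x₁ : ℝ) := by rw [hx₁]; exact hn₁
  have habs := hRlim x₁ hx₁R
  have hu1 : (1:ℝ)/2 ≤ u1 x₁ := by
    have h := (abs_le.mp habs).1; linarith
  refine Set.infinite_of_injective_forall_mem
    (f := fun t : ℝ => (fun x => t * u1 x : T → ℝ)) ?_ ?_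
  · intro t1 t2 h
    have h' := congrFun h x₁
    simp only at h'
    exact mul_right_cancel₀ (by intro h0; rw [h0] at hu1; linarith) h'
  · intro t
    simp only [Set.mem_setOf_eq]
    refine ⟨⟨|t| * C, fun x => ?_⟩, fun x => ?_⟩
    · rw [abs_mul]
      exact mul_le_mul_of_nonneg_left (hC x) (abs_nonneg t)
    · have hts : ∑' y, ω x y * (t * u1 y - t * u1 x) = t * ∑' y, ω x y * (u1 y - u1 x) := by
        rw [← tsum_mul_left]
        exact tsum_congr fun y => by ring
      rw [hts]
      linear_combination t * heq1 x
end

section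
/- Let (T, ω, μ) be a homogeneous model tree with root x₀, branching b ≥ 2, standard edge weights and constant measure μ ≡ 1, let d be the graph distance from the root, let α > 1, and define V(x) := (1 + d(x,x₀))^{-α}. Then: (a) for every Λ ∈ (0,1) one has ∑_{x ∈ T, d(x,x₀) ≥ 1} e^{-Λ d(x,x₀)^α} μ(x) = ∑_{n=1}^{∞} b^n e^{-Λ n^α} < ∞; and (b) there exists a nontrivial bounded function u : T → ℝ with Δu(x) − V(x)u(x) = 0 for all x ∈ T. Hence the Liouville property fails for this potential even though the summability condition (2.8) of the Liouville theorem holds for every Λ ∈ (0,1). -/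
/-!
Spheres around the root have `b ^ n` vertices, so the series in (a) regroups into
`∑ bⁿ e^{-Λ nᵅ}`, which converges because `Λ nᵅ ≥ n (log b + 1)` for large `n`.

For (b) take a radial function `u = f ∘ d`. The equation `Δu = Vu` at the root and on the sphere
of radius `n + 1` is a second-order recurrence for `f`, solved from `f 0 = 1`. Its solution is
increasing, and because `b ≥ 2` its relative increments `rₙ = (f (n+1) - f n) / f n` satisfy
`r (n+1) ≤ (rₙ + V (n+1)) / 2`. They are therefore summable (`V` is, as `α > 1`), and
`f ≤ f 0 · exp (∑ rₙ)` is bounded.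
-/

open Filter Finset

theorem summable_pow_mul_exp_neg_rpow {a Λ α : ℝ} (ha : 0 < a) (hΛ : 0 < Λ) (hα : 1 < α) :
    Summable fun n : ℕ => a ^ n * Real.exp (-Λ * (n : ℝ) ^ α) := by
  have hgrowth : Tendsto (fun n : ℕ => Λ * (n : ℝ) ^ (α - 1)) atTop atTop :=
    ((tendsto_rpow_atTop (sub_pos.2 hα)).comp tendsto_natCast_atTop_atTop).const_mul_atTop hΛ
  refine Summable.of_norm_bounded_eventually_nat
    (summable_geometric_of_lt_one (Real.exp_nonneg (-1)) (Real.exp_lt_one_iff.2 (by norm_num))) ?_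
  filter_upwards [hgrowth.eventually_ge_atTop (Real.log a + 1)] with n hn
  have hsplit : (n : ℝ) ^ α = n * (n : ℝ) ^ (α - 1) := by
    rw [← Real.rpow_one_add' (Nat.cast_nonneg n) (by linarith), add_sub_cancel]
  rw [Real.norm_of_nonneg (by positivity), ← Real.exp_log ha, ← Real.exp_nat_mul, ← Real.exp_add,
    ← Real.exp_nat_mul, Real.exp_le_exp, hsplit]
  nlinarith [mul_le_mul_of_nonneg_left hn (Nat.cast_nonneg (α := ℝ) n)]

theorem summable_of_succ_le_mul_add {r w : ℕ → ℝ} {c : ℝ} (hc0 : 0 ≤ c) (hc1 : c < 1)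
    (hr : ∀ n, 0 ≤ r n) (hw0 : ∀ n, 0 ≤ w n) (hw : Summable w)
    (hrec : ∀ n, r (n + 1) ≤ c * (r n + w n)) : Summable r := by
  refine summable_of_sum_range_le hr (c := (r 0 + c * ∑' k, w k) / (1 - c)) fun n => ?_
  have hstep : ∑ k ∈ range (n + 1), r k ≤ r 0 + c * (∑ k ∈ range n, r k + ∑' k, w k) :=
    calc ∑ k ∈ range (n + 1), r k = ∑ k ∈ range n, r (k + 1) + r 0 := sum_range_succ' r n
      _ ≤ ∑ k ∈ range n, c * (r k + w k) + r 0 := by gcongr with k; exact hrec k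
      _ = r 0 + c * (∑ k ∈ range n, r k + ∑ k ∈ range n, w k) := by
        rw [← mul_sum, sum_add_distrib]; ring
      _ ≤ r 0 + c * (∑ k ∈ range n, r k + ∑' k, w k) := by
        gcongr; exact hw.sum_le_tsum _ fun k _ => hw0 k
  have hmono : ∑ k ∈ range n, r k ≤ ∑ k ∈ range (n + 1), r k := by
    rw [sum_range_succ]; linarith [hr n]
  rw [le_div_iff₀ (sub_pos.2 hc1)]
  nlinarith

theorem le_mul_exp_tsum_of_succ_le_mul_one_add {f r : ℕ → ℝ} (hf0 : 0 ≤ f 0)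
    (hr0 : ∀ n, 0 ≤ r n) (hr : Summable r) (hrec : ∀ n, f (n + 1) ≤ f n * (1 + r n)) (n : ℕ) :
    f n ≤ f 0 * Real.exp (∑' k, r k) := by
  have hpartial : ∀ n, f n ≤ f 0 * Real.exp (∑ k ∈ range n, r k) := by
    intro n
    induction n with
    | zero => simp
    | succ n ih =>
      calc f (n + 1) ≤ f n * (1 + r n) := hrec n
        _ ≤ f 0 * Real.exp (∑ k ∈ range n, r k) * Real.exp (r n) :=
          mul_le_mul ih (by linarith [Real.add_one_le_exp (r n)]) (by linarith [hr0 n])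
            (mul_nonneg hf0 (Real.exp_pos _).le)
        _ = f 0 * Real.exp (∑ k ∈ range (n + 1), r k) := by
          rw [sum_range_succ, Real.exp_add, mul_assoc]
  exact (hpartial n).trans <| by gcongr; exact hr.sum_le_tsum _ fun k _ => hr0 k

theorem finsum_mem_const {α M : Type*} [AddCommMonoid M] (s : Set α) (c : M) :
    ∑ᶠ _ ∈ s, c = s.ncard • c := by
  rcases s.finite_or_infinite with hs | hs
  · rw [finsum_mem_eq_finite_toFinset_sum _ hs, sum_const, Set.ncard_eq_toFinset_card s hs]
  · rcases eq_or_ne c 0 with rfl | hc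
    · simp
    · rw [hs.ncard, zero_smul]
      exact finsum_mem_eq_zero_of_infinite (by rwa [Function.support_const hc, Set.inter_univ])

theorem hasSum_comp_of_finite_fibers {S : Type*} (π : S → ℕ) (hfin : ∀ n, (π ⁻¹' {n}).Finite)
    {g : ℕ → ℝ} (hg : ∀ n, 0 ≤ g n) (hs : Summable fun n => (π ⁻¹' {n}).ncard * g n) :
    HasSum (fun x => g (π x)) (∑' n, (π ⁻¹' {n}).ncard * g n) := by
  have hfiber : ∀ n, ∑' x : π ⁻¹' {n}, g (π x) = (π ⁻¹' {n}).ncard * g n := fun n => by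
    rw [tsum_congr fun x : π ⁻¹' {n} => congrArg g x.2, tsum_const, Nat.card_coe_set_eq,
      nsmul_eq_mul]
  have hsummable : Summable fun x => g (π x) := by
    refine (summable_partition (fun x => hg (π x)) (s := fun n => π ⁻¹' {n})
      fun x => ⟨π x, rfl, fun n hn => hn.symm⟩).2 ⟨fun n => ?_, by simpa only [hfiber] using hs⟩
    have := (hfin n).to_subtype
    exact Summable.of_finite
  have hfiberwise := hsummable.hasSum.tsum_fiberwise π
  simp only [hfiber] at hfiberwise
  rw [hfiberwise.tsum_eq]
  exact hsummable.hasSum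

noncomputable def radialProfile (b : ℝ) (V : ℕ → ℝ) : ℕ → ℝ
  | 0 => 1
  | 1 => 1 + V 0 / b
  | n + 2 => radialProfile b V (n + 1) +
      (radialProfile b V (n + 1) - radialProfile b V n + V (n + 1) * radialProfile b V (n + 1)) / b

namespace radialProfile

variable {b : ℝ} {V : ℕ → ℝ}

theorem mul_sub_zero (hb : b ≠ 0) :
    b * (radialProfile b V 1 - radialProfile b V 0) = V 0 * radialProfile b V 0 := by
  simp only [radialProfile]
  field_simp
  ring

theorem mul_sub_succ (hb : b ≠ 0) (n : ℕ) :
    b * (radialProfile b V (n + 2) - radialProfile b V (n + 1)) +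
      (radialProfile b V n - radialProfile b V (n + 1)) = V (n + 1) * radialProfile b V (n + 1) := by
  rw [radialProfile]
  field_simp
  ring

theorem one_le_and_le_succ (hb : 0 < b) (hV : ∀ n, 0 ≤ V n) (n : ℕ) :
    1 ≤ radialProfile b V n ∧ radialProfile b V n ≤ radialProfile b V (n + 1) := by
  induction n with
  | zero =>
    simp only [radialProfile]
    exact ⟨le_rfl, le_add_of_nonneg_right (div_nonneg (hV 0) hb.le)⟩
  | succ n ih =>
    have hstep := mul_sub_succ (V := V) hb.ne' n
    have hgrowth : 0 ≤ b * (radialProfile b V (n + 2) - radialProfile b V (n + 1)) := by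
      nlinarith [hV (n + 1)]
    exact ⟨ih.1.trans ih.2, sub_nonneg.1 (nonneg_of_mul_nonneg_right hgrowth hb)⟩

theorem bddAbove_range (hb : 2 ≤ b) (hV0 : ∀ n, 0 ≤ V n) (hV : Summable V) :
    BddAbove (Set.range (radialProfile b V)) := by
  set f := radialProfile b V
  have hf := one_le_and_le_succ (by linarith) hV0
  have hfpos : ∀ n, 0 < f n := fun n => by linarith [(hf n).1]
  set r : ℕ → ℝ := fun n => (f (n + 1) - f n) / f n
  have hr0 : ∀ n, 0 ≤ r n := fun n => div_nonneg (sub_nonneg.2 (hf n).2) (hfpos n).le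
  have hrec : ∀ n, r (n + 1) ≤ 1 / 2 * (r n + V (n + 1)) := by
    intro n
    have hr : r (n + 1) = ((f (n + 1) - f n) / f (n + 1) + V (n + 1)) / b := by
      have hstep : b * (f (n + 2) - f (n + 1)) + (f n - f (n + 1)) = V (n + 1) * f (n + 1) :=
        mul_sub_succ (by linarith) n
      have := (hfpos (n + 1)).ne'
      simp only [r]
      field_simp
      linarith
    have hdiff : (f (n + 1) - f n) / f (n + 1) ≤ r n :=
      div_le_div_of_nonneg_left (sub_nonneg.2 (hf n).2) (hfpos n) (hf n).2
    rw [hr]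
    calc ((f (n + 1) - f n) / f (n + 1) + V (n + 1)) / b
        ≤ ((f (n + 1) - f n) / f (n + 1) + V (n + 1)) / 2 :=
          div_le_div_of_nonneg_left (add_nonneg (div_nonneg (sub_nonneg.2 (hf n).2)
            (hfpos _).le) (hV0 _)) two_pos hb
      _ ≤ 1 / 2 * (r n + V (n + 1)) := by linarith
  have hr := summable_of_succ_le_mul_add (by norm_num) (by norm_num) hr0 (fun n => hV0 (n + 1))
    ((summable_nat_add_iff 1).2 hV) hrec
  refine ⟨f 0 * Real.exp (∑' k, r k), Set.forall_mem_range.2 <|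
    le_mul_exp_tsum_of_succ_le_mul_one_add (hfpos 0).le hr0 hr fun n => ?_⟩
  rw [mul_add, mul_one, mul_div_cancel₀ _ (hfpos n).ne']
  linarith

end radialProfile

section ModelTree

variable {T : Type*}

def upNeighbors (ω : T → T → ℝ) (D : T → ℕ) (x : T) : Set T := {y | ω x y = 1 ∧ D y = D x + 1}

def downNeighbors (ω : T → T → ℝ) (D : T → ℕ) (x : T) : Set T := {y | ω x y = 1 ∧ D y + 1 = D x}

structure IsHomogeneousTree (ω : T → T → ℝ) (x₀ : T) (b : ℕ) (D : T → ℕ) : Prop where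
  symm : ∀ x y, ω x y = ω y x
  eq_zero_or_eq_one : ∀ x y, ω x y = 0 ∨ ω x y = 1
  dist_root : D x₀ = 0
  dist_adj : ∀ x y, ω x y = 1 → D y = D x + 1 ∨ D x = D y + 1
  ncard_upNeighbors : ∀ x, (upNeighbors ω D x).ncard = b
  ncard_downNeighbors : ∀ x, x ≠ x₀ → (downNeighbors ω D x).ncard = 1

namespace IsHomogeneousTree

variable {ω : T → T → ℝ} {x₀ : T} {b : ℕ} {D : T → ℕ}

theorem upNeighbors_finite (h : IsHomogeneousTree ω x₀ b D) (hb : 0 < b) (x : T) :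
    (upNeighbors ω D x).Finite :=
  Set.finite_of_ncard_ne_zero (by rw [h.ncard_upNeighbors x]; exact hb.ne')

theorem downNeighbors_root (h : IsHomogeneousTree ω x₀ b D) : downNeighbors ω D x₀ = ∅ :=
  Set.eq_empty_of_forall_notMem fun y hy => by
    have := hy.2
    rw [h.dist_root] at this
    omega

theorem exists_downNeighbors_eq_singleton (h : IsHomogeneousTree ω x₀ b D) {x : T} (hx : x ≠ x₀) :
    ∃ p, downNeighbors ω D x = {p} :=
  Set.ncard_eq_one.1 (h.ncard_downNeighbors x hx)

theorem dist_eq_zero_iff (h : IsHomogeneousTree ω x₀ b D) {x : T} : D x = 0 ↔ x = x₀ := by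
  refine ⟨fun hx => by_contra fun hne => ?_, fun hx => hx ▸ h.dist_root⟩
  obtain ⟨p, hp⟩ := h.exists_downNeighbors_eq_singleton hne
  have := (hp ▸ rfl : p ∈ downNeighbors ω D x).2
  omega

theorem downNeighbors_finite (h : IsHomogeneousTree ω x₀ b D) (x : T) :
    (downNeighbors ω D x).Finite := by
  rcases eq_or_ne x x₀ with rfl | hx
  · simp [h.downNeighbors_root]
  · obtain ⟨p, hp⟩ := h.exists_downNeighbors_eq_singleton hx
    simp [hp]

theorem mem_upNeighbors_iff (h : IsHomogeneousTree ω x₀ b D) {x y : T} :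
    y ∈ upNeighbors ω D x ↔ x ∈ downNeighbors ω D y := by
  simp only [upNeighbors, downNeighbors, Set.mem_ofPred_eq, h.symm x y, eq_comm]

theorem eq_of_mem_upNeighbors (h : IsHomogeneousTree ω x₀ b D) {x x' y : T}
    (hx : y ∈ upNeighbors ω D x) (hx' : y ∈ upNeighbors ω D x') : x = x' := by
  have hy : y ≠ x₀ := h.dist_eq_zero_iff.not.1 (by rw [hx.2]; omega)
  obtain ⟨p, hp⟩ := h.exists_downNeighbors_eq_singleton hy
  rw [h.mem_upNeighbors_iff, hp] at hx hx'
  exact hx.trans hx'.symm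

theorem sphere_zero (h : IsHomogeneousTree ω x₀ b D) : {x | D x = 0} = {x₀} :=
  Set.ext fun _ => h.dist_eq_zero_iff

theorem sphere_succ (h : IsHomogeneousTree ω x₀ b D) (n : ℕ) :
    {x | D x = n + 1} = ⋃ z ∈ {x | D x = n}, upNeighbors ω D z := by
  ext y
  simp only [Set.mem_ofPred_eq, Set.mem_iUnion, exists_prop]
  constructor
  · intro hy
    have hy₀ : y ≠ x₀ := h.dist_eq_zero_iff.not.1 (by omega)
    obtain ⟨p, hp⟩ := h.exists_downNeighbors_eq_singleton hy₀
    have hpy : p ∈ downNeighbors ω D y := hp ▸ rfl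
    exact ⟨p, by have := hpy.2; omega, h.mem_upNeighbors_iff.2 hpy⟩
  · rintro ⟨z, hz, hzy⟩
    rw [hzy.2, hz]

theorem sphere_finite (h : IsHomogeneousTree ω x₀ b D) (hb : 0 < b) (n : ℕ) :
    {x | D x = n}.Finite := by
  induction n with
  | zero => simp [h.sphere_zero]
  | succ n ih =>
    rw [h.sphere_succ]
    exact ih.biUnion fun z _ => h.upNeighbors_finite hb z

theorem ncard_sphere (h : IsHomogeneousTree ω x₀ b D) (hb : 0 < b) (n : ℕ) :
    {x | D x = n}.ncard = b ^ n := by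
  induction n with
  | zero => simp [h.sphere_zero]
  | succ n ih =>
    rw [h.sphere_succ, (h.sphere_finite hb n).ncard_biUnion (fun z _ => h.upNeighbors_finite hb z)
      fun z _ z' _ hne => Set.disjoint_left.2 fun y hy hy' => hne (h.eq_of_mem_upNeighbors hy hy'),
      finsum_mem_congr rfl fun z _ => h.ncard_upNeighbors z, finsum_mem_const, ih, smul_eq_mul,
      pow_succ]

theorem tsum_mul_eq_finsum (h : IsHomogeneousTree ω x₀ b D) (hb : 0 < b) (φ : T → ℝ) (x : T) :
    ∑' y, ω x y * φ y = ∑ᶠ y ∈ upNeighbors ω D x, φ y + ∑ᶠ y ∈ downNeighbors ω D x, φ y := by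
  have hneighbors : {y | ω x y = 1} = upNeighbors ω D x ∪ downNeighbors ω D x := by
    ext y
    simp only [upNeighbors, downNeighbors, Set.mem_union, Set.mem_ofPred_eq]
    constructor
    · intro hy
      rcases h.dist_adj x y hy with hD | hD
      exacts [Or.inl ⟨hy, hD⟩, Or.inr ⟨hy, hD.symm⟩]
    · rintro (hy | hy) <;> exact hy.1
  have hindicator : (fun y => ω x y * φ y) = {y | ω x y = 1}.indicator φ := by
    ext y
    rcases h.eq_zero_or_eq_one x y with hy | hy <;> simp [Set.indicator, hy]
  have hfin : {y | ω x y = 1}.Finite := by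
    rw [hneighbors]
    exact (h.upNeighbors_finite hb x).union (h.downNeighbors_finite x)
  rw [hindicator, tsum_eq_finsum (hfin.subset (Set.support_indicator_subset)), ← finsum_mem_def,
    hneighbors, finsum_mem_union _ (h.upNeighbors_finite hb x) (h.downNeighbors_finite x)]
  exact Set.disjoint_left.2 fun y hup hdown => by have := hup.2; have := hdown.2; omega

theorem tsum_mul_sub_eq_of_radial (h : IsHomogeneousTree ω x₀ b D) (hb : 0 < b) {f W : ℕ → ℝ}
    (hroot : b * (f 1 - f 0) = W 0 * f 0)
    (hsucc : ∀ n, b * (f (n + 2) - f (n + 1)) + (f n - f (n + 1)) = W (n + 1) * f (n + 1))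
    (x : T) : ∑' y, ω x y * (f (D y) - f (D x)) = W (D x) * f (D x) := by
  have hup : ∑ᶠ y ∈ upNeighbors ω D x, (f (D y) - f (D x)) = b * (f (D x + 1) - f (D x)) := by
    rw [finsum_mem_congr rfl fun y hy => by rw [hy.2], finsum_mem_const, h.ncard_upNeighbors,
      nsmul_eq_mul]
  rw [h.tsum_mul_eq_finsum hb, hup]
  rcases eq_or_ne x x₀ with rfl | hx
  · rw [h.downNeighbors_root, finsum_mem_empty, h.dist_root, add_zero, hroot]
  · obtain ⟨p, hp⟩ := h.exists_downNeighbors_eq_singleton hx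
    have hpx : D x = D p + 1 := ((hp ▸ rfl : p ∈ downNeighbors ω D x).2).symm
    rw [hp, finsum_mem_singleton, hpx, ← hsucc]

theorem hasSum_comp_dist (h : IsHomogeneousTree ω x₀ b D) (hb : 0 < b) {g : ℕ → ℝ}
    (hg : ∀ n, 0 ≤ g n) (hs : Summable fun n : ℕ => (b : ℝ) ^ (n + 1) * g (n + 1)) :
    HasSum (fun x : {x : T // 1 ≤ D x} => g (D x)) (∑' n : ℕ, (b : ℝ) ^ (n + 1) * g (n + 1)) := by
  set π : {x : T // 1 ≤ D x} → ℕ := fun x => D x - 1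
  have hfiber : ∀ n, π ⁻¹' {n} = Subtype.val ⁻¹' {x | D x = n + 1} := fun n => by
    ext ⟨x, hx⟩
    simp only [π, Set.mem_preimage, Set.mem_singleton_iff, Set.mem_ofPred_eq]
    omega
  have hncard : ∀ n, ((π ⁻¹' {n}).ncard : ℝ) = (b : ℝ) ^ (n + 1) := fun n => by
    rw [hfiber, Set.ncard_preimage_of_injective_subset_range Subtype.val_injective
      fun x hx => ⟨⟨x, by have : D x = n + 1 := hx; omega⟩, rfl⟩, h.ncard_sphere hb]
    push_cast
    rfl
  have key := hasSum_comp_of_finite_fibers π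
    (fun n => hfiber n ▸ (h.sphere_finite hb (n + 1)).preimage Subtype.val_injective.injOn)
    (g := fun n => g (n + 1)) (fun n => hg _) (by simpa only [hncard] using hs)
  simp only [hncard] at key
  convert key using 2 with x
  simp only [π]
  congr
  omega

end IsHomogeneousTree

end ModelTree

theorem stmt17_general {T : Type*}
    (ω : T → T → ℝ)
    (hω_symm : ∀ x y, ω x y = ω y x)
    (hω01 : ∀ x y, ω x y = 0 ∨ ω x y = 1)
    (x₀ : T) (b : ℕ) (hb : 2 ≤ b)
    (D : T → ℕ) (hD₀ : D x₀ = 0)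
    (hadj : ∀ x y, ω x y = 1 → D y = D x + 1 ∨ D x = D y + 1)
    (hup : ∀ x : T, {y : T | ω x y = 1 ∧ D y = D x + 1}.ncard = b)
    (hdown : ∀ x : T, x ≠ x₀ → {y : T | ω x y = 1 ∧ D y + 1 = D x}.ncard = 1)
    (α : ℝ) (hα : 1 < α)
    (V : T → ℝ) (hV : ∀ x, V x = (1 + (D x : ℝ)) ^ (-α)) :
    (∀ Λ : ℝ, 0 < Λ → Λ < 1 →
      Summable (fun x : {x : T // 1 ≤ D x} =>
        Real.exp (-Λ * ((D x.1 : ℝ)) ^ α)) ∧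
      Summable (fun n : ℕ =>
        (b : ℝ) ^ (n + 1) * Real.exp (-Λ * ((n : ℝ) + 1) ^ α)) ∧
      (∑' x : {x : T // 1 ≤ D x}, Real.exp (-Λ * ((D x.1 : ℝ)) ^ α))
        = ∑' n : ℕ, (b : ℝ) ^ (n + 1) * Real.exp (-Λ * ((n : ℝ) + 1) ^ α)) ∧
    (∃ u : T → ℝ, (∃ x, u x ≠ 0) ∧ (∃ C : ℝ, ∀ x, |u x| ≤ C) ∧
      ∀ x : T, (∑' y, ω x y * (u y - u x)) - V x * u x = 0) := by
  have hT : IsHomogeneousTree ω x₀ b D := ⟨hω_symm, hω01, hD₀, hadj, hup, hdown⟩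
  have hb0 : 0 < b := by omega
  refine ⟨fun Λ hΛ _ => ?_, ?_⟩
  · have hs : Summable fun n : ℕ => (b : ℝ) ^ (n + 1) * Real.exp (-Λ * ((n + 1 : ℕ) : ℝ) ^ α) :=
      (summable_nat_add_iff 1).2 (summable_pow_mul_exp_neg_rpow (by positivity) hΛ hα)
    have hsum := hT.hasSum_comp_dist hb0 (g := fun n => Real.exp (-Λ * (n : ℝ) ^ α))
      (fun n => (Real.exp_pos _).le) hs
    push_cast at hs hsum
    exact ⟨hsum.summable, hs, hsum.tsum_eq⟩
  · set W : ℕ → ℝ := fun n => (1 + (n : ℝ)) ^ (-α)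
    have hW0 : ∀ n, 0 ≤ W n := fun n => by positivity
    have hW : Summable W := by
      simpa only [W, Nat.cast_succ, add_comm] using
        (summable_nat_add_iff 1).2 (Real.summable_nat_rpow.2 (by linarith : -α < -1))
    have hf := radialProfile.one_le_and_le_succ (b := (b : ℝ)) (by positivity) hW0
    obtain ⟨C, hC⟩ := radialProfile.bddAbove_range (b := (b : ℝ)) (by exact_mod_cast hb) hW0 hW
    refine ⟨fun x => radialProfile b W (D x), ⟨x₀, by linarith [(hf (D x₀)).1]⟩,
      ⟨C, fun x => (abs_of_nonneg (by linarith [(hf (D x)).1])).trans_le (hC ⟨D x, rfl⟩)⟩,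
      fun x => ?_⟩
    rw [hT.tsum_mul_sub_eq_of_radial hb0 (radialProfile.mul_sub_zero (by positivity))
      (radialProfile.mul_sub_succ (by positivity)), hV, sub_self]

/-- **Optimality (Section 7.3).** On a homogeneous model tree with branching `b ≥ 2`,
standard edge weights and measure `μ ≡ 1`, with `V(x) = (1 + d(x,x₀))^{-α}`, `α > 1`:
(a) for every `Λ ∈ (0,1)` the series `∑_{d(x,x₀) ≥ 1} e^{-Λ d(x,x₀)^α}` converges and
equals `∑_{n ≥ 1} bⁿ e^{-Λ nᵅ}`; (b) there is a nontrivial bounded solution of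
`Δu − Vu = 0`, so the Liouville property fails although condition (2.8) holds. -/
theorem stmt17 {T : Type*} [Countable T] [Infinite T]
    (ω : T → T → ℝ)
    (hω_symm : ∀ x y, ω x y = ω y x)
    (hω_diag : ∀ x, ω x x = 0)
    (hω01 : ∀ x y, ω x y = 0 ∨ ω x y = 1)
    (x₀ : T) (b : ℕ) (hb : 2 ≤ b)
    (D : T → ℕ) (hD₀ : D x₀ = 0) (hDpos : ∀ x, x ≠ x₀ → 1 ≤ D x)
    (hadj : ∀ x y, ω x y = 1 → D y = D x + 1 ∨ D x = D y + 1)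
    (hroot : {y : T | ω x₀ y = 1}.ncard = b)
    (hup : ∀ x : T, {y : T | ω x y = 1 ∧ D y = D x + 1}.ncard = b)
    (hdown : ∀ x : T, x ≠ x₀ → {y : T | ω x y = 1 ∧ D y + 1 = D x}.ncard = 1)
    (α : ℝ) (hα : 1 < α)
    (V : T → ℝ) (hV : ∀ x, V x = (1 + (D x : ℝ)) ^ (-α)) :
    (∀ Λ : ℝ, 0 < Λ → Λ < 1 →
      Summable (fun x : {x : T // 1 ≤ D x} =>
        Real.exp (-Λ * ((D x.1 : ℝ)) ^ α)) ∧
      Summable (fun n : ℕ =>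
        (b : ℝ) ^ (n + 1) * Real.exp (-Λ * ((n : ℝ) + 1) ^ α)) ∧
      (∑' x : {x : T // 1 ≤ D x}, Real.exp (-Λ * ((D x.1 : ℝ)) ^ α))
        = ∑' n : ℕ, (b : ℝ) ^ (n + 1) * Real.exp (-Λ * ((n : ℝ) + 1) ^ α)) ∧
    (∃ u : T → ℝ, (∃ x, u x ≠ 0) ∧ (∃ C : ℝ, ∀ x, |u x| ≤ C) ∧
      ∀ x : T, (∑' y, ω x y * (u y - u x)) - V x * u x = 0) :=
  stmt17_general ω hω_symm hω01 x₀ b hb D hD₀ hadj hup hdown α hα V hV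
end
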